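/- arXiv:2209.09288 — 12 statements merged into one kernel-verified Lean document; each statement's English description precedes it below -/
import Mathlib

section
/- Monotonicity lemma for Jacobi equations: Let T > 0, let κ₁, κ₂ : ℝ → ℝ be continuous, and let j₁ and j₂ be standard Jacobi solutions on [0,T] with schedules κ₁ and κ₂ respectively. If κ₁(t) ≥ κ₂(t) for all t ∈ [0,T] and j₂(t) > 0 for all t ∈ (0,T), then j₁(t) ≥ j₂(t) for all t ∈ [0,T]. -/
open Topology Filter Set

/-- **Monotonicity lemma for Jacobi equations.**
If two standard Jacobi solutions on `[0, T]` have schedules with `κ₁ ≥ κ₂` pointwise on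
`[0, T]`, and `j₂` stays positive on `(0, T)`, then `j₁ ≥ j₂` on `[0, T]`. -/
theorem jacobi_monotonicity
    (T : ℝ) (hT : 0 < T) (κ₁ κ₂ j₁ j₂ : ℝ → ℝ)
    (hκ₁ : Continuous κ₁) (hκ₂ : Continuous κ₂)
    (hj₁ : ContDiff ℝ 2 j₁) (hj₂ : ContDiff ℝ 2 j₂)
    (heq₁ : ∀ t ∈ Set.Icc (0 : ℝ) T, deriv (deriv j₁) t = κ₁ t * j₁ t)
    (heq₂ : ∀ t ∈ Set.Icc (0 : ℝ) T, deriv (deriv j₂) t = κ₂ t * j₂ t)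
    (h₁0 : j₁ 0 = 0) (h₁0' : deriv j₁ 0 = 1)
    (h₂0 : j₂ 0 = 0) (h₂0' : deriv j₂ 0 = 1)
    (hκ : ∀ t ∈ Set.Icc (0 : ℝ) T, κ₂ t ≤ κ₁ t)
    (hpos : ∀ t ∈ Set.Ioo (0 : ℝ) T, 0 < j₂ t) :
    ∀ t ∈ Set.Icc (0 : ℝ) T, j₂ t ≤ j₁ t := by
  -- basic differentiability facts
  have hd₁ : Differentiable ℝ j₁ := hj₁.differentiable (by norm_num)
  have hd₂ : Differentiable ℝ j₂ := hj₂.differentiable (by norm_num)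
  have hcd₁ : ContDiff ℝ 1 (deriv j₁) :=
    ((contDiff_succ_iff_deriv (n := 1)).mp (by exact_mod_cast hj₁)).2.2
  have hcd₂ : ContDiff ℝ 1 (deriv j₂) :=
    ((contDiff_succ_iff_deriv (n := 1)).mp (by exact_mod_cast hj₂)).2.2
  have hdd₁ : Differentiable ℝ (deriv j₁) := hcd₁.differentiable one_ne_zero
  have hdd₂ : Differentiable ℝ (deriv j₂) := hcd₂.differentiable one_ne_zero
  -- the Wronskian
  set W : ℝ → ℝ := fun t => deriv j₁ t * j₂ t - deriv j₂ t * j₁ t with hWdef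
  have hWcont : Continuous W :=
    (hcd₁.continuous.mul hd₂.continuous).sub (hcd₂.continuous.mul hd₁.continuous)
  have hW : ∀ t ∈ Set.Icc (0 : ℝ) T,
      HasDerivAt W ((κ₁ t - κ₂ t) * (j₁ t * j₂ t)) t := by
    intro t ht
    have h1 : HasDerivAt (deriv j₁) (κ₁ t * j₁ t) t := by
      have := (hdd₁ t).hasDerivAt; rwa [heq₁ t ht] at this
    have h2 : HasDerivAt (deriv j₂) (κ₂ t * j₂ t) t := by
      have := (hdd₂ t).hasDerivAt; rwa [heq₂ t ht] at this
    have h := (h1.mul (hd₂ t).hasDerivAt).sub (h2.mul (hd₁ t).hasDerivAt)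
    exact h.congr_deriv (by ring)
  have hW0 : W 0 = 0 := by simp [hWdef, h₁0, h₂0]
  -- slope limits at 0
  have hs₁ : Tendsto (fun s => j₁ s / s) (𝓝[>] (0:ℝ)) (𝓝 1) := by
    have h := hasDerivAt_iff_tendsto_slope.mp (h₁0' ▸ (hd₁ 0).hasDerivAt)
    have h' := h.mono_left (nhdsWithin_mono _ (fun x hx => ne_of_gt hx))
    refine h'.congr' ?_
    filter_upwards [self_mem_nhdsWithin] with s hs
    simp [slope_def_field, h₁0]
  have hs₂ : Tendsto (fun s => j₂ s / s) (𝓝[>] (0:ℝ)) (𝓝 1) := by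
    have h := hasDerivAt_iff_tendsto_slope.mp (h₂0' ▸ (hd₂ 0).hasDerivAt)
    have h' := h.mono_left (nhdsWithin_mono _ (fun x hx => ne_of_gt hx))
    refine h'.congr' ?_
    filter_upwards [self_mem_nhdsWithin] with s hs
    simp [slope_def_field, h₂0]
  have hlim : Tendsto (fun s => j₁ s / j₂ s) (𝓝[>] (0:ℝ)) (𝓝 1) := by
    have h := hs₁.div hs₂ one_ne_zero
    rw [div_one] at h
    refine h.congr' ?_
    filter_upwards [self_mem_nhdsWithin] with s hs
    have hs0 : s ≠ 0 := ne_of_gt hs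
    rcases eq_or_ne (j₂ s) 0 with h0 | h0
    · simp [h0]
    · rw [Pi.div_apply]; field_simp
  -- key lemma: comparison holds on [0, c] as long as j₁ > 0 on (0, c)
  have key : ∀ c, 0 < c → c ≤ T → (∀ s ∈ Set.Ioo (0:ℝ) c, 0 < j₁ s) →
      ∀ t ∈ Set.Icc (0:ℝ) c, j₂ t ≤ j₁ t := by
    intro c hc0 hcT hj₁pos
    have hsub : Set.Icc (0:ℝ) c ⊆ Set.Icc 0 T := Set.Icc_subset_Icc le_rfl hcT
    have hj₂pos : ∀ s ∈ Set.Ioo (0:ℝ) c, 0 < j₂ s :=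
      fun s hs => hpos s ⟨hs.1, lt_of_lt_of_le hs.2 hcT⟩
    -- W is nonnegative on [0, c]
    have hWmono : MonotoneOn W (Set.Icc 0 c) := by
      apply monotoneOn_of_deriv_nonneg (convex_Icc _ _) hWcont.continuousOn
      · intro x hx
        rw [interior_Icc] at hx
        exact ((hW x (hsub (Set.Ioo_subset_Icc_self hx))).differentiableAt).differentiableWithinAt
      · intro x hx
        rw [interior_Icc] at hx
        rw [(hW x (hsub (Set.Ioo_subset_Icc_self hx))).deriv]
        have hk := hκ x (hsub (Set.Ioo_subset_Icc_self hx))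
        have h1 := hj₁pos x hx
        have h2 := hj₂pos x hx
        exact mul_nonneg (sub_nonneg.2 hk) (mul_pos h1 h2).le
    have hWnn : ∀ t ∈ Set.Icc (0:ℝ) c, 0 ≤ W t := by
      intro t ht
      have := hWmono (Set.left_mem_Icc.2 hc0.le) ht ht.1
      linarith [hW0]
    -- the ratio j₁ / j₂ is monotone on (0, c)
    have hr : ∀ t ∈ Set.Ioo (0:ℝ) c,
        HasDerivAt (fun s => j₁ s / j₂ s) (W t / (j₂ t) ^ 2) t := by
      intro t ht
      have h := (hd₁ t).hasDerivAt.div (hd₂ t).hasDerivAt (ne_of_gt (hj₂pos t ht))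
      exact h.congr_deriv (by simp only [hWdef]; ring)
    have hrmono : MonotoneOn (fun s => j₁ s / j₂ s) (Set.Ioo 0 c) := by
      apply monotoneOn_of_deriv_nonneg (convex_Ioo _ _)
      · exact fun t ht => (hr t ht).differentiableAt.continuousAt.continuousWithinAt
      · rw [interior_Ioo]
        exact fun t ht => (hr t ht).differentiableAt.differentiableWithinAt
      · intro t ht
        rw [interior_Ioo] at ht
        rw [(hr t ht).deriv]
        exact div_nonneg (hWnn t (Set.Ioo_subset_Icc_self ht)) (sq_nonneg _)
    -- comparison on the open interval
    have hIoo : ∀ t ∈ Set.Ioo (0:ℝ) c, j₂ t ≤ j₁ t := by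
      intro t ht
      have h1 : (1:ℝ) ≤ j₁ t / j₂ t := by
        apply le_of_tendsto hlim
        filter_upwards [Ioo_mem_nhdsGT_of_mem (⟨le_rfl, ht.1⟩ : (0:ℝ) ∈ Set.Ico 0 t)]
          with s hs
        exact hrmono ⟨hs.1, hs.2.trans ht.2⟩ ht hs.2.le
      rw [le_div_iff₀ (hj₂pos t ht)] at h1
      linarith
    intro t ht
    rcases eq_or_lt_of_le ht.1 with h0 | h0
    · simp [← h0, h₁0, h₂0]
    rcases eq_or_lt_of_le ht.2 with hc | hc
    · subst hc
      have htend : Tendsto (fun s => j₁ s - j₂ s) (𝓝[<] t) (𝓝 (j₁ t - j₂ t)) :=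
        ((hd₁.continuous.sub hd₂.continuous).tendsto t).mono_left nhdsWithin_le_nhds
      have h0le : (0:ℝ) ≤ j₁ t - j₂ t := by
        apply ge_of_tendsto htend
        filter_upwards [Ioo_mem_nhdsLT_of_mem (⟨h0, le_rfl⟩ : t ∈ Set.Ioc 0 t)] with s hs
        exact sub_nonneg.2 (hIoo s hs)
      linarith
    · exact hIoo t ⟨h0, hc⟩
  -- local positivity of j₁ near 0
  obtain ⟨δ, hδ0, hδpos⟩ : ∃ δ > 0, ∀ s ∈ Set.Ioo (0:ℝ) δ, 0 < j₁ s := by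
    have h : ∀ᶠ s in 𝓝[>] (0:ℝ), 0 < j₁ s / s := hs₁.eventually (eventually_gt_nhds zero_lt_one)
    have h2 : ∀ᶠ s in 𝓝[>] (0:ℝ), 0 < j₁ s := by
      filter_upwards [h, self_mem_nhdsWithin] with s hs hs'
      have := mul_pos hs (show (0:ℝ) < s from hs')
      rwa [div_mul_cancel₀ _ (ne_of_gt hs')] at this
    obtain ⟨u, hu, hsub⟩ := mem_nhdsGT_iff_exists_Ioo_subset.mp h2
    exact ⟨u, hu, fun s hs => hsub hs⟩
  by_cases hall : ∀ s ∈ Set.Ioo (0:ℝ) T, 0 < j₁ s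
  · exact key T hT le_rfl hall
  · exfalso
    push_neg at hall
    obtain ⟨t₁, ht₁, ht₁le⟩ := hall
    have ht₁δ : δ ≤ t₁ := by
      by_contra h
      push_neg at h
      exact absurd (hδpos t₁ ⟨ht₁.1, h⟩) (not_lt.2 ht₁le)
    set A : Set ℝ := Set.Icc δ T ∩ j₁ ⁻¹' Set.Iic 0 with hAdef
    have hAne : A.Nonempty := ⟨t₁, ⟨ht₁δ, ht₁.2.le⟩, ht₁le⟩
    have hAclosed : IsClosed A := isClosed_Icc.inter (isClosed_Iic.preimage hd₁.continuous)
    have hAbdd : BddBelow A := ⟨δ, fun x hx => hx.1.1⟩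
    have ht₀A : sInf A ∈ A := hAclosed.csInf_mem hAne hAbdd
    set t₀ := sInf A
    have ht₀pos : 0 < t₀ := lt_of_lt_of_le hδ0 ht₀A.1.1
    have ht₀T : t₀ ≤ T := ht₀A.1.2
    have hlt : t₀ < T :=
      lt_of_le_of_lt (csInf_le hAbdd (⟨⟨ht₁δ, ht₁.2.le⟩, ht₁le⟩ : t₁ ∈ A)) ht₁.2
    have hposlt : ∀ s ∈ Set.Ioo (0:ℝ) t₀, 0 < j₁ s := by
      intro s hs
      by_cases h : s < δ
      · exact hδpos s ⟨hs.1, h⟩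
      · push_neg at h
        by_contra hle
        push_neg at hle
        have hsA : s ∈ A := ⟨⟨h, le_trans hs.2.le ht₀T⟩, hle⟩
        exact absurd (csInf_le hAbdd hsA) (not_le.2 hs.2)
    have h1 := key t₀ ht₀pos ht₀T hposlt t₀ ⟨ht₀pos.le, le_rfl⟩
    have h2 := hpos t₀ ⟨ht₀pos, hlt⟩
    have h3 : j₁ t₀ ≤ 0 := ht₀A.2
    linarith
end

section
/- Logarithmic-derivative comparison for Jacobi equations: Let T > 0, let κ₁, κ₂ : ℝ → ℝ be continuous, and let j₁ and j₂ be standard Jacobi solutions on [0,T] with schedules κ₁ and κ₂ respectively. If κ₁(t) ≥ κ₂(t) for all t ∈ [0,T] and j₁(t) > 0 and j₂(t) > 0 for all t ∈ (0,T], then j₁'(t)/j₁(t) ≥ j₂'(t)/j₂(t) for all t ∈ (0,T]. -/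
/-- **Logarithmic-derivative comparison for Jacobi equations.**
If two standard Jacobi solutions on `[0, T]` have schedules with `κ₁ ≥ κ₂` pointwise on
`[0, T]`, and both stay positive on `(0, T]`, then `j₁'/j₁ ≥ j₂'/j₂` on `(0, T]`. -/
theorem jacobi_logderiv_comparison
    (T : ℝ) (hT : 0 < T) (κ₁ κ₂ j₁ j₂ : ℝ → ℝ)
    (hκ₁ : Continuous κ₁) (hκ₂ : Continuous κ₂)
    (hj₁ : ContDiff ℝ 2 j₁) (hj₂ : ContDiff ℝ 2 j₂)
    (heq₁ : ∀ t ∈ Set.Icc (0 : ℝ) T, deriv (deriv j₁) t = κ₁ t * j₁ t)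
    (heq₂ : ∀ t ∈ Set.Icc (0 : ℝ) T, deriv (deriv j₂) t = κ₂ t * j₂ t)
    (h₁0 : j₁ 0 = 0) (h₁0' : deriv j₁ 0 = 1)
    (h₂0 : j₂ 0 = 0) (h₂0' : deriv j₂ 0 = 1)
    (hκ : ∀ t ∈ Set.Icc (0 : ℝ) T, κ₂ t ≤ κ₁ t)
    (hpos₁ : ∀ t ∈ Set.Ioc (0 : ℝ) T, 0 < j₁ t)
    (hpos₂ : ∀ t ∈ Set.Ioc (0 : ℝ) T, 0 < j₂ t) :
    ∀ t ∈ Set.Ioc (0 : ℝ) T, deriv j₂ t / j₂ t ≤ deriv j₁ t / j₁ t := by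
  -- differentiability facts
  have hd₁ : Differentiable ℝ j₁ := hj₁.differentiable (by norm_num)
  have hd₂ : Differentiable ℝ j₂ := hj₂.differentiable (by norm_num)
  have hdd₁ : Differentiable ℝ (deriv j₁) :=
    ((contDiff_succ_iff_deriv.mp (show ContDiff ℝ ((1:ℕ)+1) j₁ by exact_mod_cast hj₁)).2.2).differentiable (by norm_num)
  have hdd₂ : Differentiable ℝ (deriv j₂) :=
    ((contDiff_succ_iff_deriv.mp (show ContDiff ℝ ((1:ℕ)+1) j₂ by exact_mod_cast hj₂)).2.2).differentiable (by norm_num)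
  set W : ℝ → ℝ := fun t => deriv j₁ t * j₂ t - deriv j₂ t * j₁ t with hW
  have hWd : Differentiable ℝ W := by
    apply Differentiable.sub
    · exact hdd₁.mul hd₂
    · exact hdd₂.mul hd₁
  have hWd' : ∀ t, deriv W t =
      deriv (deriv j₁) t * j₂ t - deriv (deriv j₂) t * j₁ t := by
    intro t
    have h1 : HasDerivAt W
        ((deriv (deriv j₁) t * j₂ t + deriv j₁ t * deriv j₂ t)
          - (deriv (deriv j₂) t * j₁ t + deriv j₂ t * deriv j₁ t)) t := by
      exact (((hdd₁ t).hasDerivAt.mul (hd₂ t).hasDerivAt).sub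
        ((hdd₂ t).hasDerivAt.mul (hd₁ t).hasDerivAt))
    rw [h1.deriv]; ring
  have hW0 : W 0 = 0 := by simp [hW, h₁0, h₂0]
  have hmono : MonotoneOn W (Set.Icc 0 T) := by
    apply monotoneOn_of_deriv_nonneg (convex_Icc 0 T) hWd.continuous.continuousOn
      (hWd.differentiableOn.mono interior_subset)
    intro t ht
    rw [interior_Icc] at ht
    have htIcc : t ∈ Set.Icc (0:ℝ) T := Set.Ioo_subset_Icc_self ht
    have htIoc : t ∈ Set.Ioc (0:ℝ) T := ⟨ht.1, le_of_lt ht.2⟩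
    rw [hWd' t, heq₁ t htIcc, heq₂ t htIcc]
    have h1 := hpos₁ t htIoc
    have h2 := hpos₂ t htIoc
    have h3 := hκ t htIcc
    nlinarith [mul_nonneg (sub_nonneg.mpr h3) (mul_pos h1 h2).le]
  intro t ht
  have htIcc : t ∈ Set.Icc (0:ℝ) T := Set.Ioc_subset_Icc_self ht
  have hWt : 0 ≤ W t := by
    have := hmono (Set.left_mem_Icc.mpr hT.le) htIcc ht.1.le
    rwa [hW0] at this
  have h1 := hpos₁ t ht
  have h2 := hpos₂ t ht
  rw [div_le_div_iff₀ h2 h1]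
  simp only [hW] at hWt
  linarith
end

section
/- Shuffling lemma for Jacobi equations: Let T > 0, let κ₁, κ₂ : ℝ → ℝ be continuous, define κ_max(t) = max(κ₁(t), κ₂(t)) and κ_min(t) = min(κ₁(t), κ₂(t)), and let j₁, j₂, j_max, j_min be standard Jacobi solutions on [0,T] with schedules κ₁, κ₂, κ_max, κ_min respectively. If j_min(t) > 0 for all t ∈ (0,T), then j_max(t) + j_min(t) ≥ j₁(t) + j₂(t) for all t ∈ [0,T]. -/
open Set Filter Topology

lemma aux_deriv_diff (f : ℝ → ℝ) (hf : ContDiff ℝ 2 f) : Differentiable ℝ (deriv f) := by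
  have h : ContDiff ℝ ((1:ℕ)+1) f := by exact_mod_cast hf
  exact (contDiff_succ_iff_deriv.mp h).2.2.differentiable (by simp)

lemma wronskian_comp (s : ℝ) (hs : 0 < s) (κ f g : ℝ → ℝ)
    (hf : ContDiff ℝ 2 f) (hg : ContDiff ℝ 2 g)
    (hf'' : ∀ t ∈ Set.Icc (0:ℝ) s, κ t * f t ≤ deriv (deriv f) t)
    (hg'' : ∀ t ∈ Set.Icc (0:ℝ) s, deriv (deriv g) t = κ t * g t)
    (hf0 : f 0 = 0) (hg0 : g 0 = 0) (hg0' : deriv g 0 = 1)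
    (hgpos : ∀ t ∈ Set.Ioo (0:ℝ) s, 0 < g t) :
    ∀ t ∈ Set.Icc (0:ℝ) s, deriv f 0 * g t ≤ f t := by
  have hfd : Differentiable ℝ f := hf.differentiable (by norm_num)
  have hgd : Differentiable ℝ g := hg.differentiable (by norm_num)
  have hfd' : Differentiable ℝ (deriv f) := aux_deriv_diff f hf
  have hgd' : Differentiable ℝ (deriv g) := aux_deriv_diff g hg
  have hIcc : closure (Set.Ioo (0:ℝ) s) = Set.Icc 0 s := closure_Ioo hs.ne
  -- g ≥ 0 on [0,s]
  have hgnn : ∀ t ∈ Set.Icc (0:ℝ) s, 0 ≤ g t := by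
    rw [← hIcc]
    refine fun t ht => ?_
    have hcl : IsClosed {x : ℝ | 0 ≤ g x} := isClosed_le continuous_const hgd.continuous
    exact closure_minimal (fun u hu => (hgpos u hu).le) hcl ht
  -- Wronskian
  set W : ℝ → ℝ := fun t => deriv f t * g t - f t * deriv g t with hWdef
  have hW : ∀ t, HasDerivAt W (deriv (deriv f) t * g t - f t * deriv (deriv g) t) t := by
    intro t
    have h1 : HasDerivAt W _ t := ((hfd' t).hasDerivAt.mul (hgd t).hasDerivAt).sub
      ((hfd t).hasDerivAt.mul (hgd' t).hasDerivAt)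
    convert h1 using 1
    ring
  have hWmono : MonotoneOn W (Set.Icc 0 s) := by
    apply monotoneOn_of_deriv_nonneg (convex_Icc 0 s)
      (Continuous.continuousOn (continuous_iff_continuousAt.2 fun x => (hW x).continuousAt))
      (fun x _ => ((hW x).differentiableAt).differentiableWithinAt)
    intro x hx
    rw [interior_Icc] at hx
    rw [(hW x).deriv]
    have hxI : x ∈ Set.Icc (0:ℝ) s := Set.Ioo_subset_Icc_self hx
    rw [hg'' x hxI]
    have h1 : κ x * f x * g x ≤ deriv (deriv f) x * g x :=
      mul_le_mul_of_nonneg_right (hf'' x hxI) (hgnn x hxI)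
    nlinarith
  have hW0 : W 0 = 0 := by simp [hWdef, hf0, hg0]
  have hWnn : ∀ t ∈ Set.Icc (0:ℝ) s, 0 ≤ W t := by
    intro t ht
    have := hWmono (Set.left_mem_Icc.mpr hs.le) ht ht.1
    rw [hW0] at this; exact this
  -- slope limits
  have hslope : ∀ (F : ℝ → ℝ), F 0 = 0 → Differentiable ℝ F →
      Tendsto (fun t => F t / t) (𝓝[>] (0:ℝ)) (𝓝 (deriv F 0)) := by
    intro F h0 hFd
    have := hasDerivAt_iff_tendsto_slope.mp (hFd 0).hasDerivAt
    have h2 : Tendsto (slope F 0) (𝓝[>] (0:ℝ)) (𝓝 (deriv F 0)) :=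
      this.mono_left (nhdsWithin_mono 0 (fun x hx => Set.mem_compl_singleton_iff.mpr (ne_of_gt hx)))
    refine h2.congr (fun t => ?_)
    simp [slope, h0, div_eq_inv_mul]
  have hratio : Tendsto (fun t => f t / g t) (𝓝[>] (0:ℝ)) (𝓝 (deriv f 0)) := by
    have h1 := hslope f hf0 hfd
    have h2 := hslope g hg0 hgd
    rw [hg0'] at h2
    have h3 := h1.div h2 one_ne_zero
    simp only [div_one] at h3
    refine Tendsto.congr' ?_ h3
    filter_upwards [Ioo_mem_nhdsGT_of_mem (Set.left_mem_Ico.mpr hs)] with t ht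
    have hgt := hgpos t ht
    show (f t / t) / (g t / t) = f t / g t
    have h4 : t ≠ 0 := ne_of_gt ht.1
    have h5 : g t ≠ 0 := ne_of_gt hgt
    field_simp
  -- monotone ratio on Ioo
  have hrmono : MonotoneOn (fun t => f t / g t) (Set.Ioo 0 s) := by
    apply monotoneOn_of_deriv_nonneg (convex_Ioo 0 s)
    · exact ContinuousOn.div hfd.continuous.continuousOn hgd.continuous.continuousOn
        (fun t ht => (hgpos t ht).ne')
    · intro t ht
      rw [interior_Ioo] at ht
      exact (((hfd t).hasDerivAt.div (hgd t).hasDerivAt (hgpos t ht).ne').differentiableAt).differentiableWithinAt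
    · intro t ht
      rw [interior_Ioo] at ht
      have hd : HasDerivAt (fun t => f t / g t) _ t := (hfd t).hasDerivAt.div (hgd t).hasDerivAt (hgpos t ht).ne'
      rw [hd.deriv]
      apply div_nonneg (hWnn t (Set.Ioo_subset_Icc_self ht)) (sq_nonneg _)
  -- inequality on Ioo
  have hIoo : ∀ t ∈ Set.Ioo (0:ℝ) s, deriv f 0 * g t ≤ f t := by
    intro t ht
    have hle : deriv f 0 ≤ f t / g t := by
      refine le_of_tendsto hratio ?_
      filter_upwards [Ioo_mem_nhdsGT_of_mem (Set.left_mem_Ico.mpr ht.1)] with u hu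
      exact hrmono ⟨hu.1, hu.2.trans ht.2⟩ ht hu.2.le
    rw [le_div_iff₀ (hgpos t ht)] at hle
    linarith
  -- closure
  rw [← hIcc]
  intro t ht
  have hcl : IsClosed {x : ℝ | deriv f 0 * g x ≤ f x} :=
    isClosed_le (by fun_prop) hfd.continuous
  exact closure_minimal hIoo hcl ht

lemma comp_lemma (T : ℝ) (hT : 0 < T) (a b f g : ℝ → ℝ)
    (hf : ContDiff ℝ 2 f) (hg : ContDiff ℝ 2 g)
    (hab : ∀ t ∈ Set.Icc (0:ℝ) T, b t ≤ a t)
    (hfode : ∀ t ∈ Set.Icc (0:ℝ) T, deriv (deriv f) t = a t * f t)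
    (hgode : ∀ t ∈ Set.Icc (0:ℝ) T, deriv (deriv g) t = b t * g t)
    (hf0 : f 0 = 0) (hf0' : deriv f 0 = 1)
    (hg0 : g 0 = 0) (hg0' : deriv g 0 = 1)
    (hgpos : ∀ t ∈ Set.Ioo (0:ℝ) T, 0 < g t) :
    ∀ t ∈ Set.Icc (0:ℝ) T, g t ≤ f t := by
  have hfd : Differentiable ℝ f := hf.differentiable (by norm_num)
  -- f is positive just after 0
  obtain ⟨e, he, hfe⟩ : ∃ e > 0, ∀ t ∈ Set.Ioo (0:ℝ) e, 0 < f t := by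
    have hsl : Filter.Tendsto (fun t => f t / t) (nhdsWithin 0 (Set.Ioi 0)) (nhds 1) := by
      have h1 := hasDerivAt_iff_tendsto_slope.mp (hfd 0).hasDerivAt
      rw [hf0'] at h1
      have h2 := h1.mono_left (nhdsWithin_mono 0
        (fun x hx => Set.mem_compl_singleton_iff.mpr (ne_of_gt hx)))
      refine h2.congr (fun t => ?_)
      simp [slope, hf0, div_eq_inv_mul]
    have hev : ∀ᶠ t in nhdsWithin 0 (Set.Ioi 0), 0 < f t / t :=
      hsl.eventually (eventually_gt_nhds one_pos)
    rw [eventually_nhdsWithin_iff] at hev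
    rw [Metric.eventually_nhds_iff] at hev
    obtain ⟨e, he, hball⟩ := hev
    refine ⟨e, he, fun t ht => ?_⟩
    have h3 : 0 < f t / t := by
      apply hball (y := t) _ ht.1
      simp [abs_of_pos ht.1, ht.2]
    have := mul_pos h3 ht.1
    rwa [div_mul_cancel₀ _ (ne_of_gt ht.1)] at this
  -- the first-zero set
  set A : Set ℝ := ({t ∈ Set.Icc 0 T | f t ≤ 0 ∧ e ≤ t} ∪ {T}) with hA
  have hAclosed : IsClosed A := by
    apply IsClosed.union _ isClosed_singleton
    have : {t ∈ Set.Icc 0 T | f t ≤ 0 ∧ e ≤ t}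
        = Set.Icc 0 T ∩ (f ⁻¹' Set.Iic 0 ∩ Set.Ici e) := by
      ext x; simp [Set.mem_Icc, and_assoc]
    rw [this]
    exact isClosed_Icc.inter ((isClosed_Iic.preimage hfd.continuous).inter isClosed_Ici)
  have hAne : A.Nonempty := ⟨T, Or.inr rfl⟩
  have hAbdd : BddBelow A := ⟨0, fun x hx => by
    rcases hx with hx | hx
    · exact hx.1.1
    · simp at hx; linarith⟩
  set t₀ := sInf A with ht₀def
  have ht₀A : t₀ ∈ A := hAclosed.csInf_mem hAne hAbdd
  have ht₀T : t₀ ≤ T := csInf_le hAbdd (Or.inr rfl)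
  have ht₀pos : 0 < t₀ := by
    rcases ht₀A with h | h
    · linarith [h.2.2]
    · simp at h; linarith
  -- f > 0 strictly below t₀
  have hfpos : ∀ u ∈ Set.Ioo (0:ℝ) t₀, 0 < f u := by
    intro u hu
    by_cases hue : u < e
    · exact hfe u ⟨hu.1, hue⟩
    · push_neg at hue
      by_contra hle
      push_neg at hle
      have : u ∈ A := Or.inl ⟨⟨hu.1.le, hu.2.le.trans ht₀T⟩, hle, hue⟩
      exact absurd (csInf_le hAbdd this) (not_le.mpr hu.2)
  have hfnn : ∀ u ∈ Set.Icc (0:ℝ) t₀, 0 ≤ f u := by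
    rw [← closure_Ioo ht₀pos.ne]
    intro u hu
    have hcl : IsClosed {x : ℝ | 0 ≤ f x} := isClosed_le continuous_const hfd.continuous
    exact closure_minimal (fun v hv => (hfpos v hv).le) hcl hu
  -- apply wronskian lemma on [0, t₀]
  have hsub : Set.Icc (0:ℝ) t₀ ⊆ Set.Icc 0 T := Set.Icc_subset_Icc le_rfl ht₀T
  have hmain : ∀ t ∈ Set.Icc (0:ℝ) t₀, deriv f 0 * g t ≤ f t := by
    apply wronskian_comp t₀ ht₀pos b f g hf hg
    · intro t ht
      rw [hfode t (hsub ht)]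
      exact mul_le_mul_of_nonneg_right (hab t (hsub ht)) (hfnn t ht)
    · exact fun t ht => hgode t (hsub ht)
    · exact hf0
    · exact hg0
    · exact hg0'
    · exact fun t ht => hgpos t ⟨ht.1, lt_of_lt_of_le ht.2 ht₀T⟩
  rw [hf0'] at hmain
  simp only [one_mul] at hmain
  -- t₀ must equal T
  have ht₀eq : t₀ = T := by
    by_contra hne
    have hlt : t₀ < T := lt_of_le_of_ne ht₀T hne
    have hf0le : f t₀ ≤ 0 := by
      rcases ht₀A with h | h
      · exact h.2.1
      · simp at h; exact absurd h hne
    have := hmain t₀ (Set.right_mem_Icc.mpr ht₀pos.le)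
    have := hgpos t₀ ⟨ht₀pos, hlt⟩
    linarith
  rw [ht₀eq] at hmain
  exact hmain


/-- **Shuffling lemma for Jacobi equations.**
With `κ_max = max(κ₁, κ₂)` and `κ_min = min(κ₁, κ₂)` pointwise, and standard Jacobi
solutions `j₁, j₂, j_max, j_min` for `κ₁, κ₂, κ_max, κ_min` on `[0, T]`, if `j_min > 0`
on `(0, T)` then `j_max + j_min ≥ j₁ + j₂` on `[0, T]`. -/
theorem jacobi_shuffling
    (T : ℝ) (hT : 0 < T) (κ₁ κ₂ j₁ j₂ jmax jmin : ℝ → ℝ)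
    (hκ₁ : Continuous κ₁) (hκ₂ : Continuous κ₂)
    (hj₁ : ContDiff ℝ 2 j₁) (hj₂ : ContDiff ℝ 2 j₂)
    (hjmax : ContDiff ℝ 2 jmax) (hjmin : ContDiff ℝ 2 jmin)
    (heq₁ : ∀ t ∈ Set.Icc (0 : ℝ) T, deriv (deriv j₁) t = κ₁ t * j₁ t)
    (heq₂ : ∀ t ∈ Set.Icc (0 : ℝ) T, deriv (deriv j₂) t = κ₂ t * j₂ t)
    (heqmax : ∀ t ∈ Set.Icc (0 : ℝ) T,
      deriv (deriv jmax) t = max (κ₁ t) (κ₂ t) * jmax t)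
    (heqmin : ∀ t ∈ Set.Icc (0 : ℝ) T,
      deriv (deriv jmin) t = min (κ₁ t) (κ₂ t) * jmin t)
    (h₁0 : j₁ 0 = 0) (h₁0' : deriv j₁ 0 = 1)
    (h₂0 : j₂ 0 = 0) (h₂0' : deriv j₂ 0 = 1)
    (hmax0 : jmax 0 = 0) (hmax0' : deriv jmax 0 = 1)
    (hmin0 : jmin 0 = 0) (hmin0' : deriv jmin 0 = 1)
    (hpos : ∀ t ∈ Set.Ioo (0 : ℝ) T, 0 < jmin t) :
    ∀ t ∈ Set.Icc (0 : ℝ) T, j₁ t + j₂ t ≤ jmax t + jmin t := by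
  -- comparisons with jmin
  have hc₁ : ∀ t ∈ Set.Icc (0:ℝ) T, jmin t ≤ j₁ t :=
    comp_lemma T hT κ₁ (fun t => min (κ₁ t) (κ₂ t)) j₁ jmin hj₁ hjmin
      (fun t _ => min_le_left _ _) heq₁ heqmin h₁0 h₁0' hmin0 hmin0' hpos
  have hc₂ : ∀ t ∈ Set.Icc (0:ℝ) T, jmin t ≤ j₂ t :=
    comp_lemma T hT κ₂ (fun t => min (κ₁ t) (κ₂ t)) j₂ jmin hj₂ hjmin
      (fun t _ => min_le_right _ _) heq₂ heqmin h₂0 h₂0' hmin0 hmin0' hpos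
  have hcm : ∀ t ∈ Set.Icc (0:ℝ) T, jmin t ≤ jmax t :=
    comp_lemma T hT (fun t => max (κ₁ t) (κ₂ t)) (fun t => min (κ₁ t) (κ₂ t))
      jmax jmin hjmax hjmin
      (fun t _ => min_le_max) heqmax heqmin hmax0 hmax0' hmin0 hmin0' hpos
  have hmaxpos : ∀ t ∈ Set.Ioo (0:ℝ) T, 0 < jmax t :=
    fun t ht => lt_of_lt_of_le (hpos t ht) (hcm t (Set.Ioo_subset_Icc_self ht))
  -- φ = jmax + jmin - j₁ - j₂
  set φ : ℝ → ℝ := fun t => jmax t + jmin t - j₁ t - j₂ t with hφdef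
  have hφC : ContDiff ℝ 2 φ := ((hjmax.add hjmin).sub hj₁).sub hj₂
  have d1 : Differentiable ℝ j₁ := hj₁.differentiable (by norm_num)
  have d2 : Differentiable ℝ j₂ := hj₂.differentiable (by norm_num)
  have dmax : Differentiable ℝ jmax := hjmax.differentiable (by norm_num)
  have dmin : Differentiable ℝ jmin := hjmin.differentiable (by norm_num)
  have d1' : Differentiable ℝ (deriv j₁) := aux_deriv_diff j₁ hj₁
  have d2' : Differentiable ℝ (deriv j₂) := aux_deriv_diff j₂ hj₂
  have dmax' : Differentiable ℝ (deriv jmax) := aux_deriv_diff jmax hjmax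
  have dmin' : Differentiable ℝ (deriv jmin) := aux_deriv_diff jmin hjmin
  have hφ' : deriv φ = fun t => deriv jmax t + deriv jmin t - deriv j₁ t - deriv j₂ t := by
    funext t
    exact ((((dmax t).hasDerivAt.add (dmin t).hasDerivAt).sub
      (d1 t).hasDerivAt).sub (d2 t).hasDerivAt).deriv
  have hφ'' : ∀ t, deriv (deriv φ) t
      = deriv (deriv jmax) t + deriv (deriv jmin) t - deriv (deriv j₁) t - deriv (deriv j₂) t := by
    intro t
    rw [hφ']
    exact ((((dmax' t).hasDerivAt.add (dmin' t).hasDerivAt).sub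
      (d1' t).hasDerivAt).sub (d2' t).hasDerivAt).deriv
  have hφ0 : φ 0 = 0 := by simp [hφdef, hmax0, hmin0, h₁0, h₂0]
  have hφ0' : deriv φ 0 = 0 := by
    rw [hφ']
    simp only [hmax0', hmin0', h₁0', h₂0']
    ring
  have hkey : ∀ t ∈ Set.Icc (0:ℝ) T, max (κ₁ t) (κ₂ t) * φ t ≤ deriv (deriv φ) t := by
    intro t ht
    rw [hφ'' t, heqmax t ht, heqmin t ht, heq₁ t ht, heq₂ t ht]
    have e1 : 0 ≤ (max (κ₁ t) (κ₂ t) - κ₁ t) * (j₁ t - jmin t) :=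
      mul_nonneg (by simp [le_max_left]) (by linarith [hc₁ t ht])
    have e2 : 0 ≤ (max (κ₁ t) (κ₂ t) - κ₂ t) * (j₂ t - jmin t) :=
      mul_nonneg (by simp [le_max_right]) (by linarith [hc₂ t ht])
    have e3 : max (κ₁ t) (κ₂ t) + min (κ₁ t) (κ₂ t) = κ₁ t + κ₂ t := max_add_min _ _
    have e3m : max (κ₁ t) (κ₂ t) * jmin t + min (κ₁ t) (κ₂ t) * jmin t
        = κ₁ t * jmin t + κ₂ t * jmin t := by rw [← add_mul, e3, add_mul]
    simp only [hφdef]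
    nlinarith [e1, e2, e3m]
  have hfin := wronskian_comp T hT (fun t => max (κ₁ t) (κ₂ t)) φ jmax hφC hjmax
    hkey heqmax hφ0 hmax0 hmax0' hmaxpos
  intro t ht
  have := hfin t ht
  rw [hφ0'] at this
  simp only [zero_mul, hφdef] at this
  linarith
end

section
/- Higher-power shuffling lemma for Jacobi equations: Let T > 0, let κ₁, κ₂ : ℝ → ℝ be continuous, define κ_max(t) = max(κ₁(t), κ₂(t)) and κ_min(t) = min(κ₁(t), κ₂(t)), and let j₁, j₂, j_max, j_min be standard Jacobi solutions on [0,T] with schedules κ₁, κ₂, κ_max, κ_min respectively. If j_min(t) > 0 for all t ∈ (0,T), then for every natural number p ≥ 1 and all t ∈ [0,T], j_max(t)^p + j_min(t)^p ≥ j₁(t)^p + j₂(t)^p. -/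
open Set Filter Topology

lemma JacAux.deriv_diff {f : ℝ → ℝ} (hf : ContDiff ℝ 2 f) : Differentiable ℝ (deriv f) :=
  ((contDiff_succ_iff_deriv.mp (by exact_mod_cast hf : ContDiff ℝ (1+1) f)).2.2).differentiable (by norm_num)

lemma JacAux.nonneg_closure (f : ℝ → ℝ) (b : ℝ) (hb : 0 < b) (hf : Continuous f)
    (h : ∀ t ∈ Ioo (0:ℝ) b, 0 ≤ f t) : ∀ t ∈ Icc (0:ℝ) b, 0 ≤ f t := by
  intro t ht
  have h1 : Icc (0:ℝ) b ⊆ closure (Ioo 0 b) := by rw [closure_Ioo hb.ne]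
  have h2 : Ioo (0:ℝ) b ⊆ f ⁻¹' (Ici 0) := fun s hs => h s hs
  have := closure_minimal h2 (isClosed_Ici.preimage hf)
  exact this (h1 ht)

lemma JacAux.slope_lim (f : ℝ → ℝ) (L : ℝ) (hf : HasDerivAt f L 0) (h0 : f 0 = 0) :
    Tendsto (fun t => f t / t) (𝓝[>] (0:ℝ)) (𝓝 L) := by
  have h1 : Tendsto (slope f 0) (𝓝[≠] (0:ℝ)) (𝓝 L) := hasDerivAt_iff_tendsto_slope.mp hf
  have h2 : Tendsto (slope f 0) (𝓝[>] (0:ℝ)) (𝓝 L) :=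
    h1.mono_left (nhdsWithin_mono _ (fun x hx => ne_of_gt hx))
  refine h2.congr (fun t => ?_)
  simp [slope_def_field, h0]

lemma JacAux.ratio_core (u v : ℝ → ℝ) (b L : ℝ)
    (hu : ContDiff ℝ 2 u) (hv : ContDiff ℝ 2 v)
    (hu0 : u 0 = 0) (hv0 : v 0 = 0)
    (hu0' : deriv u 0 = 1) (hv0' : deriv v 0 = L)
    (hupos : ∀ t ∈ Ioo (0:ℝ) b, 0 < u t)
    (hW : ∀ t ∈ Ioo (0:ℝ) b, 0 ≤ deriv v t * u t - v t * deriv u t) :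
    ∀ t ∈ Ioo (0:ℝ) b, L * u t ≤ v t := by
  have hud : Differentiable ℝ u := hu.differentiable (by norm_num)
  have hvd : Differentiable ℝ v := hv.differentiable (by norm_num)
  set f : ℝ → ℝ := fun t => v t / u t with hf
  -- monotone on Ioo 0 b
  have hderiv : ∀ t ∈ Ioo (0:ℝ) b, HasDerivAt f
      ((deriv v t * u t - v t * deriv u t) / (u t)^2) t := by
    intro t ht
    exact (hvd t).hasDerivAt.div (hud t).hasDerivAt (hupos t ht).ne'
  have hmono : MonotoneOn f (Ioo 0 b) := by
    apply monotoneOn_of_deriv_nonneg (convex_Ioo 0 b)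
    · exact ContinuousOn.div hvd.continuous.continuousOn hud.continuous.continuousOn
        (fun t ht => (hupos t ht).ne')
    · rw [interior_Ioo]
      exact fun t ht => ((hderiv t ht).differentiableAt).differentiableWithinAt
    · rw [interior_Ioo]
      intro t ht
      rw [(hderiv t ht).deriv]
      exact div_nonneg (hW t ht) (sq_nonneg _)
  -- limit at 0⁺ is L
  have hlimv : Tendsto (fun t => v t / t) (𝓝[>] (0:ℝ)) (𝓝 L) :=
    JacAux.slope_lim v L (hv0' ▸ (hvd 0).hasDerivAt) hv0
  have hlimu : Tendsto (fun t => u t / t) (𝓝[>] (0:ℝ)) (𝓝 1) :=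
    JacAux.slope_lim u 1 (hu0' ▸ (hud 0).hasDerivAt) hu0
  have hlim : Tendsto f (𝓝[>] (0:ℝ)) (𝓝 L) := by
    have := hlimv.div hlimu one_ne_zero
    simp only [div_one] at this
    refine this.congr' ?_
    filter_upwards [self_mem_nhdsWithin] with t ht
    have ht' : (t:ℝ) ≠ 0 := ne_of_gt ht
    show v t / t / (u t / t) = v t / u t
    rw [div_div_div_cancel_right₀ ht']
  intro t ht
  have key : L ≤ f t := by
    refine le_of_tendsto hlim ?_
    filter_upwards [Ioo_mem_nhdsGT_of_mem (⟨le_refl (0:ℝ), ht.1⟩ : (0:ℝ) ∈ Ico 0 t)] with s hs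
    exact hmono ⟨hs.1, hs.2.trans ht.2⟩ ht (le_of_lt hs.2)
  rw [hf] at key
  calc L * u t ≤ (v t / u t) * u t := by
        exact mul_le_mul_of_nonneg_right key (le_of_lt (hupos t ht))
    _ = v t := by field_simp [(hupos t ht).ne']

-- derivative of the Wronskian-type quantity
lemma JacAux.hasDerivW (u v : ℝ → ℝ) (hu : ContDiff ℝ 2 u) (hv : ContDiff ℝ 2 v) (t : ℝ) :
    HasDerivAt (fun s => deriv v s * u s - v s * deriv u s)
      (deriv (deriv v) t * u t - v t * deriv (deriv u) t) t := by
  have hud : Differentiable ℝ u := hu.differentiable (by norm_num)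
  have hvd : Differentiable ℝ v := hv.differentiable (by norm_num)
  have hud2 := JacAux.deriv_diff hu
  have hvd2 := JacAux.deriv_diff hv
  have h1 : HasDerivAt (fun s => deriv v s * u s)
      (deriv (deriv v) t * u t + deriv v t * deriv u t) t :=
    (hvd2 t).hasDerivAt.mul (hud t).hasDerivAt
  have h2 : HasDerivAt (fun s => v s * deriv u s)
      (deriv v t * deriv u t + v t * deriv (deriv u) t) t :=
    (hvd t).hasDerivAt.mul (hud2 t).hasDerivAt
  have := h1.fun_sub h2
  exact this.congr_deriv (by ring)

-- W ≥ 0 from W(0)=0 and W' ≥ 0 on [0,b]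
lemma JacAux.W_nonneg (u v : ℝ → ℝ) (b : ℝ) (hb : 0 < b)
    (hu : ContDiff ℝ 2 u) (hv : ContDiff ℝ 2 v)
    (hu0 : u 0 = 0) (hv0 : v 0 = 0)
    (hd' : ∀ t ∈ Ioo (0:ℝ) b, 0 ≤ deriv (deriv v) t * u t - v t * deriv (deriv u) t) :
    ∀ t ∈ Icc (0:ℝ) b, 0 ≤ deriv v t * u t - v t * deriv u t := by
  set W : ℝ → ℝ := fun s => deriv v s * u s - v s * deriv u s with hW
  have hWc : Continuous W := by
    have hud : Differentiable ℝ u := hu.differentiable (by norm_num)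
    have hvd : Differentiable ℝ v := hv.differentiable (by norm_num)
    exact (((JacAux.deriv_diff hv).continuous.mul hud.continuous).sub
      (hvd.continuous.mul (JacAux.deriv_diff hu).continuous))
  have hmono : MonotoneOn W (Icc 0 b) := by
    apply monotoneOn_of_deriv_nonneg (convex_Icc 0 b) hWc.continuousOn
    · intro t ht
      exact (JacAux.hasDerivW u v hu hv t).differentiableAt.differentiableWithinAt
    · rw [interior_Icc]
      intro t ht
      rw [(JacAux.hasDerivW u v hu hv t).deriv]
      exact hd' t ht
  intro t ht
  have h0 : W 0 = 0 := by simp [hW, hu0, hv0]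
  have := hmono (left_mem_Icc.mpr hb.le) ht ht.1
  rw [h0] at this
  exact this


-- key step: comparison assuming v ≥ 0 on [0,b]
lemma JacAux.key (κu κv u v : ℝ → ℝ) (T b : ℝ) (hb : 0 < b) (hbT : b ≤ T)
    (hu : ContDiff ℝ 2 u) (hv : ContDiff ℝ 2 v)
    (hequ : ∀ t ∈ Icc (0:ℝ) T, deriv (deriv u) t = κu t * u t)
    (heqv : ∀ t ∈ Icc (0:ℝ) T, deriv (deriv v) t = κv t * v t)
    (hκ : ∀ t ∈ Icc (0:ℝ) T, κu t ≤ κv t)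
    (hu0 : u 0 = 0) (hu0' : deriv u 0 = 1)
    (hv0 : v 0 = 0) (hv0' : deriv v 0 = 1)
    (hupos : ∀ t ∈ Ioo (0:ℝ) b, 0 < u t)
    (hvnn : ∀ t ∈ Icc (0:ℝ) b, 0 ≤ v t) :
    ∀ t ∈ Icc (0:ℝ) b, u t ≤ v t := by
  have hunn : ∀ t ∈ Icc (0:ℝ) b, 0 ≤ u t :=
    JacAux.nonneg_closure u b hb (hu.continuous) (fun t ht => (hupos t ht).le)
  have hsub : Icc (0:ℝ) b ⊆ Icc 0 T := Icc_subset_Icc le_rfl hbT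
  have hW : ∀ t ∈ Icc (0:ℝ) b, 0 ≤ deriv v t * u t - v t * deriv u t := by
    apply JacAux.W_nonneg u v b hb hu hv hu0 hv0
    intro t ht
    have ht' : t ∈ Icc (0:ℝ) T := hsub (Ioo_subset_Icc_self ht)
    rw [hequ t ht', heqv t ht']
    have := mul_le_mul_of_nonneg_right (hκ t ht')
      (mul_nonneg (hvnn t (Ioo_subset_Icc_self ht)) (hunn t (Ioo_subset_Icc_self ht)))
    nlinarith [hvnn t (Ioo_subset_Icc_self ht), hunn t (Ioo_subset_Icc_self ht)]
  have hIoo : ∀ t ∈ Ioo (0:ℝ) b, u t ≤ v t := by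
    have := JacAux.ratio_core u v b 1 hu hv hu0 hv0 hu0' hv0' hupos
      (fun t ht => hW t (Ioo_subset_Icc_self ht))
    intro t ht
    have := this t ht
    linarith
  intro t ht
  have : ∀ s ∈ Icc (0:ℝ) b, 0 ≤ v s - u s := by
    apply JacAux.nonneg_closure _ b hb
      ((hv.continuous).sub (hu.continuous))
    intro s hs; have := hIoo s hs; simp only [Pi.sub_apply]; linarith
  have := this t ht; linarith

-- positivity of v near 0
lemma JacAux.pos_near (v : ℝ → ℝ) (hv : ContDiff ℝ 2 v) (hv0 : v 0 = 0) (hv0' : deriv v 0 = 1) :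
    ∃ ε > 0, ∀ t ∈ Ioo (0:ℝ) ε, 0 < v t := by
  have hvd : Differentiable ℝ v := hv.differentiable (by norm_num)
  have hlim : Tendsto (fun t => v t / t) (𝓝[>] (0:ℝ)) (𝓝 1) :=
    JacAux.slope_lim v 1 (hv0' ▸ (hvd 0).hasDerivAt) hv0
  have hev : {t : ℝ | 0 < v t / t} ∈ 𝓝[>] (0:ℝ) := by
    have := hlim (Ioi_mem_nhds (by norm_num : (0:ℝ) < 1))
    filter_upwards [this] with t ht
    exact ht
  rw [mem_nhdsGT_iff_exists_Ioo_subset] at hev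
  obtain ⟨ε, hε, hsub⟩ := hev
  refine ⟨ε, mem_Ioi.mp hε, fun t ht => ?_⟩
  have h1 : 0 < v t / t := hsub ht
  have h2 : 0 < t := ht.1
  have := mul_pos h1 h2
  rwa [div_mul_cancel₀ _ h2.ne'] at this

theorem JacAux.sturm (κu κv u v : ℝ → ℝ) (T : ℝ) (hT : 0 < T)
    (hu : ContDiff ℝ 2 u) (hv : ContDiff ℝ 2 v)
    (hequ : ∀ t ∈ Icc (0:ℝ) T, deriv (deriv u) t = κu t * u t)
    (heqv : ∀ t ∈ Icc (0:ℝ) T, deriv (deriv v) t = κv t * v t)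
    (hκ : ∀ t ∈ Icc (0:ℝ) T, κu t ≤ κv t)
    (hu0 : u 0 = 0) (hu0' : deriv u 0 = 1)
    (hv0 : v 0 = 0) (hv0' : deriv v 0 = 1)
    (hupos : ∀ t ∈ Ioo (0:ℝ) T, 0 < u t) :
    ∀ t ∈ Icc (0:ℝ) T, u t ≤ v t := by
  classical
  set S : Set ℝ := {t | t ∈ Ioc (0:ℝ) T ∧ v t ≤ 0} with hSdef
  by_cases hS : S.Nonempty
  · -- first zero t₀
    obtain ⟨ε, hε, hnear⟩ := JacAux.pos_near v hv hv0 hv0'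
    have hbdd : BddBelow S := ⟨0, fun s hs => hs.1.1.le⟩
    set t₀ := sInf S with ht₀def
    have hlb : ∀ s ∈ S, min ε T ≤ s := by
      intro s hs
      by_contra hc
      push_neg at hc
      have hs1 : s ∈ Ioo (0:ℝ) ε := ⟨hs.1.1, lt_of_lt_of_le hc (min_le_left _ _)⟩
      exact absurd hs.2 (not_le.mpr (hnear s hs1))
    have ht₀pos : 0 < t₀ := lt_of_lt_of_le (lt_min hε hT) (le_csInf hS hlb)
    have ht₀mem : t₀ ∈ Icc (0:ℝ) T ∧ v t₀ ≤ 0 := by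
      have hcl : t₀ ∈ closure S := csInf_mem_closure hS hbdd
      have : S ⊆ Icc (0:ℝ) T ∩ {x | v x ≤ 0} := by
        intro s hs
        exact ⟨⟨hs.1.1.le, hs.1.2⟩, hs.2⟩
      have hclosed : IsClosed (Icc (0:ℝ) T ∩ {x | v x ≤ 0}) :=
        isClosed_Icc.inter (isClosed_le hv.continuous continuous_const)
      have := closure_minimal this hclosed hcl
      exact ⟨this.1, this.2⟩
    have hvpos : ∀ s ∈ Ioo (0:ℝ) t₀, 0 < v s := by
      intro s hs
      by_contra hc
      push_neg at hc
      have : s ∈ S := ⟨⟨hs.1, hs.2.le.trans ht₀mem.1.2⟩, hc⟩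
      exact absurd (csInf_le hbdd this) (not_le.mpr hs.2)
    have hvnn : ∀ s ∈ Icc (0:ℝ) t₀, 0 ≤ v s :=
      JacAux.nonneg_closure v t₀ ht₀pos hv.continuous (fun s hs => (hvpos s hs).le)
    have hkey := JacAux.key κu κv u v T t₀ ht₀pos ht₀mem.1.2 hu hv hequ heqv hκ
      hu0 hu0' hv0 hv0'
      (fun s hs => hupos s ⟨hs.1, lt_of_lt_of_le hs.2 ht₀mem.1.2⟩) hvnn
    rcases eq_or_lt_of_le ht₀mem.1.2 with heqT | hltT
    · rw [heqT] at hkey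
      exact hkey
    · exfalso
      have h1 : 0 < u t₀ := hupos t₀ ⟨ht₀pos, hltT⟩
      have h2 := hkey t₀ ⟨ht₀pos.le, le_rfl⟩
      linarith [ht₀mem.2]
  · -- v > 0 everywhere on (0, T]
    rw [Set.not_nonempty_iff_eq_empty] at hS
    have hvnn : ∀ s ∈ Icc (0:ℝ) T, 0 ≤ v s := by
      intro s hs
      rcases eq_or_lt_of_le hs.1 with h0 | h0
      · rw [← h0, hv0]
      · by_contra hc
        push_neg at hc
        have : s ∈ S := ⟨⟨h0, hs.2⟩, hc.le⟩
        rw [hS] at this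
        exact this
    exact JacAux.key κu κv u v T T hT le_rfl hu hv hequ heqv hκ hu0 hu0' hv0 hv0' hupos hvnn


lemma JacAux.comp0 (κ u δ : ℝ → ℝ) (T : ℝ) (hT : 0 < T)
    (hu : ContDiff ℝ 2 u) (hδ : ContDiff ℝ 2 δ)
    (hequ : ∀ t ∈ Icc (0:ℝ) T, deriv (deriv u) t = κ t * u t)
    (hineq : ∀ t ∈ Icc (0:ℝ) T, κ t * δ t ≤ deriv (deriv δ) t)
    (hu0 : u 0 = 0) (hu0' : deriv u 0 = 1)
    (hδ0 : δ 0 = 0) (hδ0' : deriv δ 0 = 0)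
    (hupos : ∀ t ∈ Ioo (0:ℝ) T, 0 < u t) :
    ∀ t ∈ Icc (0:ℝ) T, 0 ≤ δ t := by
  have hunn : ∀ t ∈ Icc (0:ℝ) T, 0 ≤ u t :=
    JacAux.nonneg_closure u T hT hu.continuous (fun t ht => (hupos t ht).le)
  have hW : ∀ t ∈ Icc (0:ℝ) T, 0 ≤ deriv δ t * u t - δ t * deriv u t := by
    apply JacAux.W_nonneg u δ T hT hu hδ hu0 hδ0
    intro t ht
    have ht' : t ∈ Icc (0:ℝ) T := Ioo_subset_Icc_self ht
    rw [hequ t ht']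
    have h1 := hineq t ht'
    have h2 := hunn t ht'
    nlinarith
  have hIoo : ∀ t ∈ Ioo (0:ℝ) T, 0 ≤ δ t := by
    have := JacAux.ratio_core u δ T 0 hu hδ hu0 hδ0 hu0' hδ0' hupos
      (fun t ht => hW t (Ioo_subset_Icc_self ht))
    intro t ht
    have := this t ht
    linarith
  exact JacAux.nonneg_closure δ T hT hδ.continuous hIoo

lemma JacAux.pow_shuffle (p : ℕ) (hp : 1 ≤ p) (a b x y : ℝ)
    (hy0 : 0 ≤ y) (hya : y ≤ a) (hab : a ≤ b) (hbx : b ≤ x) (hsum : a + b ≤ x + y) :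
    a ^ p + b ^ p ≤ x ^ p + y ^ p := by
  have ha0 : 0 ≤ a := hy0.trans hya
  have hb0 : 0 ≤ b := ha0.trans hab
  have hgeom1 : (∑ i ∈ Finset.range p, a ^ i * y ^ (p - 1 - i)) * (a - y) = a ^ p - y ^ p :=
    geom_sum₂_mul a y p
  have hgeom2 : (∑ i ∈ Finset.range p, x ^ i * b ^ (p - 1 - i)) * (x - b) = x ^ p - b ^ p :=
    geom_sum₂_mul x b p
  have hS2 : (∑ i ∈ Finset.range p, a ^ i * y ^ (p - 1 - i)) ≤ p * b ^ (p - 1) := by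
    calc (∑ i ∈ Finset.range p, a ^ i * y ^ (p - 1 - i))
        ≤ ∑ i ∈ Finset.range p, b ^ i * b ^ (p - 1 - i) := by
          apply Finset.sum_le_sum
          intro i hi
          exact mul_le_mul (pow_le_pow_left₀ ha0 hab i) (pow_le_pow_left₀ hy0 (hya.trans hab) _)
            (pow_nonneg hy0 _) (pow_nonneg hb0 _)
      _ = ∑ i ∈ Finset.range p, b ^ (p - 1) := by
          apply Finset.sum_congr rfl
          intro i hi
          rw [← pow_add]
          congr 1
          have := Finset.mem_range.mp hi
          omega
      _ = p * b ^ (p - 1) := by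
          rw [Finset.sum_const, Finset.card_range, nsmul_eq_mul]
  have hS1 : (p : ℝ) * b ^ (p - 1) ≤ ∑ i ∈ Finset.range p, x ^ i * b ^ (p - 1 - i) := by
    calc (p : ℝ) * b ^ (p - 1) = ∑ i ∈ Finset.range p, b ^ (p - 1) := by
          rw [Finset.sum_const, Finset.card_range, nsmul_eq_mul]
      _ ≤ ∑ i ∈ Finset.range p, x ^ i * b ^ (p - 1 - i) := by
          apply Finset.sum_le_sum
          intro i hi
          calc b ^ (p-1) = b ^ i * b ^ (p - 1 - i) := by
                rw [← pow_add]
                congr 1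
                have := Finset.mem_range.mp hi
                omega
            _ ≤ x ^ i * b ^ (p - 1 - i) :=
                mul_le_mul_of_nonneg_right (pow_le_pow_left₀ hb0 hbx i) (pow_nonneg hb0 _)
  have hay : 0 ≤ a - y := by linarith
  have hxb : a - y ≤ x - b := by linarith
  have hbp : (0:ℝ) ≤ (p : ℝ) * b ^ (p - 1) :=
    mul_nonneg (Nat.cast_nonneg p) (pow_nonneg hb0 _)
  have chain : a ^ p - y ^ p ≤ x ^ p - b ^ p := by
    calc a ^ p - y ^ p = (∑ i ∈ Finset.range p, a ^ i * y ^ (p - 1 - i)) * (a - y) :=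
          hgeom1.symm
      _ ≤ ((p : ℝ) * b ^ (p - 1)) * (a - y) := mul_le_mul_of_nonneg_right hS2 hay
      _ ≤ ((p : ℝ) * b ^ (p - 1)) * (x - b) := mul_le_mul_of_nonneg_left hxb hbp
      _ ≤ (∑ i ∈ Finset.range p, x ^ i * b ^ (p - 1 - i)) * (x - b) :=
          mul_le_mul_of_nonneg_right hS1 (by linarith)
      _ = x ^ p - b ^ p := hgeom2
  linarith

/-- **Higher-power shuffling lemma for Jacobi equations.**
With `κ_max = max(κ₁, κ₂)` and `κ_min = min(κ₁, κ₂)` pointwise, and standard Jacobi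
solutions `j₁, j₂, j_max, j_min` for `κ₁, κ₂, κ_max, κ_min` on `[0, T]`, if `j_min > 0`
on `(0, T)` then for every `p ≥ 1`, `j_max^p + j_min^p ≥ j₁^p + j₂^p` on `[0, T]`. -/
theorem jacobi_shuffling_higher_power
    (T : ℝ) (hT : 0 < T) (κ₁ κ₂ j₁ j₂ jmax jmin : ℝ → ℝ)
    (hκ₁ : Continuous κ₁) (hκ₂ : Continuous κ₂)
    (hj₁ : ContDiff ℝ 2 j₁) (hj₂ : ContDiff ℝ 2 j₂)
    (hjmax : ContDiff ℝ 2 jmax) (hjmin : ContDiff ℝ 2 jmin)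
    (heq₁ : ∀ t ∈ Set.Icc (0 : ℝ) T, deriv (deriv j₁) t = κ₁ t * j₁ t)
    (heq₂ : ∀ t ∈ Set.Icc (0 : ℝ) T, deriv (deriv j₂) t = κ₂ t * j₂ t)
    (heqmax : ∀ t ∈ Set.Icc (0 : ℝ) T,
      deriv (deriv jmax) t = max (κ₁ t) (κ₂ t) * jmax t)
    (heqmin : ∀ t ∈ Set.Icc (0 : ℝ) T,
      deriv (deriv jmin) t = min (κ₁ t) (κ₂ t) * jmin t)
    (h₁0 : j₁ 0 = 0) (h₁0' : deriv j₁ 0 = 1)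
    (h₂0 : j₂ 0 = 0) (h₂0' : deriv j₂ 0 = 1)
    (hmax0 : jmax 0 = 0) (hmax0' : deriv jmax 0 = 1)
    (hmin0 : jmin 0 = 0) (hmin0' : deriv jmin 0 = 1)
    (hpos : ∀ t ∈ Set.Ioo (0 : ℝ) T, 0 < jmin t) :
    ∀ p : ℕ, 1 ≤ p → ∀ t ∈ Set.Icc (0 : ℝ) T,
      j₁ t ^ p + j₂ t ^ p ≤ jmax t ^ p + jmin t ^ p := by
  have h1min : ∀ t ∈ Icc (0:ℝ) T, jmin t ≤ j₁ t :=
    JacAux.sturm (fun t => min (κ₁ t) (κ₂ t)) κ₁ jmin j₁ T hT hjmin hj₁ heqmin heq₁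
      (fun t _ => min_le_left _ _) hmin0 hmin0' h₁0 h₁0' hpos
  have h2min : ∀ t ∈ Icc (0:ℝ) T, jmin t ≤ j₂ t :=
    JacAux.sturm (fun t => min (κ₁ t) (κ₂ t)) κ₂ jmin j₂ T hT hjmin hj₂ heqmin heq₂
      (fun t _ => min_le_right _ _) hmin0 hmin0' h₂0 h₂0' hpos
  have hj₁pos : ∀ t ∈ Ioo (0:ℝ) T, 0 < j₁ t :=
    fun t ht => lt_of_lt_of_le (hpos t ht) (h1min t (Ioo_subset_Icc_self ht))
  have hj₂pos : ∀ t ∈ Ioo (0:ℝ) T, 0 < j₂ t :=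
    fun t ht => lt_of_lt_of_le (hpos t ht) (h2min t (Ioo_subset_Icc_self ht))
  have hmax1 : ∀ t ∈ Icc (0:ℝ) T, j₁ t ≤ jmax t :=
    JacAux.sturm κ₁ (fun t => max (κ₁ t) (κ₂ t)) j₁ jmax T hT hj₁ hjmax heq₁ heqmax
      (fun t _ => le_max_left _ _) h₁0 h₁0' hmax0 hmax0' hj₁pos
  have hmax2 : ∀ t ∈ Icc (0:ℝ) T, j₂ t ≤ jmax t :=
    JacAux.sturm κ₂ (fun t => max (κ₁ t) (κ₂ t)) j₂ jmax T hT hj₂ hjmax heq₂ heqmax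
      (fun t _ => le_max_right _ _) h₂0 h₂0' hmax0 hmax0' hj₂pos
  -- the sum comparison
  set δ : ℝ → ℝ := fun t => jmax t + jmin t - j₁ t - j₂ t with hδdef
  have hδc : ContDiff ℝ 2 δ := ((hjmax.add hjmin).sub hj₁).sub hj₂
  have hd₁ : Differentiable ℝ j₁ := hj₁.differentiable (by norm_num)
  have hd₂ : Differentiable ℝ j₂ := hj₂.differentiable (by norm_num)
  have hdmax : Differentiable ℝ jmax := hjmax.differentiable (by norm_num)
  have hdmin : Differentiable ℝ jmin := hjmin.differentiable (by norm_num)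
  have hδ1 : deriv δ = fun t => deriv jmax t + deriv jmin t - deriv j₁ t - deriv j₂ t := by
    funext t
    rw [hδdef]
    rw [deriv_fun_sub (((hdmax t).fun_add (hdmin t)).fun_sub (hd₁ t)) (hd₂ t),
        deriv_fun_sub ((hdmax t).fun_add (hdmin t)) (hd₁ t),
        deriv_fun_add (hdmax t) (hdmin t)]
  have hδ2 : ∀ t, deriv (deriv δ) t = deriv (deriv jmax) t + deriv (deriv jmin) t
      - deriv (deriv j₁) t - deriv (deriv j₂) t := by
    intro t
    rw [hδ1]
    have e₁ := JacAux.deriv_diff hj₁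
    have e₂ := JacAux.deriv_diff hj₂
    have emax := JacAux.deriv_diff hjmax
    have emin := JacAux.deriv_diff hjmin
    rw [deriv_fun_sub (((emax t).fun_add (emin t)).fun_sub (e₁ t)) (e₂ t),
        deriv_fun_sub ((emax t).fun_add (emin t)) (e₁ t),
        deriv_fun_add (emax t) (emin t)]
  have hineq : ∀ t ∈ Icc (0:ℝ) T, min (κ₁ t) (κ₂ t) * δ t ≤ deriv (deriv δ) t := by
    intro t ht
    rw [hδ2 t, heq₁ t ht, heq₂ t ht, heqmax t ht, heqmin t ht, hδdef]
    have hA := hmax1 t ht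
    have hB := hmax2 t ht
    rcases le_total (κ₁ t) (κ₂ t) with hc | hc
    · rw [max_eq_right hc, min_eq_left hc]
      have hk := mul_nonneg (sub_nonneg.mpr hc) (sub_nonneg.mpr hB)
      simp only []
      nlinarith [hk]
    · rw [max_eq_left hc, min_eq_right hc]
      have hk := mul_nonneg (sub_nonneg.mpr hc) (sub_nonneg.mpr hA)
      simp only []
      nlinarith [hk]
  have hδ0 : δ 0 = 0 := by simp [hδdef, hmax0, hmin0, h₁0, h₂0]
  have hδ0' : deriv δ 0 = 0 := by
    rw [hδ1]; simp [hmax0', hmin0', h₁0', h₂0']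
  have hsum : ∀ t ∈ Icc (0:ℝ) T, 0 ≤ δ t :=
    JacAux.comp0 (fun t => min (κ₁ t) (κ₂ t)) jmin δ T hT hjmin hδc heqmin hineq
      hmin0 hmin0' hδ0 hδ0' hpos
  have hminnn : ∀ t ∈ Icc (0:ℝ) T, 0 ≤ jmin t :=
    JacAux.nonneg_closure jmin T hT hjmin.continuous (fun t ht => (hpos t ht).le)
  intro p hp t ht
  have hy0 := hminnn t ht
  have h1 := h1min t ht
  have h2 := h2min t ht
  have h3 := hmax1 t ht
  have h4 := hmax2 t ht
  have h5 : j₁ t + j₂ t ≤ jmax t + jmin t := by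
    have := hsum t ht
    simp only [hδdef] at this
    linarith
  rcases le_total (j₁ t) (j₂ t) with hc | hc
  · exact JacAux.pow_shuffle p hp (j₁ t) (j₂ t) (jmax t) (jmin t) hy0 h1 hc h4 h5
  · have := JacAux.pow_shuffle p hp (j₂ t) (j₁ t) (jmax t) (jmin t) hy0 h2 hc h3
      (by linarith)
    linarith
end

section
/- Power-sum inequality (algebraic core of the higher-power shuffling lemma): Let a, b, x, y be real numbers with a ≥ x, a ≥ y, x ≥ b, y ≥ b, b ≥ 0, and a + b ≥ x + y. Then for every natural number p ≥ 1, a^p + b^p ≥ x^p + y^p. -/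
/-!
Rearranged, the claim is `x ^ p - b ^ p ≤ a ^ p - y ^ p`. Factoring both sides as
`(u - v) * ∑ i < p, u ^ i * v ^ (p - 1 - i)`, the left factor is at most the right one
since `x - b ≤ a - y`, and the geometric sums compare termwise since `x ≤ a` and `b ≤ y`.
-/

open Finset

section

variable {R : Type*} [CommRing R] [LinearOrder R] [IsStrictOrderedRing R]

theorem geom_sum₂_le_geom_sum₂ {u u' v v' : R} (hu : 0 ≤ u) (hv : 0 ≤ v) (huu' : u ≤ u')
    (hvv' : v ≤ v') (n : ℕ) :
    ∑ i ∈ range n, u ^ i * v ^ (n - 1 - i) ≤ ∑ i ∈ range n, u' ^ i * v' ^ (n - 1 - i) :=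
  sum_le_sum fun _ _ ↦ mul_le_mul (pow_le_pow_left₀ hu huu' _) (pow_le_pow_left₀ hv hvv' _)
    (pow_nonneg hv _) (pow_nonneg (hu.trans huu') _)

theorem pow_sub_pow_le_pow_sub_pow {u u' v v' : R} (hv : 0 ≤ v) (hvu : v ≤ u) (huu' : u ≤ u')
    (hvv' : v ≤ v') (hsub : u - v ≤ u' - v') (n : ℕ) :
    u ^ n - v ^ n ≤ u' ^ n - v' ^ n := by
  have hu : 0 ≤ u := hv.trans hvu
  rw [← geom_sum₂_mul, ← geom_sum₂_mul]
  exact mul_le_mul (geom_sum₂_le_geom_sum₂ hu hv huu' hvv' n) hsub (sub_nonneg.2 hvu)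
    (sum_nonneg fun _ _ ↦ mul_nonneg (pow_nonneg (hu.trans huu') _) (pow_nonneg (hv.trans hvv') _))

end

theorem power_sum_inequality_general (a b x y : ℝ)
    (hax : x ≤ a) (hxb : b ≤ x) (hyb : b ≤ y)
    (hb : 0 ≤ b) (hsum : x + y ≤ a + b) :
    ∀ p : ℕ, 1 ≤ p → x ^ p + y ^ p ≤ a ^ p + b ^ p := by
  intro p _
  have := pow_sub_pow_le_pow_sub_pow hb hxb hax hyb (by linarith) p
  linarith

/-- **Power-sum inequality** (algebraic core of the higher-power shuffling lemma).
If `a ≥ x, y ≥ b ≥ 0` and `a + b ≥ x + y`, then `a^p + b^p ≥ x^p + y^p` for every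
natural number `p ≥ 1`. -/
theorem power_sum_inequality (a b x y : ℝ)
    (hax : x ≤ a) (hay : y ≤ a) (hxb : b ≤ x) (hyb : b ≤ y)
    (hb : 0 ≤ b) (hsum : x + y ≤ a + b) :
    ∀ p : ℕ, 1 ≤ p → x ^ p + y ^ p ≤ a ^ p + b ^ p :=
  power_sum_inequality_general a b x y hax hxb hyb hb hsum
end

section
/- Shuffling lemma for three trajectories: Let T > 0, let κ₁, κ₂, κ₃ : ℝ → ℝ be continuous, and for each t let κ_max(t) ≥ κ_mid(t) ≥ κ_min(t) be the values κ₁(t), κ₂(t), κ₃(t) arranged in nonincreasing order (so κ_max(t) = max, κ_min(t) = min, and κ_mid(t) is the median of the three values). Let j₁, j₂, j₃, j_max, j_mid, j_min be standard Jacobi solutions on [0,T] with schedules κ₁, κ₂, κ₃, κ_max, κ_mid, κ_min respectively. If j_min(t) > 0 for all t ∈ (0,T), then j_max(t) + j_mid(t) + j_min(t) ≥ j₁(t) + j₂(t) + j₃(t) for all t ∈ [0,T]. -/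
open Set

/-- monotonicity helper -/
lemma jacobiAux_mono {F F' : ℝ → ℝ} {a b : ℝ}
    (hF : ∀ t ∈ Icc a b, HasDerivAt F (F' t) t)
    (h0 : ∀ t ∈ Icc a b, 0 ≤ F' t) : MonotoneOn F (Icc a b) := by
  apply monotoneOn_of_deriv_nonneg (convex_Icc a b)
  · exact fun t ht => (hF t ht).continuousAt.continuousWithinAt
  · intro t ht
    rw [interior_Icc] at ht
    exact (hF t (Ioo_subset_Icc_self ht)).differentiableAt.differentiableWithinAt
  · intro t ht
    rw [interior_Icc] at ht
    rw [(hF t (Ioo_subset_Icc_self ht)).deriv]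
    exact h0 t (Ioo_subset_Icc_self ht)

set_option maxHeartbeats 1000000 in
lemma jacobi_core (T : ℝ) (hT : 0 < T) (j f ρ j' j'' f' f'' : ℝ → ℝ)
    (hjd : ∀ t, HasDerivAt j (j' t) t) (hjd' : ∀ t, HasDerivAt j' (j'' t) t)
    (hfd : ∀ t, HasDerivAt f (f' t) t) (hfd' : ∀ t, HasDerivAt f' (f'' t) t)
    (hρ : Continuous ρ) (hρ0 : ∀ t ∈ Icc 0 T, 0 ≤ ρ t)
    (hj0 : j 0 = 0) (hj0' : j' 0 = 1) (hjpos : ∀ t ∈ Ioo 0 T, 0 < j t)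
    (hf0 : f 0 = 0) (hf0' : f' 0 = 0)
    (hH : ∀ t ∈ Icc 0 T, ρ t * (j t * f t) ≤ f'' t * j t - f t * j'' t) :
    ∀ t ∈ Icc 0 T, 0 ≤ f t := by
  have hjdiff : Differentiable ℝ j := fun t => (hjd t).differentiableAt
  have hfdiff : Differentiable ℝ f := fun t => (hfd t).differentiableAt
  have hj'diff : Differentiable ℝ j' := fun t => (hjd' t).differentiableAt
  have hf'diff : Differentiable ℝ f' := fun t => (hfd' t).differentiableAt
  have hjc : Continuous j := hjdiff.continuous
  have hfc : Continuous f := hfdiff.continuous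
  have hj'c : Continuous j' := hj'diff.continuous
  -- The Wronskian
  set W : ℝ → ℝ := fun t => f' t * j t - f t * j' t with hWdef
  have hW : ∀ t, HasDerivAt W (f'' t * j t - f t * j'' t) t := by
    intro t
    have h1 : HasDerivAt (fun s => f' s * j s) (f'' t * j t + f' t * j' t) t :=
      (hfd' t).mul (hjd t)
    have h2 : HasDerivAt (fun s => f s * j' s) (f' t * j' t + f t * j'' t) t :=
      (hfd t).mul (hjd' t)
    have := h1.sub h2
    exact this.congr_deriv (by ring)
  have hWc : Continuous W := by
    have : Differentiable ℝ W := fun t => (hW t).differentiableAt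
    exact this.continuous
  have hW0 : W 0 = 0 := by simp [hWdef, hf0, hf0']
  -- quotient g = f / j
  set g : ℝ → ℝ := fun t => f t / j t with hgdef
  have hg0 : g 0 = 0 := by simp [hgdef, hf0]
  have hgd : ∀ t, j t ≠ 0 → HasDerivAt g (W t / (j t) ^ 2) t := by
    intro t ht
    exact (hfd t).div (hjd t) ht
  have hfg : ∀ t, j t ≠ 0 → f t = g t * j t := by
    intro t ht
    rw [hgdef]
    field_simp
  -- limit of g at 0+
  have hglim : Filter.Tendsto g (nhdsWithin 0 (Ioi 0)) (nhds 0) := by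
    have hsf : Filter.Tendsto (slope f 0) (nhdsWithin 0 {0}ᶜ) (nhds 0) := by
      have := hasDerivAt_iff_tendsto_slope.mp (hfd 0)
      rwa [hf0'] at this
    have hsj : Filter.Tendsto (slope j 0) (nhdsWithin 0 {0}ᶜ) (nhds 1) := by
      have := hasDerivAt_iff_tendsto_slope.mp (hjd 0)
      rwa [hj0'] at this
    have hq : Filter.Tendsto (fun t => slope f 0 t / slope j 0 t) (nhdsWithin 0 {0}ᶜ)
        (nhds 0) := by
      have := hsf.div hsj one_ne_zero
      rw [zero_div] at this; exact this
    have hmono : nhdsWithin (0:ℝ) (Ioi 0) ≤ nhdsWithin 0 {0}ᶜ := by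
      apply nhdsWithin_mono
      intro x hx
      exact ne_of_gt hx
    have hq2 := hq.mono_left hmono
    apply hq2.congr'
    filter_upwards [self_mem_nhdsWithin] with t ht
    have ht0 : t ≠ 0 := ne_of_gt ht
    rcases eq_or_ne (j t) 0 with hj | hj
    · simp [slope, hgdef, hj, hf0, hj0, vsub_eq_sub]
    · simp only [slope, hf0, hj0, vsub_eq_sub, sub_zero, smul_eq_mul]
      rw [hgdef]
      field_simp
  -- j nonneg on [0,T)
  have hjnn : ∀ t ∈ Ico (0:ℝ) T, 0 ≤ j t := by
    intro t ht
    rcases eq_or_lt_of_le ht.1 with h | h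
    · rw [← h, hj0]
    · exact (hjpos t ⟨h, ht.2⟩).le
  -- Step A : positivity near 0
  have stepA : ∃ δ, 0 < δ ∧ δ < T ∧ ∀ s ∈ Icc 0 δ, 0 ≤ f s := by
    obtain ⟨ε, hε, hball⟩ : ∃ ε > 0, ∀ t, |t| < ε → (0:ℝ) ≤ j' t := by
      have hcont : ContinuousAt j' 0 := hj'c.continuousAt
      have hev : ∀ᶠ t in nhds (0:ℝ), (1:ℝ)/2 < j' t := by
        have hmem : Ioi ((1:ℝ)/2) ∈ nhds (j' 0) := by
          rw [hj0']; exact Ioi_mem_nhds (by norm_num)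
        exact hcont.preimage_mem_nhds hmem
      rw [Metric.eventually_nhds_iff] at hev
      obtain ⟨ε, hε, h⟩ := hev
      refine ⟨ε, hε, fun t ht => ?_⟩
      have := h (y := t) (by simpa [Real.dist_eq] using ht)
      linarith
    set δ₀ := min (ε/2) (T/2) with hδ₀def
    have hδ₀pos : 0 < δ₀ := lt_min (by linarith) (by linarith)
    have hδ₀T : δ₀ < T := lt_of_le_of_lt (min_le_right _ _) (by linarith)
    have hj'nn : ∀ t ∈ Icc 0 δ₀, 0 ≤ j' t := by
      intro t ht
      apply hball t
      rw [abs_of_nonneg ht.1]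
      have h1 := le_trans ht.2 (min_le_left (ε/2) (T/2))
      linarith
    have hjmono : MonotoneOn j (Icc 0 δ₀) := jacobiAux_mono (fun t _ => hjd t) hj'nn
    have hjnn0 : ∀ t ∈ Icc 0 δ₀, 0 ≤ j t := by
      intro t ht
      have := hjmono (left_mem_Icc.mpr hδ₀pos.le) ht ht.1
      rwa [hj0] at this
    obtain ⟨C₁, hC₁0, hC₁⟩ : ∃ C, 0 ≤ C ∧ ∀ s ∈ Icc 0 δ₀, ρ s ≤ C := by
      obtain ⟨x, hx, hmax⟩ := isCompact_Icc.exists_isMaxOn (nonempty_Icc.mpr hδ₀pos.le)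
        hρ.continuousOn
      exact ⟨max (ρ x) 0, le_max_right _ _, fun s hs => le_trans (hmax hs) (le_max_left _ _)⟩
    set δ := min δ₀ (1/(C₁+1)) with hδdef
    have hδpos : 0 < δ := lt_min hδ₀pos (by positivity)
    have hδδ₀ : δ ≤ δ₀ := min_le_left _ _
    have hδT : δ < T := lt_of_le_of_lt hδδ₀ hδ₀T
    have hIccδ₀ : Icc (0:ℝ) δ ⊆ Icc 0 δ₀ := Icc_subset_Icc le_rfl hδδ₀
    have hK : C₁ * δ^2 < 1 := by
      have h1 : δ ≤ 1/(C₁+1) := min_le_right _ _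
      have h2 : (0:ℝ) < C₁ + 1 := by linarith
      have h3 : δ * (C₁ + 1) ≤ 1 := by
        rw [← le_div_iff₀ h2]; exact h1
      nlinarith [hδpos, hC₁0]
    have hgcont : ContinuousOn g (Icc 0 δ) := by
      intro t ht
      rcases eq_or_lt_of_le ht.1 with h | h
      · apply ContinuousWithinAt.mono _ (Icc_subset_Ici_self)
        rw [← h]
        rw [← continuousWithinAt_Ioi_iff_Ici]
        have : Filter.Tendsto g (nhdsWithin 0 (Ioi 0)) (nhds (g 0)) := by
          rw [hg0]; exact hglim
        exact this
      · have hjt : j t ≠ 0 := ne_of_gt (hjpos t ⟨h, lt_of_le_of_lt ht.2 hδT⟩)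
        exact ((hgd t hjt).differentiableAt.continuousAt).continuousWithinAt
    obtain ⟨tm, htm, hmin⟩ := isCompact_Icc.exists_isMinOn (nonempty_Icc.mpr hδpos.le) hgcont
    set m := g tm with hmdef
    have hm0 : 0 ≤ m := by
      by_contra hmc
      push_neg at hmc
      have hfllb : ∀ s ∈ Icc 0 δ, m * j s ≤ f s := by
        intro s hs
        rcases eq_or_lt_of_le hs.1 with h | h
        · rw [← h, hf0, hj0, mul_zero]
        · have hjs : 0 < j s := hjpos s ⟨h, lt_of_le_of_lt hs.2 hδT⟩
          rw [hfg s (ne_of_gt hjs)]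
          exact mul_le_mul_of_nonneg_right (hmin hs) hjs.le
      have hWlb : ∀ t ∈ Icc 0 δ, C₁ * m * (j t)^2 * t ≤ W t := by
        intro t ht
        have hsub : Icc (0:ℝ) 0 ⊆ Icc 0 δ := Icc_subset_Icc le_rfl hδpos.le
        have hmono2 : MonotoneOn (fun s => W s - C₁ * m * (j t)^2 * s) (Icc 0 t) := by
          apply jacobiAux_mono (F' := fun s => (f'' s * j s - f s * j'' s) - C₁ * m * (j t)^2)
          · intro s hs
            have hc : HasDerivAt (fun x => C₁ * m * (j t)^2 * x) (C₁ * m * (j t)^2) s := by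
              simpa using (hasDerivAt_id s).const_mul (C₁ * m * (j t)^2)
            exact (hW s).sub hc
          · intro s hs
            have hsIcc : s ∈ Icc 0 δ := Icc_subset_Icc le_rfl ht.2 hs
            have hsT : s ∈ Icc 0 T := ⟨hsIcc.1, le_trans hsIcc.2 hδT.le⟩
            have h1 := hH s hsT
            have hjs0 : 0 ≤ j s := hjnn0 s (hIccδ₀ hsIcc)
            have hjst : j s ≤ j t := hjmono (hIccδ₀ hsIcc) (hIccδ₀ ht) (le_trans hs.2 le_rfl)
            have hρs := hρ0 s hsT
            have hρsC := hC₁ s (hIccδ₀ hsIcc)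
            have hf1 := hfllb s hsIcc
            have e1 : ρ s * (j s * (m * j s)) ≤ ρ s * (j s * f s) :=
              mul_le_mul_of_nonneg_left (mul_le_mul_of_nonneg_left hf1 hjs0) hρs
            have e2 : C₁ * m * (j t)^2 ≤ ρ s * (j s * (m * j s)) := by
              have h3 : ρ s * (j s)^2 ≤ C₁ * (j t)^2 :=
                mul_le_mul hρsC (pow_le_pow_left₀ hjs0 hjst 2) (sq_nonneg _) hC₁0
              have h4 : m * (C₁ * (j t)^2) ≤ m * (ρ s * (j s)^2) :=
                mul_le_mul_of_nonpos_left h3 hmc.le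
              nlinarith [h4]
            simp only [sub_nonneg]
            linarith
        have h2 := hmono2 (left_mem_Icc.mpr ht.1) (right_mem_Icc.mpr ht.1) ht.1
        simp only [hW0, mul_zero, sub_zero] at h2
        linarith
      have hφmono : MonotoneOn (fun s => g s - C₁ * m * δ * s) (Icc 0 δ) := by
        apply monotoneOn_of_deriv_nonneg (convex_Icc 0 δ)
        · exact hgcont.sub ((continuous_const.mul continuous_id).continuousOn)
        · intro s hs
          rw [interior_Icc] at hs
          have hjs : j s ≠ 0 := ne_of_gt (hjpos s ⟨hs.1, lt_trans hs.2 hδT⟩)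
          exact ((hgd s hjs).sub (by simpa using (hasDerivAt_id s).const_mul (C₁ * m * δ))).differentiableAt.differentiableWithinAt
        · intro s hs
          rw [interior_Icc] at hs
          have hjsp : 0 < j s := hjpos s ⟨hs.1, lt_trans hs.2 hδT⟩
          have hd : HasDerivAt (fun x => g x - C₁ * m * δ * x) (W s / (j s)^2 - C₁ * m * δ) s :=
            (hgd s (ne_of_gt hjsp)).sub (by simpa using (hasDerivAt_id s).const_mul (C₁ * m * δ))
          rw [hd.deriv]
          have hWs := hWlb s (Ioo_subset_Icc_self hs)
          have h1 : C₁ * m * s ≤ W s / (j s)^2 := by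
            rw [le_div_iff₀ (by positivity)]
            nlinarith [hWs]
          have hCm : C₁ * m ≤ 0 := mul_nonpos_iff.mpr (Or.inl ⟨hC₁0, hmc.le⟩)
          have h2 : C₁ * m * δ ≤ C₁ * m * s := mul_le_mul_of_nonpos_left hs.2.le hCm
          linarith
      have hφ := hφmono (left_mem_Icc.mpr hδpos.le) htm htm.1
      simp only [hg0, mul_zero, sub_zero, zero_sub] at hφ
      have hc1 : C₁ * m * δ * tm ≤ m := by linarith
      have hCm : C₁ * m ≤ 0 := mul_nonpos_iff.mpr (Or.inl ⟨hC₁0, hmc.le⟩)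
      have hCmδ : C₁ * m * δ ≤ 0 := mul_nonpos_iff.mpr (Or.inr ⟨hCm, hδpos.le⟩)
      have hc2 : C₁ * m * δ * δ ≤ C₁ * m * δ * tm := mul_le_mul_of_nonpos_left htm.2 hCmδ
      have hc3 := le_trans hc2 hc1
      nlinarith [mul_lt_mul_of_neg_left hK hmc]
    refine ⟨δ, hδpos, hδT, fun s hs => ?_⟩
    rcases eq_or_lt_of_le hs.1 with h | h
    · rw [← h, hf0]
    · have hjs : 0 < j s := hjpos s ⟨h, lt_of_le_of_lt hs.2 hδT⟩
      rw [hfg s (ne_of_gt hjs)]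
      exact mul_nonneg (le_trans hm0 (hmin hs)) hjs.le
  -- Step B : extension
  have stepB : ∀ a, 0 < a → a < T → (∀ s ∈ Icc 0 a, 0 ≤ f s) →
      ∃ δ, 0 < δ ∧ a + δ < T ∧ ∀ s ∈ Icc 0 (a + δ), 0 ≤ f s := by
    intro a ha haT hfa
    set b := (a + T) / 2 with hbdef
    have hab : a < b := by rw [hbdef]; linarith
    have hbT : b < T := by rw [hbdef]; linarith
    have hjposab : ∀ s ∈ Icc a b, 0 < j s := fun s hs =>
      hjpos s ⟨lt_of_lt_of_le ha hs.1, lt_of_le_of_lt hs.2 hbT⟩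
    obtain ⟨tc, htc, hminc⟩ := isCompact_Icc.exists_isMinOn (nonempty_Icc.mpr hab.le)
      (hjc.continuousOn : ContinuousOn j (Icc a b))
    set c := j tc with hcdef
    have hcpos : 0 < c := hjposab tc htc
    obtain ⟨tC, htC, hmaxC⟩ := isCompact_Icc.exists_isMaxOn (nonempty_Icc.mpr hab.le)
      (hjc.continuousOn : ContinuousOn j (Icc a b))
    set C₂ := j tC with hC₂def
    have hC₂pos : 0 < C₂ := hjposab tC htC
    obtain ⟨C₁, hC₁0, hC₁⟩ : ∃ C, 0 ≤ C ∧ ∀ s ∈ Icc a b, ρ s * j s ≤ C := by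
      obtain ⟨x, hx, hmax⟩ := isCompact_Icc.exists_isMaxOn (nonempty_Icc.mpr hab.le)
        ((hρ.mul hjc).continuousOn)
      exact ⟨max (ρ x * j x) 0, le_max_right _ _, fun s hs => le_trans (hmax hs) (le_max_left _ _)⟩
    have hCm0 : ∀ m : ℝ, m < 0 → C₁ * m ≤ 0 := fun m hm =>
      mul_nonpos_iff.mpr (Or.inl ⟨hC₁0, hm.le⟩)
    have hWa : 0 ≤ W a := by
      have hmonoW : MonotoneOn W (Icc 0 a) := by
        apply jacobiAux_mono (F' := fun s => f'' s * j s - f s * j'' s) (fun s _ => hW s)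
        intro s hs
        have hsT : s ∈ Icc 0 T := ⟨hs.1, le_trans hs.2 haT.le⟩
        have h1 := hH s hsT
        have h2 : 0 ≤ ρ s * (j s * f s) :=
          mul_nonneg (hρ0 s hsT)
            (mul_nonneg (hjnn s ⟨hs.1, lt_of_le_of_lt hs.2 haT⟩) (hfa s hs))
        linarith
      have := hmonoW (left_mem_Icc.mpr ha.le) (right_mem_Icc.mpr ha.le) ha.le
      rwa [hW0] at this
    set δ := min (b - a) (c^2 / (C₁ * C₂ + c^2 + 1)) with hδdef
    have hδpos : 0 < δ := lt_min (by linarith)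
      (div_pos (pow_pos hcpos 2) (by nlinarith [mul_nonneg hC₁0 hC₂pos.le, sq_nonneg c]))
    have hδb : a + δ ≤ b := by
      have h := min_le_left (b - a) (c^2 / (C₁ * C₂ + c^2 + 1))
      rw [hδdef]; linarith
    have haδT : a + δ < T := lt_of_le_of_lt hδb hbT
    have hsubab : Icc a (a+δ) ⊆ Icc a b := Icc_subset_Icc le_rfl hδb
    have hK : C₁ * C₂ * δ^2 < c^2 := by
      have h1 : δ ≤ c^2 / (C₁ * C₂ + c^2 + 1) := min_le_right _ _
      have h2 : (0:ℝ) < C₁ * C₂ + c^2 + 1 := by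
        nlinarith [mul_nonneg hC₁0 hC₂pos.le, sq_nonneg c]
      have h3 : δ * (C₁ * C₂ + c^2 + 1) ≤ c^2 := by rw [← le_div_iff₀ h2]; exact h1
      have hP : 0 ≤ C₁ * C₂ := mul_nonneg hC₁0 hC₂pos.le
      have h3' : δ * (C₁ * C₂) + δ * c^2 + δ ≤ c^2 := by linear_combination h3
      have hδ1 : δ ≤ 1 := by
        by_contra hδ1
        push_neg at hδ1
        have h4 : 1 * c^2 < δ * c^2 := mul_lt_mul_of_pos_right hδ1 (pow_pos hcpos 2)
        have h5 : 0 ≤ δ * (C₁ * C₂) := mul_nonneg hδpos.le hP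
        linarith
      have h4 : δ * (C₁ * C₂) * δ ≤ δ * (C₁ * C₂) * 1 :=
        mul_le_mul_of_nonneg_left hδ1 (mul_nonneg hδpos.le hP)
      have e1 : C₁ * C₂ * δ^2 = δ * (C₁ * C₂) * δ := by ring
      have e2 : δ * (C₁ * C₂) * 1 = δ * (C₁ * C₂) := by ring
      have h5 : 0 ≤ δ * c^2 := mul_nonneg hδpos.le (sq_nonneg c)
      linarith
    have hgcontab : ContinuousOn g (Icc a (a+δ)) := by
      intro t ht
      have hjt : j t ≠ 0 := ne_of_gt (hjposab t (hsubab ht))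
      exact ((hgd t hjt).differentiableAt.continuousAt).continuousWithinAt
    obtain ⟨tm, htm, hmin⟩ := isCompact_Icc.exists_isMinOn
      (nonempty_Icc.mpr (by linarith : a ≤ a + δ)) (hfc.continuousOn : ContinuousOn f (Icc a (a+δ)))
    set m := f tm with hmdef
    have hm0 : 0 ≤ m := by
      by_contra hmc
      push_neg at hmc
      have hCm : C₁ * m ≤ 0 := hCm0 m hmc
      have hWlb : ∀ t ∈ Icc a (a+δ), C₁ * m * (t - a) ≤ W t - W a := by
        intro t ht
        have hmono2 : MonotoneOn (fun s => W s - C₁ * m * s) (Icc a t) := by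
          apply jacobiAux_mono (F' := fun s => (f'' s * j s - f s * j'' s) - C₁ * m)
          · intro s _
            exact (hW s).sub (by simpa using (hasDerivAt_id s).const_mul (C₁ * m))
          · intro s hs
            have hsab : s ∈ Icc a (a+δ) := Icc_subset_Icc le_rfl ht.2 hs
            have hsT : s ∈ Icc 0 T := ⟨le_trans ha.le hsab.1, le_trans hsab.2 haδT.le⟩
            have h1 := hH s hsT
            have h2 : C₁ * m ≤ ρ s * (j s * f s) := by
              rcases le_or_gt 0 (f s) with hfs | hfs
              · have h3 : 0 ≤ ρ s * (j s * f s) :=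
                  mul_nonneg (hρ0 s hsT) (mul_nonneg (hjposab s (hsubab hsab)).le hfs)
                linarith
              · have hmf : m ≤ f s := hmin hsab
                have e2 : C₁ * f s ≤ (ρ s * j s) * f s :=
                  mul_le_mul_of_nonpos_right (hC₁ s (hsubab hsab)) hfs.le
                have e3 : C₁ * m ≤ C₁ * f s := mul_le_mul_of_nonneg_left hmf hC₁0
                have e1 : ρ s * (j s * f s) = (ρ s * j s) * f s := by ring
                rw [e1]; linarith
            simp only [sub_nonneg]
            linarith
        have h2 := hmono2 (left_mem_Icc.mpr ht.1) (right_mem_Icc.mpr ht.1) ht.1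
        simp only at h2
        have h3 : C₁ * m * (t - a) = C₁ * m * t - C₁ * m * a := by ring
        linarith
      have hφmono : MonotoneOn (fun s => g s - (C₁ * m * δ / c^2) * s) (Icc a (a+δ)) := by
        apply monotoneOn_of_deriv_nonneg (convex_Icc _ _)
        · exact hgcontab.sub ((continuous_const.mul continuous_id).continuousOn)
        · intro s hs
          rw [interior_Icc] at hs
          have hjs : j s ≠ 0 := ne_of_gt (hjposab s (hsubab (Ioo_subset_Icc_self hs)))
          exact ((hgd s hjs).sub
            (by simpa using (hasDerivAt_id s).const_mul (C₁ * m * δ / c^2))).differentiableAt.differentiableWithinAt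
        · intro s hs
          rw [interior_Icc] at hs
          have hsmem : s ∈ Icc a (a+δ) := Ioo_subset_Icc_self hs
          have hjsp : 0 < j s := hjposab s (hsubab hsmem)
          have hd : HasDerivAt (fun x => g x - (C₁ * m * δ / c^2) * x)
              (W s / (j s)^2 - (C₁ * m * δ / c^2)) s :=
            (hgd s (ne_of_gt hjsp)).sub
              (by simpa using (hasDerivAt_id s).const_mul (C₁ * m * δ / c^2))
          rw [hd.deriv]
          have hWs : C₁ * m * δ ≤ W s := by
            have h1 := hWlb s hsmem
            have h2 : C₁ * m * δ ≤ C₁ * m * (s - a) :=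
              mul_le_mul_of_nonpos_left (by linarith [hsmem.2] : s - a ≤ δ) hCm
            linarith
          have h1 : C₁ * m * δ / c^2 ≤ W s / (j s)^2 := by
            rw [div_le_div_iff₀ (pow_pos hcpos 2) (pow_pos hjsp 2)]
            have hjsc : c ≤ j s := hminc (hsubab hsmem)
            have hc2 : c^2 ≤ (j s)^2 := pow_le_pow_left₀ hcpos.le hjsc 2
            have hCmδ : C₁ * m * δ ≤ 0 := mul_nonpos_iff.mpr (Or.inr ⟨hCm, hδpos.le⟩)
            have hA : C₁ * m * δ * (j s)^2 ≤ C₁ * m * δ * c^2 :=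
              mul_le_mul_of_nonpos_left hc2 hCmδ
            have hB : C₁ * m * δ * c^2 ≤ W s * c^2 :=
              mul_le_mul_of_nonneg_right hWs (sq_nonneg c)
            linarith
          linarith
      have hga : 0 ≤ g a := by
        have h1 : 0 ≤ f a := hfa a (right_mem_Icc.mpr ha.le)
        exact div_nonneg h1 (hjposab a (left_mem_Icc.mpr hab.le)).le
      have hφ := hφmono (left_mem_Icc.mpr (by linarith)) htm htm.1
      have hk0 : C₁ * m * δ / c^2 ≤ 0 :=
        div_nonpos_of_nonpos_of_nonneg (mul_nonpos_iff.mpr (Or.inr ⟨hCm, hδpos.le⟩)) (sq_nonneg c)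
      have hgtm : C₁ * m * δ / c^2 * (tm - a) ≤ g tm := by
        have he : C₁ * m * δ / c^2 * (tm - a)
            = C₁ * m * δ / c^2 * tm - C₁ * m * δ / c^2 * a := by ring
        rw [he]; simp only at hφ; linarith
      have hg1 : (C₁ * m * δ / c^2) * δ ≤ g tm :=
        le_trans (mul_le_mul_of_nonpos_left (by linarith [htm.2] : tm - a ≤ δ) hk0) hgtm
      have hjtm : 0 < j tm := hjposab tm (hsubab htm)
      have hftm : m = g tm * j tm := by rw [hmdef]; rw [hfg tm (ne_of_gt hjtm)]
      rcases le_or_gt 0 (g tm) with hgtm0 | hgtm0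
      · nlinarith [mul_nonneg hgtm0 hjtm.le]
      · have hjtmC : j tm ≤ C₂ := hmaxC (hsubab htm)
        have h6 : g tm * C₂ ≤ g tm * j tm := mul_le_mul_of_nonpos_left hjtmC hgtm0.le
        have h7 : (C₁ * m * δ / c^2 * δ) * C₂ ≤ g tm * C₂ :=
          mul_le_mul_of_nonneg_right hg1 hC₂pos.le
        have h5 : C₁ * m * δ / c^2 * δ * C₂ ≤ m := by linarith [hftm]
        have h10 : C₁ * m * δ / c^2 * δ * C₂ * c^2 ≤ m * c^2 :=
          mul_le_mul_of_nonneg_right h5 (sq_nonneg c)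
        have h9 : C₁ * m * δ / c^2 * δ * C₂ * c^2 = m * (C₁ * C₂ * δ^2) := by
          field_simp
        rw [h9] at h10
        have h11 := mul_lt_mul_of_neg_left hK hmc
        linarith
    refine ⟨δ, hδpos, haδT, fun s hs => ?_⟩
    rcases le_or_gt s a with h | h
    · exact hfa s ⟨hs.1, h⟩
    · exact le_trans hm0 (hmin ⟨h.le, hs.2⟩)
  -- continuous induction
  obtain ⟨δA, hδA0, hδAT, hA⟩ := stepA
  set B : Set ℝ := {t | t ∈ Icc 0 T ∧ ∀ s ∈ Icc 0 t, 0 ≤ f s} with hBdef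
  have hδAB : δA ∈ B := ⟨⟨hδA0.le, hδAT.le⟩, hA⟩
  have hBne : B.Nonempty := ⟨δA, hδAB⟩
  have hBbdd : BddAbove B := ⟨T, fun x hx => hx.1.2⟩
  set t₀ := sSup B with ht₀def
  have hδAt₀ : δA ≤ t₀ := le_csSup hBbdd hδAB
  have ht₀pos : 0 < t₀ := lt_of_lt_of_le hδA0 hδAt₀
  have ht₀T : t₀ ≤ T := csSup_le hBne (fun x hx => hx.1.2)
  have hIco : ∀ s ∈ Ico 0 t₀, 0 ≤ f s := by
    intro s hs
    obtain ⟨x, hxB, hsx⟩ := exists_lt_of_lt_csSup hBne hs.2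
    exact hxB.2 s ⟨hs.1, hsx.le⟩
  have ht₀f : 0 ≤ f t₀ := by
    have htend : Filter.Tendsto f (nhdsWithin t₀ (Iio t₀)) (nhds (f t₀)) :=
      (hfc.continuousAt).continuousWithinAt
    refine ge_of_tendsto htend ?_
    have h1 : Ioo 0 t₀ ∈ nhdsWithin t₀ (Iio t₀) := by
      rw [mem_nhdsWithin]
      exact ⟨Ioi 0, isOpen_Ioi, ht₀pos, fun x hx => ⟨hx.1, hx.2⟩⟩
    filter_upwards [h1] with s hs
    exact hIco s ⟨hs.1.le, hs.2⟩
  have ht₀B : t₀ ∈ B := by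
    refine ⟨⟨ht₀pos.le, ht₀T⟩, fun s hs => ?_⟩
    rcases eq_or_lt_of_le hs.2 with h | h
    · rw [h]; exact ht₀f
    · exact hIco s ⟨hs.1, h⟩
  rcases eq_or_lt_of_le ht₀T with h | h
  · intro t ht
    exact ht₀B.2 t (by rw [h]; exact ht)
  · obtain ⟨δ, hδ0, hδT2, hall⟩ := stepB t₀ ht₀pos h ht₀B.2
    have hmem : t₀ + δ ∈ B := ⟨⟨by linarith, hδT2.le⟩, hall⟩
    intro t ht
    exfalso
    have := le_csSup hBbdd hmem
    linarith


lemma jacobi_mid_ge_min (a b c : ℝ) :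
    min a (min b c) ≤ a + b + c - max a (max b c) - min a (min b c) := by
  rcases max_cases b c with ⟨h1, h2⟩ | ⟨h1, h2⟩ <;>
    rcases min_cases b c with ⟨h3, h4⟩ | ⟨h3, h4⟩ <;>
    rcases max_cases a (max b c) with ⟨h5, h6⟩ | ⟨h5, h6⟩ <;>
    rcases min_cases a (min b c) with ⟨h7, h8⟩ | ⟨h7, h8⟩ <;>
    linarith

lemma jacobi_shuffle_sorted (ka kb kc Ja Jb Jc Jmax Jmid Jmin jm : ℝ)
    (hab : kb ≤ ka) (hbc : kc ≤ kb) (hjm : 0 ≤ jm) (hJa : Ja ≤ Jmax) (hJc : Jmin ≤ Jc) :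
    (kb - kc) * (jm * (Jmax + Jmid + Jmin - (Ja + Jb + Jc))) ≤
      (ka * Jmax + kb * Jmid + kc * Jmin - (ka * Ja + kb * Jb + kc * Jc)) * jm
        - (Jmax + Jmid + Jmin - (Ja + Jb + Jc)) * (kc * jm) := by
  nlinarith [mul_nonneg hjm (mul_nonneg (sub_nonneg.mpr hab) (sub_nonneg.mpr hJa)),
             mul_nonneg hjm (mul_nonneg (sub_nonneg.mpr hbc) (sub_nonneg.mpr hJc))]

lemma jacobi_shuffle_alg (k1 k2 k3 kM kd km J1 J2 J3 Jmax Jmid Jmin jm : ℝ)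
    (hkM : kM = max k1 (max k2 k3)) (hkm : km = min k1 (min k2 k3))
    (hkd : kd = k1 + k2 + k3 - kM - km)
    (hjm : 0 ≤ jm)
    (h1 : J1 ≤ Jmax) (h2 : J2 ≤ Jmax) (h3 : J3 ≤ Jmax)
    (g1 : Jmin ≤ J1) (g2 : Jmin ≤ J2) (g3 : Jmin ≤ J3) :
    (kd - km) * (jm * (Jmax + Jmid + Jmin - (J1 + J2 + J3))) ≤
      (kM * Jmax + kd * Jmid + km * Jmin - (k1 * J1 + k2 * J2 + k3 * J3)) * jm
        - (Jmax + Jmid + Jmin - (J1 + J2 + J3)) * (km * jm) := by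
  rcases le_total k1 k2 with h12 | h12
  · rcases le_total k2 k3 with h23 | h23
    · -- k1 ≤ k2 ≤ k3 : sorted (k3, k2, k1)
      have hM : kM = k3 := by rw [hkM, max_eq_right h23, max_eq_right (h12.trans h23)]
      have hm : km = k1 := by rw [hkm, min_eq_left h23, min_eq_left h12]
      subst hkd
      rw [hM, hm]
      nlinarith [jacobi_shuffle_sorted k3 k2 k1 J3 J2 J1 Jmax Jmid Jmin jm h23 h12 hjm h3 g1]
    · rcases le_total k1 k3 with h13 | h13
      · -- k1 ≤ k3 ≤ k2 : sorted (k2, k3, k1)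
        have hM : kM = k2 := by rw [hkM, max_eq_left h23, max_eq_right h12]
        have hm : km = k1 := by rw [hkm, min_eq_right h23, min_eq_left h13]
        subst hkd
        rw [hM, hm]
        nlinarith [jacobi_shuffle_sorted k2 k3 k1 J2 J3 J1 Jmax Jmid Jmin jm h23 h13 hjm h2 g1]
      · -- k3 ≤ k1 ≤ k2 : sorted (k2, k1, k3)
        have hM : kM = k2 := by rw [hkM, max_eq_left h23, max_eq_right h12]
        have hm : km = k3 := by rw [hkm, min_eq_right h23, min_eq_right h13]
        subst hkd
        rw [hM, hm]
        nlinarith [jacobi_shuffle_sorted k2 k1 k3 J2 J1 J3 Jmax Jmid Jmin jm h12 h13 hjm h2 g3]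
  · rcases le_total k2 k3 with h23 | h23
    · rcases le_total k1 k3 with h13 | h13
      · -- k2 ≤ k1 ≤ k3 : sorted (k3, k1, k2)
        have hM : kM = k3 := by rw [hkM, max_eq_right h23, max_eq_right h13]
        have hm : km = k2 := by rw [hkm, min_eq_left h23, min_eq_right h12]
        subst hkd
        rw [hM, hm]
        nlinarith [jacobi_shuffle_sorted k3 k1 k2 J3 J1 J2 Jmax Jmid Jmin jm h13 h12 hjm h3 g2]
      · -- k2 ≤ k3 ≤ k1 : sorted (k1, k3, k2)
        have hM : kM = k1 := by rw [hkM]; exact max_eq_left (max_le h12 h13)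
        have hm : km = k2 := by rw [hkm, min_eq_left h23, min_eq_right h12]
        subst hkd
        rw [hM, hm]
        nlinarith [jacobi_shuffle_sorted k1 k3 k2 J1 J3 J2 Jmax Jmid Jmin jm h13 h23 hjm h1 g2]
    · -- k3 ≤ k2 ≤ k1 : sorted (k1, k2, k3)
      have hM : kM = k1 := by rw [hkM, max_eq_left h23, max_eq_left h12]
      have hm : km = k3 := by rw [hkm, min_eq_right h23, min_eq_right (h23.trans h12)]
      subst hkd
      rw [hM, hm]
      nlinarith [jacobi_shuffle_sorted k1 k2 k3 J1 J2 J3 Jmax Jmid Jmin jm h12 h23 hjm h1 g3]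

/-- **Shuffling lemma for three trajectories.**
With `κ_max, κ_mid, κ_min` being the pointwise nonincreasing rearrangement of
`κ₁, κ₂, κ₃` (so `κ_max` is the pointwise maximum, `κ_min` the pointwise minimum, and
`κ_mid` the pointwise median, i.e. the remaining value `κ₁ + κ₂ + κ₃ − κ_max − κ_min`),
and standard Jacobi solutions `j₁, j₂, j₃, j_max, j_mid, j_min` for the six schedules on
`[0, T]`, if `j_min > 0` on `(0, T)` then
`j_max + j_mid + j_min ≥ j₁ + j₂ + j₃` on `[0, T]`. -/
theorem jacobi_shuffling_three
    (T : ℝ) (hT : 0 < T) (κ₁ κ₂ κ₃ κmax κmid κmin : ℝ → ℝ)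
    (j₁ j₂ j₃ jmax jmid jmin : ℝ → ℝ)
    (hκ₁ : Continuous κ₁) (hκ₂ : Continuous κ₂) (hκ₃ : Continuous κ₃)
    (hκmax : ∀ t, κmax t = max (κ₁ t) (max (κ₂ t) (κ₃ t)))
    (hκmin : ∀ t, κmin t = min (κ₁ t) (min (κ₂ t) (κ₃ t)))
    (hκmid : ∀ t, κmid t = κ₁ t + κ₂ t + κ₃ t - κmax t - κmin t)
    (hj₁ : ContDiff ℝ 2 j₁) (hj₂ : ContDiff ℝ 2 j₂) (hj₃ : ContDiff ℝ 2 j₃)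
    (hjmax : ContDiff ℝ 2 jmax) (hjmid : ContDiff ℝ 2 jmid) (hjmin : ContDiff ℝ 2 jmin)
    (heq₁ : ∀ t ∈ Set.Icc (0 : ℝ) T, deriv (deriv j₁) t = κ₁ t * j₁ t)
    (heq₂ : ∀ t ∈ Set.Icc (0 : ℝ) T, deriv (deriv j₂) t = κ₂ t * j₂ t)
    (heq₃ : ∀ t ∈ Set.Icc (0 : ℝ) T, deriv (deriv j₃) t = κ₃ t * j₃ t)
    (heqmax : ∀ t ∈ Set.Icc (0 : ℝ) T, deriv (deriv jmax) t = κmax t * jmax t)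
    (heqmid : ∀ t ∈ Set.Icc (0 : ℝ) T, deriv (deriv jmid) t = κmid t * jmid t)
    (heqmin : ∀ t ∈ Set.Icc (0 : ℝ) T, deriv (deriv jmin) t = κmin t * jmin t)
    (h₁0 : j₁ 0 = 0) (h₁0' : deriv j₁ 0 = 1)
    (h₂0 : j₂ 0 = 0) (h₂0' : deriv j₂ 0 = 1)
    (h₃0 : j₃ 0 = 0) (h₃0' : deriv j₃ 0 = 1)
    (hmax0 : jmax 0 = 0) (hmax0' : deriv jmax 0 = 1)
    (hmid0 : jmid 0 = 0) (hmid0' : deriv jmid 0 = 1)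
    (hmin0 : jmin 0 = 0) (hmin0' : deriv jmin 0 = 1)
    (hpos : ∀ t ∈ Set.Ioo (0 : ℝ) T, 0 < jmin t) :
    ∀ t ∈ Set.Icc (0 : ℝ) T, j₁ t + j₂ t + j₃ t ≤ jmax t + jmid t + jmin t := by
  -- derivative packages
  have pack : ∀ (u : ℝ → ℝ), ContDiff ℝ 2 u →
      (∀ t, HasDerivAt u (deriv u t) t) ∧
      (∀ t, HasDerivAt (deriv u) (deriv (deriv u) t) t) := by
    intro u hu
    have hu' : ContDiff ℝ ((1:ℕ)+1) u := by exact_mod_cast hu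
    have h1 : Differentiable ℝ u := hu.differentiable (by norm_num)
    have h2 := (contDiff_succ_iff_deriv.mp hu').2.2
    exact ⟨fun t => (h1 t).hasDerivAt,
      fun t => ((h2.differentiable (by norm_num)) t).hasDerivAt⟩
  obtain ⟨d1, d1'⟩ := pack j₁ hj₁
  obtain ⟨d2, d2'⟩ := pack j₂ hj₂
  obtain ⟨d3, d3'⟩ := pack j₃ hj₃
  obtain ⟨dmax, dmax'⟩ := pack jmax hjmax
  obtain ⟨dmid, dmid'⟩ := pack jmid hjmid
  obtain ⟨dmin, dmin'⟩ := pack jmin hjmin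
  -- continuity of the rearranged schedules
  have cmax : Continuous κmax := by
    have h : κmax = fun t => max (κ₁ t) (max (κ₂ t) (κ₃ t)) := funext hκmax
    rw [h]; exact hκ₁.max (hκ₂.max hκ₃)
  have cmin : Continuous κmin := by
    have h : κmin = fun t => min (κ₁ t) (min (κ₂ t) (κ₃ t)) := funext hκmin
    rw [h]; exact hκ₁.min (hκ₂.min hκ₃)
  have cmid : Continuous κmid := by
    have h : κmid = fun t => κ₁ t + κ₂ t + κ₃ t - κmax t - κmin t := funext hκmid
    rw [h]; exact (((hκ₁.add hκ₂).add hκ₃).sub cmax).sub cmin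
  -- pointwise schedule comparisons
  have hk1M : ∀ t, κ₁ t ≤ κmax t := fun t => by rw [hκmax t]; exact le_max_left _ _
  have hk2M : ∀ t, κ₂ t ≤ κmax t := fun t => by
    rw [hκmax t]; exact le_trans (le_max_left _ _) (le_max_right _ _)
  have hk3M : ∀ t, κ₃ t ≤ κmax t := fun t => by
    rw [hκmax t]; exact le_trans (le_max_right _ _) (le_max_right _ _)
  have hk1m : ∀ t, κmin t ≤ κ₁ t := fun t => by rw [hκmin t]; exact min_le_left _ _
  have hk2m : ∀ t, κmin t ≤ κ₂ t := fun t => by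
    rw [hκmin t]; exact le_trans (min_le_right _ _) (min_le_left _ _)
  have hk3m : ∀ t, κmin t ≤ κ₃ t := fun t => by
    rw [hκmin t]; exact le_trans (min_le_right _ _) (min_le_right _ _)
  have hkMm : ∀ t, κmin t ≤ κmax t := fun t => le_trans (hk1m t) (hk1M t)
  have hkdm : ∀ t, κmin t ≤ κmid t := fun t => by
    rw [hκmid t, hκmax t, hκmin t]
    exact jacobi_mid_ge_min _ _ _
  -- jmin is nonnegative on [0,T]
  have jminnn : ∀ t ∈ Icc (0:ℝ) T, 0 ≤ jmin t := by
    intro t ht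
    rcases eq_or_lt_of_le ht.1 with h0 | h0
    · rw [← h0, hmin0]
    · have hcont : Filter.Tendsto jmin (nhdsWithin t (Ioo 0 t)) (nhds (jmin t)) :=
        (hjmin.continuous.continuousAt).continuousWithinAt
      have hne : (nhdsWithin t (Ioo 0 t)).NeBot := by
        apply mem_closure_iff_nhdsWithin_neBot.mp
        rw [closure_Ioo h0.ne]
        exact ⟨h0.le, le_rfl⟩
      refine ge_of_tendsto hcont ?_
      filter_upwards [self_mem_nhdsWithin] with s hs
      exact (hpos s ⟨hs.1, lt_of_lt_of_le hs.2 ht.2⟩).le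
  -- Step I : every solution dominates jmin
  have Astep : ∀ (u κu : ℝ → ℝ), (∀ t, HasDerivAt u (deriv u t) t) →
      (∀ t, HasDerivAt (deriv u) (deriv (deriv u) t) t) → Continuous κu →
      (∀ t, κmin t ≤ κu t) →
      (∀ t ∈ Icc (0:ℝ) T, deriv (deriv u) t = κu t * u t) →
      u 0 = 0 → deriv u 0 = 1 →
      ∀ t ∈ Icc (0:ℝ) T, jmin t ≤ u t := by
    intro u κu hdu hdu' hκu hcmp hequ hu0 hu0'
    refine fun t ht => sub_nonneg.mp (jacobi_core T hT jmin
      (fun s => u s - jmin s) (fun s => κu s - κmin s)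
      (deriv jmin) (deriv (deriv jmin))
      (fun s => deriv u s - deriv jmin s)
      (fun s => deriv (deriv u) s - deriv (deriv jmin) s)
      dmin dmin'
      (fun s => (hdu s).sub (dmin s))
      (fun s => (hdu' s).sub (dmin' s))
      (hκu.sub cmin)
      (fun s _ => sub_nonneg.mpr (hcmp s))
      hmin0 hmin0' hpos
      (by simp [hu0, hmin0])
      (by simp [hu0', hmin0'])
      ?_ t ht)
    intro s hs
    rw [hequ s hs, heqmin s hs]
    have e3 := jminnn s hs
    have e4 := hcmp s
    nlinarith [mul_nonneg (sub_nonneg.mpr e4) (mul_nonneg e3 e3)]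
  have h1min := Astep j₁ κ₁ d1 d1' hκ₁ hk1m heq₁ h₁0 h₁0'
  have h2min := Astep j₂ κ₂ d2 d2' hκ₂ hk2m heq₂ h₂0 h₂0'
  have h3min := Astep j₃ κ₃ d3 d3' hκ₃ hk3m heq₃ h₃0 h₃0'
  have hMmin := Astep jmax κmax dmax dmax' cmax hkMm heqmax hmax0 hmax0'
  have hmaxnn : ∀ t ∈ Icc (0:ℝ) T, 0 ≤ jmax t :=
    fun t ht => le_trans (jminnn t ht) (hMmin t ht)
  -- Step II : jmax dominates every solution
  have Bstep : ∀ (u κu : ℝ → ℝ), (∀ t, HasDerivAt u (deriv u t) t) →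
      (∀ t, HasDerivAt (deriv u) (deriv (deriv u) t) t) → Continuous κu →
      (∀ t, κmin t ≤ κu t) → (∀ t, κu t ≤ κmax t) →
      (∀ t ∈ Icc (0:ℝ) T, deriv (deriv u) t = κu t * u t) →
      u 0 = 0 → deriv u 0 = 1 →
      ∀ t ∈ Icc (0:ℝ) T, u t ≤ jmax t := by
    intro u κu hdu hdu' hκu hcmp hcmpM hequ hu0 hu0'
    refine fun t ht => sub_nonneg.mp (jacobi_core T hT jmin
      (fun s => jmax s - u s) (fun s => κu s - κmin s)
      (deriv jmin) (deriv (deriv jmin))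
      (fun s => deriv jmax s - deriv u s)
      (fun s => deriv (deriv jmax) s - deriv (deriv u) s)
      dmin dmin'
      (fun s => (dmax s).sub (hdu s))
      (fun s => (dmax' s).sub (hdu' s))
      (hκu.sub cmin)
      (fun s _ => sub_nonneg.mpr (hcmp s))
      hmin0 hmin0' hpos
      (by simp [hu0, hmax0])
      (by simp [hu0', hmax0'])
      ?_ t ht)
    intro s hs
    rw [heqmax s hs, hequ s hs, heqmin s hs]
    have e3 := jminnn s hs
    have e5 := hmaxnn s hs
    have e6 := hcmpM s
    nlinarith [mul_nonneg (mul_nonneg e3 (sub_nonneg.mpr e6)) e5]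
  have h1M := Bstep j₁ κ₁ d1 d1' hκ₁ hk1m hk1M heq₁ h₁0 h₁0'
  have h2M := Bstep j₂ κ₂ d2 d2' hκ₂ hk2m hk2M heq₂ h₂0 h₂0'
  have h3M := Bstep j₃ κ₃ d3 d3' hκ₃ hk3m hk3M heq₃ h₃0 h₃0'
  -- Final application
  intro t ht
  have hfin := jacobi_core T hT jmin
    (fun s => jmax s + jmid s + jmin s - (j₁ s + j₂ s + j₃ s))
    (fun s => κmid s - κmin s)
    (deriv jmin) (deriv (deriv jmin))
    (fun s => deriv jmax s + deriv jmid s + deriv jmin s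
      - (deriv j₁ s + deriv j₂ s + deriv j₃ s))
    (fun s => deriv (deriv jmax) s + deriv (deriv jmid) s + deriv (deriv jmin) s
      - (deriv (deriv j₁) s + deriv (deriv j₂) s + deriv (deriv j₃) s))
    dmin dmin'
    (fun s => (((dmax s).add (dmid s)).add (dmin s)).sub (((d1 s).add (d2 s)).add (d3 s)))
    (fun s => (((dmax' s).add (dmid' s)).add (dmin' s)).sub (((d1' s).add (d2' s)).add (d3' s)))
    (cmid.sub cmin)
    (fun s _ => sub_nonneg.mpr (hkdm s))
    hmin0 hmin0' hpos
    (by simp [hmax0, hmid0, hmin0, h₁0, h₂0, h₃0])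
    (by simp [hmax0', hmid0', hmin0', h₁0', h₂0', h₃0'])
    ?_ t ht
  · linarith [hfin]
  · intro s hs
    rw [heqmax s hs, heqmid s hs, heqmin s hs, heq₁ s hs, heq₂ s hs, heq₃ s hs]
    exact jacobi_shuffle_alg (κ₁ s) (κ₂ s) (κ₃ s) (κmax s) (κmid s) (κmin s)
      (j₁ s) (j₂ s) (j₃ s) (jmax s) (jmid s) (jmin s) (jmin s)
      (hκmax s) (hκmin s) (hκmid s) (jminnn s hs)
      (h1M s hs) (h2M s hs) (h3M s hs)
      (h1min s hs) (h2min s hs) (h3min s hs)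
end

section
/- Monotonicity of sn in its curvature argument: For every fixed t ≥ 0 and all real numbers k₁ ≤ k₂, one has sn(k₁, t) ≥ sn(k₂, t). -/
/-- The function `sn(k, t)`: the standard Jacobi solution of `j'' = -k·j`,
truncated at its first positive zero. -/
noncomputable def sn (k t : ℝ) : ℝ :=
  if 0 < k then
    if t ≤ Real.pi / Real.sqrt k then Real.sin (Real.sqrt k * t) / Real.sqrt k else 0
  else if k = 0 then t
  else Real.sinh (Real.sqrt (-k) * t) / Real.sqrt (-k)

/-!
Both `sin x / x` (on `(0, π]`, by concavity of `sin`) and `sinh x / x` (on `(0, ∞)`, by convexity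
of `sinh`) are secant slopes through the origin, hence monotone; since
`sin (c t) / c = t · (sin (c t) / (c t))`, this gives monotonicity of `sn` in `k` on each side of
`0`. Across `0` one compares with `sn 0 t = t`, and beyond the truncation point `sn k t = 0`
lies below every `sn k' t ≥ 0`.
-/

open Real Set

lemma Real.convexOn_sinh_Ici : ConvexOn ℝ (Ici 0) sinh := by
  refine MonotoneOn.convexOn_of_deriv (convex_Ici 0) continuous_sinh.continuousOn
    differentiable_sinh.differentiableOn ?_
  intro x hx y hy hxy
  rw [interior_Ici, mem_Ioi] at hx hy
  simpa [cosh_le_cosh, abs_of_pos hx, abs_of_pos hy] using hxy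

lemma Real.sinh_div_self_monotoneOn : MonotoneOn (fun x => sinh x / x) (Ioi 0) := by
  intro x hx y hy hxy
  simpa using convexOn_sinh_Ici.secant_mono self_mem_Ici (mem_Ici.2 (le_of_lt hx))
    (mem_Ici.2 (le_of_lt hy)) (ne_of_gt hx) (ne_of_gt hy) hxy

lemma Real.sin_div_self_antitoneOn : AntitoneOn (fun x => sin x / x) (Ioc 0 π) := by
  intro x hx y hy hxy
  have h := strictConcaveOn_sin_Icc.concaveOn.neg.secant_mono (a := 0) ⟨le_rfl, pi_pos.le⟩
    (Ioc_subset_Icc_self hx) (Ioc_subset_Icc_self hy) hx.1.ne' hy.1.ne' hxy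
  simp only [Pi.neg_apply, sin_zero, neg_zero, sub_zero, neg_div] at h
  exact neg_le_neg_iff.1 h

lemma Real.sinh_mul_div_le {a b t : ℝ} (ha : 0 < a) (hab : a ≤ b) (ht : 0 ≤ t) :
    sinh (a * t) / a ≤ sinh (b * t) / b := by
  rcases ht.eq_or_lt with rfl | ht
  · simp
  have hb := ha.trans_le hab
  calc sinh (a * t) / a = t * (sinh (a * t) / (a * t)) := by field_simp
    _ ≤ t * (sinh (b * t) / (b * t)) := by
      gcongr t * ?_
      exact sinh_div_self_monotoneOn (mul_pos ha ht) (mul_pos hb ht) (by gcongr)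
    _ = sinh (b * t) / b := by field_simp

lemma Real.sin_mul_div_le {a b t : ℝ} (ha : 0 < a) (hab : a ≤ b) (ht : 0 ≤ t) (hbt : b * t ≤ π) :
    sin (b * t) / b ≤ sin (a * t) / a := by
  rcases ht.eq_or_lt with rfl | ht
  · simp
  have hb := ha.trans_le hab
  have hat : a * t ≤ b * t := by gcongr
  calc sin (b * t) / b = t * (sin (b * t) / (b * t)) := by field_simp
    _ ≤ t * (sin (a * t) / (a * t)) := by
      gcongr t * ?_
      exact sin_div_self_antitoneOn ⟨mul_pos ha ht, hat.trans hbt⟩ ⟨mul_pos hb ht, hbt⟩ hat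
    _ = sin (a * t) / a := by field_simp

lemma sn_zero_left (t : ℝ) : sn 0 t = t := by
  simp [sn]

lemma sn_of_neg {k : ℝ} (hk : k < 0) (t : ℝ) : sn k t = sinh (√(-k) * t) / √(-k) := by
  simp [sn, hk.not_gt, hk.ne]

lemma sn_of_pos_of_le {k t : ℝ} (hk : 0 < k) (ht : t ≤ π / √k) :
    sn k t = sin (√k * t) / √k := by
  simp [sn, hk, ht]

lemma sn_of_pos_of_lt {k t : ℝ} (hk : 0 < k) (ht : π / √k < t) : sn k t = 0 := by
  simp [sn, hk, ht.not_ge]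

lemma sn_nonneg (k : ℝ) {t : ℝ} (ht : 0 ≤ t) : 0 ≤ sn k t := by
  rcases lt_trichotomy k 0 with hk | rfl | hk
  · rw [sn_of_neg hk]
    exact div_nonneg (sinh_nonneg_iff.2 (by positivity)) (sqrt_nonneg _)
  · rwa [sn_zero_left]
  · rcases le_or_gt t (π / √k) with hkt | hkt
    · rw [sn_of_pos_of_le hk hkt]
      have hc : 0 < √k := sqrt_pos.2 hk
      exact div_nonneg (sin_nonneg_of_nonneg_of_le_pi (by positivity)
        ((le_div_iff₀' hc).1 hkt)) hc.le
    · rw [sn_of_pos_of_lt hk hkt]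

lemma sn_le_self {k t : ℝ} (hk : 0 ≤ k) (ht : 0 ≤ t) : sn k t ≤ t := by
  rcases hk.eq_or_lt with rfl | hk
  · rw [sn_zero_left]
  rcases le_or_gt t (π / √k) with hkt | hkt
  · have hc : 0 < √k := sqrt_pos.2 hk
    rw [sn_of_pos_of_le hk hkt, div_le_iff₀ hc, mul_comm t]
    exact sin_le (by positivity)
  · rwa [sn_of_pos_of_lt hk hkt]

lemma self_le_sn {k t : ℝ} (hk : k ≤ 0) (ht : 0 ≤ t) : t ≤ sn k t := by
  rcases hk.eq_or_lt with rfl | hk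
  · rw [sn_zero_left]
  have hc : 0 < √(-k) := sqrt_pos.2 (neg_pos.2 hk)
  rw [sn_of_neg hk, le_div_iff₀ hc, mul_comm t]
  exact self_le_sinh_iff.2 (by positivity)

lemma sn_antitoneOn_Iio {t : ℝ} (ht : 0 ≤ t) : AntitoneOn (sn · t) (Iio 0) := by
  intro k₁ hk₁ k₂ hk₂ hk
  simp only [sn_of_neg hk₁, sn_of_neg hk₂]
  exact sinh_mul_div_le (sqrt_pos.2 (neg_pos.2 hk₂)) (sqrt_le_sqrt (neg_le_neg hk)) ht

lemma sn_antitoneOn_Ioi {t : ℝ} (ht : 0 ≤ t) : AntitoneOn (sn · t) (Ioi 0) := by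
  intro k₁ hk₁ k₂ hk₂ hk
  rcases le_or_gt t (π / √k₂) with hk₂t | hk₂t
  · have hc : √k₁ ≤ √k₂ := sqrt_le_sqrt hk
    have hk₁t : t ≤ π / √k₁ := hk₂t.trans (by gcongr; exact sqrt_pos.2 hk₁)
    simp only [sn_of_pos_of_le hk₁ hk₁t, sn_of_pos_of_le hk₂ hk₂t]
    exact sin_mul_div_le (sqrt_pos.2 hk₁) hc ht ((le_div_iff₀' (sqrt_pos.2 hk₂)).1 hk₂t)
  · simp only [sn_of_pos_of_lt hk₂ hk₂t]
    exact sn_nonneg k₁ ht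

/-- **Monotonicity of `sn` in its curvature argument.**
For every fixed `t ≥ 0` and all `k₁ ≤ k₂`, one has `sn(k₁, t) ≥ sn(k₂, t)`. -/
theorem sn_antitone_in_curvature (t : ℝ) (ht : 0 ≤ t) (k₁ k₂ : ℝ) (hk : k₁ ≤ k₂) :
    sn k₂ t ≤ sn k₁ t := by
  rcases lt_or_ge k₂ 0 with hk₂ | hk₂
  · exact sn_antitoneOn_Iio ht (hk.trans_lt hk₂) hk₂ hk
  rcases lt_or_ge 0 k₁ with hk₁ | hk₁
  · exact sn_antitoneOn_Ioi ht hk₁ (hk₁.trans_le hk) hk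
  · exact (sn_le_self hk₂ ht).trans (self_le_sn hk₁ ht)
end

section
/- Logarithmic-derivative monotonicity of sn: Let k₁ ≤ k₂ be real numbers and let t > 0 satisfy t < π/√k₂ whenever k₂ > 0 (so that sn(k₁,t) > 0 and sn(k₂,t) > 0). Then sn(k₂, t) · ∂_t sn(k₁, t) ≥ sn(k₁, t) · ∂_t sn(k₂, t), i.e. the logarithmic time-derivative of sn(k₁,·) at t is at least that of sn(k₂,·). -/
/-- Untruncated Jacobi solution. -/
noncomputable def snAux (k s : ℝ) : ℝ :=
  if 0 < k then Real.sin (Real.sqrt k * s) / Real.sqrt k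
  else if k = 0 then s
  else Real.sinh (Real.sqrt (-k) * s) / Real.sqrt (-k)

/-- Derivative of the untruncated Jacobi solution. -/
noncomputable def snAux' (k s : ℝ) : ℝ :=
  if 0 < k then Real.cos (Real.sqrt k * s)
  else if k = 0 then 1
  else Real.cosh (Real.sqrt (-k) * s)

lemma hasDerivAt_snAux (k s : ℝ) : HasDerivAt (snAux k) (snAux' k s) s := by
  have hlin : ∀ a : ℝ, HasDerivAt (fun s : ℝ => a * s) a s := fun a => by
    simpa using (hasDerivAt_id s).const_mul a
  rcases lt_trichotomy 0 k with hk | hk | hk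
  · have ha : Real.sqrt k ≠ 0 := ne_of_gt (Real.sqrt_pos.mpr hk)
    have hfun : snAux k = fun s => Real.sin (Real.sqrt k * s) / Real.sqrt k := by
      funext s; simp [snAux, hk]
    have hc : snAux' k s = Real.cos (Real.sqrt k * s) := by simp [snAux', hk]
    rw [hfun, hc]
    have h := ((hlin (Real.sqrt k)).sin).div_const (Real.sqrt k)
    simpa [mul_div_assoc, div_self ha] using h
  · subst hk
    have hfun : snAux 0 = fun s : ℝ => s := by funext s; simp [snAux]
    have hc : snAux' 0 s = 1 := by simp [snAux']
    rw [hfun, hc]; exact hasDerivAt_id s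
  · have hk' : ¬ 0 < k := not_lt.mpr hk.le
    have hk0 : k ≠ 0 := ne_of_lt hk
    have ha : Real.sqrt (-k) ≠ 0 := ne_of_gt (Real.sqrt_pos.mpr (by linarith))
    have hfun : snAux k = fun s => Real.sinh (Real.sqrt (-k) * s) / Real.sqrt (-k) := by
      funext s; simp [snAux, hk', hk0]
    have hc : snAux' k s = Real.cosh (Real.sqrt (-k) * s) := by simp [snAux', hk', hk0]
    rw [hfun, hc]
    have h := ((hlin (Real.sqrt (-k))).sinh).div_const (Real.sqrt (-k))
    simpa [mul_div_assoc, div_self ha] using h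

lemma hasDerivAt_snAux' (k s : ℝ) : HasDerivAt (snAux' k) (-k * snAux k s) s := by
  have hlin : ∀ a : ℝ, HasDerivAt (fun s : ℝ => a * s) a s := fun a => by
    simpa using (hasDerivAt_id s).const_mul a
  rcases lt_trichotomy 0 k with hk | hk | hk
  · have ha : Real.sqrt k ≠ 0 := ne_of_gt (Real.sqrt_pos.mpr hk)
    have hsq : Real.sqrt k * Real.sqrt k = k := Real.mul_self_sqrt hk.le
    have hfun : snAux' k = fun s => Real.cos (Real.sqrt k * s) := by
      funext s; simp [snAux', hk]
    have hc : -k * snAux k s = -Real.sin (Real.sqrt k * s) * Real.sqrt k := by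
      simp only [snAux, if_pos hk]
      field_simp
      linear_combination (Real.sin (Real.sqrt k * s)) * hsq
    rw [hfun, hc]
    exact (hlin (Real.sqrt k)).cos
  · subst hk
    have hfun : snAux' 0 = fun _ : ℝ => (1:ℝ) := by funext s; simp [snAux']
    rw [hfun]
    simpa using hasDerivAt_const s (1:ℝ)
  · have hk' : ¬ 0 < k := not_lt.mpr hk.le
    have hk0 : k ≠ 0 := ne_of_lt hk
    have ha : Real.sqrt (-k) ≠ 0 := ne_of_gt (Real.sqrt_pos.mpr (by linarith))
    have hsq : Real.sqrt (-k) * Real.sqrt (-k) = -k := Real.mul_self_sqrt (by linarith)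
    have hfun : snAux' k = fun s => Real.cosh (Real.sqrt (-k) * s) := by
      funext s; simp [snAux', hk', hk0]
    have hc : -k * snAux k s = Real.sinh (Real.sqrt (-k) * s) * Real.sqrt (-k) := by
      simp only [snAux, if_neg hk', if_neg hk0]
      rw [← hsq]; field_simp; rw [Real.sqrt_sq (Real.sqrt_nonneg _)]
    rw [hfun, hc]
    exact (hlin (Real.sqrt (-k))).cosh

lemma snAux_nonneg (k t : ℝ) (ht : 0 ≤ t) (htk : 0 < k → t ≤ Real.pi / Real.sqrt k)
    {s : ℝ} (hs : s ∈ Set.Icc (0:ℝ) t) : 0 ≤ snAux k s := by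
  rcases lt_trichotomy 0 k with hk | hk | hk
  · have ha : 0 < Real.sqrt k := Real.sqrt_pos.mpr hk
    simp only [snAux, if_pos hk]
    apply div_nonneg _ ha.le
    apply Real.sin_nonneg_of_nonneg_of_le_pi
    · exact mul_nonneg ha.le hs.1
    · have h1 : Real.sqrt k * t ≤ Real.pi := by
        have := htk hk
        rw [le_div_iff₀ ha] at this
        linarith
      nlinarith [hs.2]
  · subst hk
    simpa [snAux] using hs.1
  · have hk' : ¬ 0 < k := not_lt.mpr hk.le
    have hk0 : k ≠ 0 := ne_of_lt hk
    have ha : 0 < Real.sqrt (-k) := Real.sqrt_pos.mpr (by linarith)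
    simp only [snAux, if_neg hk', if_neg hk0]
    exact div_nonneg ((by simpa using Real.sinh_le_sinh.mpr (mul_nonneg ha.le hs.1) : (0:ℝ) ≤ Real.sinh (Real.sqrt (-k) * s))) ha.le

lemma snAux_zero (k : ℝ) : snAux k 0 = 0 := by
  unfold snAux; split_ifs <;> simp

/-- **Logarithmic-derivative monotonicity of `sn`.**
For `k₁ ≤ k₂` and `t > 0` with `t < π/√k₂` whenever `k₂ > 0` (so that both
`sn(k₁, t) > 0` and `sn(k₂, t) > 0`), the logarithmic time-derivative of `sn(k₁, ·)`
at `t` is at least that of `sn(k₂, ·)`: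
`sn(k₂, t) · ∂ₜ sn(k₁, t) ≥ sn(k₁, t) · ∂ₜ sn(k₂, t)`. -/
theorem sn_logderiv_antitone_in_curvature (k₁ k₂ : ℝ) (hk : k₁ ≤ k₂) (t : ℝ) (ht : 0 < t)
    (ht₂ : 0 < k₂ → t < Real.pi / Real.sqrt k₂) :
    sn k₁ t * deriv (fun s => sn k₂ s) t ≤ sn k₂ t * deriv (fun s => sn k₁ s) t := by
  -- t < π/√k₁ when 0 < k₁
  have ht₁ : 0 < k₁ → t < Real.pi / Real.sqrt k₁ := by
    intro h1
    have h2 : 0 < k₂ := lt_of_lt_of_le h1 hk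
    have : Real.pi / Real.sqrt k₂ ≤ Real.pi / Real.sqrt k₁ :=
      div_le_div_of_nonneg_left Real.pi_pos.le (Real.sqrt_pos.mpr h1)
        (Real.sqrt_le_sqrt hk)
    linarith [ht₂ h2]
  -- sn agrees with snAux near t
  have key : ∀ k : ℝ, (0 < k → t < Real.pi / Real.sqrt k) →
      sn k t = snAux k t ∧ deriv (fun s => sn k s) t = snAux' k t := by
    intro k hkt
    have hev : (fun s => sn k s) =ᶠ[nhds t] snAux k := by
      rcases lt_or_ge 0 k with hk0 | hk0
      · have : ∀ᶠ s in nhds t, s < Real.pi / Real.sqrt k :=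
          Filter.Tendsto.eventually_lt_const (hkt hk0) Filter.tendsto_id
        filter_upwards [this] with s hs
        simp [sn, snAux, if_pos hk0, hs.le]
      · filter_upwards with s
        simp [sn, snAux, not_lt.mpr hk0]
    constructor
    · rcases lt_or_ge 0 k with hk0 | hk0
      · simp [sn, snAux, if_pos hk0, (hkt hk0).le]
      · simp [sn, snAux, not_lt.mpr hk0]
    · rw [Filter.EventuallyEq.deriv_eq hev, (hasDerivAt_snAux k t).deriv]
  obtain ⟨hs1, hd1⟩ := key k₁ ht₁
  obtain ⟨hs2, hd2⟩ := key k₂ ht₂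
  rw [hs1, hs2, hd1, hd2]
  -- Wronskian argument
  set W : ℝ → ℝ := fun s => snAux k₂ s * snAux' k₁ s - snAux k₁ s * snAux' k₂ s with hW
  have hWderiv : ∀ s : ℝ, HasDerivAt W ((k₂ - k₁) * (snAux k₁ s * snAux k₂ s)) s := by
    intro s
    have h := (((hasDerivAt_snAux k₂ s).mul (hasDerivAt_snAux' k₁ s)).sub
      ((hasDerivAt_snAux k₁ s).mul (hasDerivAt_snAux' k₂ s)))
    exact h.congr_deriv (by ring)
  have hmono : MonotoneOn W (Set.Icc 0 t) := by
    apply monotoneOn_of_deriv_nonneg (convex_Icc 0 t)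
    · exact fun s _ => ((hWderiv s).continuousAt).continuousWithinAt
    · intro s _
      exact ((hWderiv s).differentiableAt).differentiableWithinAt
    · intro s hs
      rw [interior_Icc] at hs
      rw [(hWderiv s).deriv]
      have hs' : s ∈ Set.Icc (0:ℝ) t := ⟨hs.1.le, hs.2.le⟩
      have h1 := snAux_nonneg k₁ t ht.le (fun h => (ht₁ h).le) hs'
      have h2 := snAux_nonneg k₂ t ht.le (fun h => (ht₂ h).le) hs'
      exact mul_nonneg (by linarith) (mul_nonneg h1 h2)
  have hW0 : W 0 = 0 := by simp [hW, snAux_zero]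
  have := hmono (Set.left_mem_Icc.mpr ht.le) (Set.right_mem_Icc.mpr ht.le) ht.le
  rw [hW0] at this
  simp only [hW] at this
  linarith
end

section
/- Multiplicative monotonicity of the Bishop-Gromov bound versus the enhanced Bishop-Gromov bound: Let (Ω, μ) be a finite measure space with μ(Ω) > 0, d ≥ 2 an integer, R : Ω → ℝ a bounded measurable function, and m a real number with m ≤ R(ω) for all ω ∈ Ω. Define BG(t) = ∫_Ω ∫₀ᵗ sn(m/(d−1), τ)^{d−1} dτ dμ(ω) and eBG(t) = ∫_Ω ∫₀ᵗ sn(R(ω)/(d−1), τ)^{d−1} dτ dμ(ω). Then the function t ↦ BG(t)/eBG(t) is nondecreasing on (0, ∞). -/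
open MeasureTheory

namespace BGaux

open Real Set

/-- Untruncated Jacobi function. -/
noncomputable def J (k t : ℝ) : ℝ :=
  if 0 < k then Real.sin (Real.sqrt k * t) / Real.sqrt k
  else if k = 0 then t
  else Real.sinh (Real.sqrt (-k) * t) / Real.sqrt (-k)

/-- Its derivative. -/
noncomputable def J' (k t : ℝ) : ℝ :=
  if 0 < k then Real.cos (Real.sqrt k * t)
  else if k = 0 then 1
  else Real.cosh (Real.sqrt (-k) * t)

lemma J_zero (k : ℝ) : J k 0 = 0 := by
  unfold J; split_ifs <;> simp

lemma sn_zero (k : ℝ) : sn k 0 = 0 := by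
  unfold sn
  split_ifs <;> simp

lemma hasDerivAt_J (k t : ℝ) : HasDerivAt (J k) (J' k t) t := by
  unfold J J'
  split_ifs with h1 h2
  · have hk : Real.sqrt k ≠ 0 := ne_of_gt (Real.sqrt_pos.mpr h1)
    have h := ((Real.hasDerivAt_sin (Real.sqrt k * t)).comp t
      ((hasDerivAt_id t).const_mul (Real.sqrt k))).div_const (Real.sqrt k)
    refine h.congr_deriv (Eq.symm ?_)
    field_simp
  · exact hasDerivAt_id' t
  · have hkneg : 0 < -k := by
      rcases lt_trichotomy k 0 with h | h | h
      · linarith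
      · exact absurd h h2
      · exact absurd h h1
    have hk : Real.sqrt (-k) ≠ 0 := ne_of_gt (Real.sqrt_pos.mpr hkneg)
    have h := ((Real.hasDerivAt_sinh (Real.sqrt (-k) * t)).comp t
      ((hasDerivAt_id t).const_mul (Real.sqrt (-k)))).div_const (Real.sqrt (-k))
    refine h.congr_deriv (Eq.symm ?_)
    field_simp

lemma hasDerivAt_J' (k t : ℝ) : HasDerivAt (J' k) (-(k * J k t)) t := by
  unfold J J'
  split_ifs with h1 h2
  · have hk : Real.sqrt k ≠ 0 := ne_of_gt (Real.sqrt_pos.mpr h1)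
    have h := (Real.hasDerivAt_cos (Real.sqrt k * t)).comp t
      ((hasDerivAt_id t).const_mul (Real.sqrt k))
    refine h.congr_deriv (Eq.symm ?_)
    have hsq : Real.sqrt k * Real.sqrt k = k := Real.mul_self_sqrt h1.le
    have hdiv : k / Real.sqrt k = Real.sqrt k := by
      rw [eq_comm, eq_div_iff hk]; exact hsq
    calc -(k * (Real.sin (Real.sqrt k * t) / Real.sqrt k))
        = -(Real.sin (Real.sqrt k * t) * (k / Real.sqrt k)) := by ring
      _ = -Real.sin (Real.sqrt k * t) * (Real.sqrt k * 1) := by rw [hdiv]; ring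
  · subst h2; simpa using (hasDerivAt_const t (1:ℝ))
  · have hkneg : 0 < -k := by
      rcases lt_trichotomy k 0 with h | h | h
      · linarith
      · exact absurd h h2
      · exact absurd h h1
    have hk : Real.sqrt (-k) ≠ 0 := ne_of_gt (Real.sqrt_pos.mpr hkneg)
    have h := (Real.hasDerivAt_cosh (Real.sqrt (-k) * t)).comp t
      ((hasDerivAt_id t).const_mul (Real.sqrt (-k)))
    refine h.congr_deriv (Eq.symm ?_)
    have hsq : Real.sqrt (-k) * Real.sqrt (-k) = -k := Real.mul_self_sqrt hkneg.le
    have hdiv : -k / Real.sqrt (-k) = Real.sqrt (-k) := by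
      rw [eq_comm, eq_div_iff hk]; exact hsq
    calc -(k * (Real.sinh (Real.sqrt (-k) * t) / Real.sqrt (-k)))
        = Real.sinh (Real.sqrt (-k) * t) * (-k / Real.sqrt (-k)) := by ring
      _ = Real.sinh (Real.sqrt (-k) * t) * (Real.sqrt (-k) * 1) := by rw [hdiv, mul_one]

lemma J_nonneg {k t : ℝ} (ht : 0 ≤ t) (hk : 0 < k → Real.sqrt k * t ≤ Real.pi) :
    0 ≤ J k t := by
  unfold J
  split_ifs with h1 h2
  · exact div_nonneg (Real.sin_nonneg_of_nonneg_of_le_pi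
      (mul_nonneg (Real.sqrt_nonneg k) ht) (hk h1)) (Real.sqrt_nonneg k)
  · exact ht
  · exact div_nonneg (Real.sinh_nonneg_iff.mpr
      (mul_nonneg (Real.sqrt_nonneg _) ht)) (Real.sqrt_nonneg _)

lemma J_pos {k t : ℝ} (ht : 0 < t) (hk : 0 < k → Real.sqrt k * t < Real.pi) :
    0 < J k t := by
  unfold J
  split_ifs with h1 h2
  · exact div_pos (Real.sin_pos_of_pos_of_lt_pi
      (mul_pos (Real.sqrt_pos.mpr h1) ht) (hk h1)) (Real.sqrt_pos.mpr h1)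
  · exact ht
  · have hkneg : 0 < -k := by
      rcases lt_trichotomy k 0 with h | h | h
      · linarith
      · exact absurd h h2
      · exact absurd h h1
    exact div_pos (Real.sinh_pos_iff.mpr
      (mul_pos (Real.sqrt_pos.mpr hkneg) ht)) (Real.sqrt_pos.mpr hkneg)

lemma sn_eq_J {k t : ℝ} (hk : 0 < k → t ≤ Real.pi / Real.sqrt k) :
    sn k t = J k t := by
  by_cases h1 : 0 < k
  · simp [sn, J, h1, hk h1]
  · simp [sn, J, h1]

lemma sn_nonneg (k : ℝ) {t : ℝ} (ht : 0 ≤ t) : 0 ≤ sn k t := by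
  unfold sn
  split_ifs with h1 h2 h3
  · apply div_nonneg _ (Real.sqrt_nonneg k)
    apply Real.sin_nonneg_of_nonneg_of_le_pi (mul_nonneg (Real.sqrt_nonneg k) ht)
    exact (le_div_iff₀' (Real.sqrt_pos.mpr h1)).mp h2
  · exact le_refl 0
  · exact ht
  · exact div_nonneg (Real.sinh_nonneg_iff.mpr
      (mul_nonneg (Real.sqrt_nonneg _) ht)) (Real.sqrt_nonneg _)

lemma sn_pos {k t : ℝ} (ht : 0 < t) (hk : 0 < k → t < Real.pi / Real.sqrt k) :
    0 < sn k t := by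
  rw [sn_eq_J (fun h => (hk h).le)]
  apply J_pos ht
  intro h
  rw [← lt_div_iff₀' (Real.sqrt_pos.mpr h)]
  exact hk h

/-- The key Wronskian comparison. -/
lemma wronskian_key {k1 k2 σ τ : ℝ} (hk : k1 ≤ k2) (hσ : 0 < σ) (hστ : σ ≤ τ)
    (h1pos : ∀ u, 0 < u → u ≤ τ → 0 < J k1 u)
    (h2nonneg : ∀ u, 0 ≤ u → u ≤ τ → 0 ≤ J k2 u) :
    J k2 τ * J k1 σ ≤ J k2 σ * J k1 τ := by
  have hτpos : 0 < τ := lt_of_lt_of_le hσ hστ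
  set W : ℝ → ℝ := fun u => J' k2 u * J k1 u - J k2 u * J' k1 u with hWdef
  have hWd : ∀ u, HasDerivAt W ((k1 - k2) * (J k1 u * J k2 u)) u := by
    intro u
    have h := ((hasDerivAt_J' k2 u).mul (hasDerivAt_J k1 u)).sub
      ((hasDerivAt_J k2 u).mul (hasDerivAt_J' k1 u))
    refine h.congr_deriv (Eq.symm ?_)
    ring
  have hW0 : W 0 = 0 := by simp [hWdef, J_zero]
  have hWanti : AntitoneOn W (Icc 0 τ) := by
    apply antitoneOn_of_deriv_nonpos (convex_Icc 0 τ)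
    · exact fun u _ => (hWd u).continuousAt.continuousWithinAt
    · exact fun u _ => (hWd u).differentiableAt.differentiableWithinAt
    · intro u hu
      rw [interior_Icc] at hu
      rw [(hWd u).deriv]
      apply mul_nonpos_of_nonpos_of_nonneg (by linarith)
      exact mul_nonneg (h1pos u hu.1 hu.2.le).le (h2nonneg u hu.1.le hu.2.le)
  have hWle : ∀ u, 0 ≤ u → u ≤ τ → W u ≤ 0 := by
    intro u hu huτ
    have := hWanti (Set.left_mem_Icc.mpr hτpos.le) ⟨hu, huτ⟩ hu
    rwa [hW0] at this
  set q : ℝ → ℝ := fun u => J k2 u / J k1 u with hqdef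
  have hqd : ∀ u ∈ Icc σ τ, HasDerivAt q (W u / (J k1 u) ^ 2) u := by
    intro u hu
    have hne : J k1 u ≠ 0 := (h1pos u (lt_of_lt_of_le hσ hu.1) hu.2).ne'
    exact (hasDerivAt_J k2 u).div (hasDerivAt_J k1 u) hne
  have hqanti : AntitoneOn q (Icc σ τ) := by
    apply antitoneOn_of_deriv_nonpos (convex_Icc σ τ)
    · exact fun u hu => (hqd u hu).continuousAt.continuousWithinAt
    · intro u hu
      rw [interior_Icc] at hu
      exact (hqd u ⟨hu.1.le, hu.2.le⟩).differentiableAt.differentiableWithinAt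
    · intro u hu
      rw [interior_Icc] at hu
      rw [(hqd u ⟨hu.1.le, hu.2.le⟩).deriv]
      apply div_nonpos_of_nonpos_of_nonneg _ (sq_nonneg _)
      exact hWle u (hσ.trans hu.1).le hu.2.le
  have hq := hqanti (Set.left_mem_Icc.mpr hστ) (Set.right_mem_Icc.mpr hστ) hστ
  rw [hqdef] at hq
  simp only [] at hq
  rw [div_le_div_iff₀ (h1pos τ hτpos le_rfl) (h1pos σ hσ hστ)] at hq
  linarith

lemma sn_mul_sn {k1 k2 σ τ : ℝ} (hk : k1 ≤ k2) (hσ : 0 < σ) (hστ : σ ≤ τ) :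
    sn k2 τ * sn k1 σ ≤ sn k2 σ * sn k1 τ := by
  have hτpos : 0 < τ := lt_of_lt_of_le hσ hστ
  by_cases hcase : 0 < k2 ∧ Real.pi / Real.sqrt k2 ≤ τ
  · obtain ⟨hk2, hτ⟩ := hcase
    have h0 : sn k2 τ = 0 := by
      unfold sn
      rw [if_pos hk2]
      rcases eq_or_lt_of_le hτ with h | h
      · rw [if_pos h.ge]
        rw [← h]
        rw [mul_div_cancel₀ _ (ne_of_gt (Real.sqrt_pos.mpr hk2))]
        simp
      · rw [if_neg (not_le.mpr h)]
    rw [h0, zero_mul]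
    exact mul_nonneg (sn_nonneg _ hσ.le) (sn_nonneg _ hτpos.le)
  · push_neg at hcase
    have hcond2 : 0 < k2 → τ < Real.pi / Real.sqrt k2 := hcase
    have hcond1 : 0 < k1 → τ ≤ Real.pi / Real.sqrt k1 := by
      intro h1
      have h2 : (0:ℝ) < k2 := lt_of_lt_of_le h1 hk
      have hs : Real.sqrt k1 ≤ Real.sqrt k2 := Real.sqrt_le_sqrt hk
      calc τ ≤ Real.pi / Real.sqrt k2 := (hcond2 h2).le
        _ ≤ Real.pi / Real.sqrt k1 :=
          div_le_div_of_nonneg_left Real.pi_pos.le (Real.sqrt_pos.mpr h1) hs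
    rw [sn_eq_J (fun h => hcond1 h), sn_eq_J (fun h => (hστ.trans (hcond1 h))),
      sn_eq_J (fun h => (hcond2 h).le), sn_eq_J (fun h => (hστ.trans (hcond2 h).le))]
    apply wronskian_key hk hσ hστ
    · intro u hu huτ
      apply J_pos hu
      intro h1
      have h2 : (0:ℝ) < k2 := lt_of_lt_of_le h1 hk
      have hs : Real.sqrt k1 ≤ Real.sqrt k2 := Real.sqrt_le_sqrt hk
      have hτπ : Real.sqrt k2 * τ < Real.pi := by
        rw [← lt_div_iff₀' (Real.sqrt_pos.mpr h2)]
        exact hcond2 h2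
      calc Real.sqrt k1 * u ≤ Real.sqrt k2 * u := by
            apply mul_le_mul_of_nonneg_right hs hu.le
        _ ≤ Real.sqrt k2 * τ := by
            apply mul_le_mul_of_nonneg_left huτ (Real.sqrt_nonneg _)
        _ < Real.pi := hτπ
    · intro u hu huτ
      apply J_nonneg hu
      intro h2
      have hτπ : Real.sqrt k2 * τ < Real.pi := by
        rw [← lt_div_iff₀' (Real.sqrt_pos.mpr h2)]
        exact hcond2 h2
      calc Real.sqrt k2 * u ≤ Real.sqrt k2 * τ :=
            mul_le_mul_of_nonneg_left huτ (Real.sqrt_nonneg _)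
        _ ≤ Real.pi := hτπ.le

lemma sn_pow_mul {k1 k2 σ τ : ℝ} (n : ℕ) (hk : k1 ≤ k2) (hσ : 0 < σ) (hστ : σ ≤ τ) :
    sn k2 τ ^ n * sn k1 σ ^ n ≤ sn k2 σ ^ n * sn k1 τ ^ n := by
  have hτpos : 0 < τ := lt_of_lt_of_le hσ hστ
  rw [← mul_pow, ← mul_pow]
  apply pow_le_pow_left₀ (mul_nonneg (sn_nonneg _ hτpos.le) (sn_nonneg _ hσ.le))
  exact sn_mul_sn hk hσ hστ

lemma continuous_sn (k : ℝ) : Continuous (sn k) := by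
  rcases lt_trichotomy 0 k with hk | hk | hk
  · have h : sn k = fun t => if t ≤ Real.pi / Real.sqrt k
        then Real.sin (Real.sqrt k * t) / Real.sqrt k else 0 := by
      funext t; simp [sn, hk]
    rw [h]
    have hc1 : Continuous fun t : ℝ => Real.sin (Real.sqrt k * t) / Real.sqrt k := by
      fun_prop
    apply Continuous.if_le hc1 continuous_const continuous_id continuous_const
    intro t ht
    simp only [id_eq] at ht
    rw [ht, mul_comm, div_mul_cancel₀ _ (ne_of_gt (Real.sqrt_pos.mpr hk)),
      Real.sin_pi, zero_div]
  · have h : sn k = fun t => t := by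
      funext t; simp [sn, ← hk]
    rw [h]; exact continuous_id
  · have h : sn k = fun t => Real.sinh (Real.sqrt (-k) * t) / Real.sqrt (-k) := by
      funext t; simp [sn, not_lt.mpr hk.le, ne_of_lt hk]
    rw [h]
    exact (Real.continuous_sinh.comp (continuous_const.mul continuous_id)).div_const _

lemma intInt (k : ℝ) (n : ℕ) (a b : ℝ) :
    IntervalIntegrable (fun τ => sn k τ ^ n) volume a b :=
  ((continuous_sn k).pow n).intervalIntegrable a b

/-- Ratio monotonicity at the level of the integrated functions. -/
lemma F_ratio {k1 k2 : ℝ} (hk : k1 ≤ k2) (n : ℕ) (hn : 1 ≤ n) {s t : ℝ}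
    (hs : 0 < s) (hst : s ≤ t) :
    (∫ τ in (0:ℝ)..t, sn k2 τ ^ n) * (∫ τ in (0:ℝ)..s, sn k1 τ ^ n)
      ≤ (∫ τ in (0:ℝ)..s, sn k2 τ ^ n) * (∫ τ in (0:ℝ)..t, sn k1 τ ^ n) := by
  have split1 : (∫ τ in (0:ℝ)..s, sn k1 τ ^ n) + (∫ τ in s..t, sn k1 τ ^ n)
      = ∫ τ in (0:ℝ)..t, sn k1 τ ^ n :=
    intervalIntegral.integral_add_adjacent_intervals (intInt k1 n 0 s) (intInt k1 n s t)
  have split2 : (∫ τ in (0:ℝ)..s, sn k2 τ ^ n) + (∫ τ in s..t, sn k2 τ ^ n)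
      = ∫ τ in (0:ℝ)..t, sn k2 τ ^ n :=
    intervalIntegral.integral_add_adjacent_intervals (intInt k2 n 0 s) (intInt k2 n s t)
  have stepA : ∀ σ ∈ Icc (0:ℝ) s,
      (∫ τ in s..t, sn k2 τ ^ n) * sn k1 σ ^ n
        ≤ sn k2 σ ^ n * ∫ τ in s..t, sn k1 τ ^ n := by
    intro σ hσ
    rcases eq_or_lt_of_le hσ.1 with h0 | h0
    · rw [← h0, sn_zero, sn_zero, zero_pow (by omega : n ≠ 0), mul_zero, zero_mul]
    · have h := intervalIntegral.integral_mono_on hst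
        ((intInt k2 n s t).mul_const (sn k1 σ ^ n))
        ((intInt k1 n s t).const_mul (sn k2 σ ^ n))
        (fun τ hτ => sn_pow_mul n hk h0 (hσ.2.trans hτ.1))
      rwa [intervalIntegral.integral_mul_const, intervalIntegral.integral_const_mul] at h
  have key : (∫ τ in s..t, sn k2 τ ^ n) * (∫ σ in (0:ℝ)..s, sn k1 σ ^ n)
      ≤ (∫ σ in (0:ℝ)..s, sn k2 σ ^ n) * (∫ τ in s..t, sn k1 τ ^ n) := by
    have h := intervalIntegral.integral_mono_on hs.le
      ((intInt k1 n 0 s).const_mul (∫ τ in s..t, sn k2 τ ^ n))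
      ((intInt k2 n 0 s).mul_const (∫ τ in s..t, sn k1 τ ^ n))
      stepA
    rwa [intervalIntegral.integral_const_mul, intervalIntegral.integral_mul_const] at h
  rw [← split1, ← split2]
  nlinarith [key]

lemma F_pos (k : ℝ) (n : ℕ) {t : ℝ} (ht : 0 < t) :
    0 < ∫ τ in (0:ℝ)..t, sn k τ ^ n := by
  set t' := min t (if 0 < k then Real.pi / Real.sqrt k else t) with ht'def
  have ht'pos : 0 < t' := by
    apply lt_min ht
    split_ifs with h
    · exact div_pos Real.pi_pos (Real.sqrt_pos.mpr h)
    · exact ht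
  have ht't : t' ≤ t := min_le_left _ _
  have h1 : 0 < ∫ τ in (0:ℝ)..t', sn k τ ^ n := by
    apply intervalIntegral.intervalIntegral_pos_of_pos_on (intInt k n 0 t') _ ht'pos
    intro x hx
    apply pow_pos
    apply sn_pos hx.1
    intro hkpos
    calc x < t' := hx.2
      _ ≤ Real.pi / Real.sqrt k := by
          rw [ht'def]
          simp only [if_pos hkpos]
          exact min_le_right _ _
  have h2 : 0 ≤ ∫ τ in t'..t, sn k τ ^ n := by
    apply intervalIntegral.integral_nonneg ht't
    intro u hu
    exact pow_nonneg (sn_nonneg _ (ht'pos.le.trans hu.1)) n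
  have hsplit : (∫ τ in (0:ℝ)..t', sn k τ ^ n) + (∫ τ in t'..t, sn k τ ^ n)
      = ∫ τ in (0:ℝ)..t, sn k τ ^ n :=
    intervalIntegral.integral_add_adjacent_intervals (intInt k n 0 t') (intInt k n t' t)
  linarith

lemma sinh_le_mul_cosh {x : ℝ} (hx : 0 ≤ x) : Real.sinh x ≤ x * Real.cosh x := by
  have hg : ∀ y : ℝ, HasDerivAt (fun y => y * Real.cosh y - Real.sinh y)
      (y * Real.sinh y) y := by
    intro y
    have h := ((hasDerivAt_id y).mul (Real.hasDerivAt_cosh y)).sub (Real.hasDerivAt_sinh y)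
    refine h.congr_deriv (Eq.symm ?_)
    simp only [id_eq]
    ring
  have hmono : MonotoneOn (fun y => y * Real.cosh y - Real.sinh y) (Icc 0 x) := by
    apply monotoneOn_of_deriv_nonneg (convex_Icc 0 x)
    · exact fun u _ => (hg u).continuousAt.continuousWithinAt
    · exact fun u _ => (hg u).differentiableAt.differentiableWithinAt
    · intro u hu
      rw [interior_Icc] at hu
      rw [(hg u).deriv]
      exact mul_nonneg hu.1.le (Real.sinh_nonneg_iff.mpr hu.1.le)
  rcases eq_or_lt_of_le hx with h | h
  · rw [← h]; simp
  · have := hmono (Set.left_mem_Icc.mpr hx) (Set.right_mem_Icc.mpr hx) hx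
    simp only [Real.sinh_zero, Real.cosh_zero] at this
    linarith

lemma sn_le_bound {k Ck t τ : ℝ} (hkC : -k ≤ Ck) (hτ : 0 ≤ τ) (hτt : τ ≤ t) :
    sn k τ ≤ t * Real.cosh (Real.sqrt Ck * t) := by
  have ht : 0 ≤ t := hτ.trans hτt
  have hM : 1 ≤ Real.cosh (Real.sqrt Ck * t) := Real.one_le_cosh _
  have hbase : sn k τ ≤ τ * Real.cosh (Real.sqrt (-k) * τ) := by
    unfold sn
    split_ifs with h1 h2 h3
    · have hs : 0 < Real.sqrt k := Real.sqrt_pos.mpr h1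
      have hsin : Real.sin (Real.sqrt k * τ) ≤ Real.sqrt k * τ := by
        rcases eq_or_lt_of_le (mul_nonneg hs.le hτ) with h | h
        · rw [← h]; simp
        · exact (Real.sin_lt h).le
      have h5 : Real.sin (Real.sqrt k * τ) / Real.sqrt k ≤ τ := by
        rw [div_le_iff₀ hs]
        calc Real.sin (Real.sqrt k * τ) ≤ Real.sqrt k * τ := hsin
          _ = τ * Real.sqrt k := mul_comm _ _
      calc Real.sin (Real.sqrt k * τ) / Real.sqrt k ≤ τ := h5
        _ ≤ τ * Real.cosh (Real.sqrt (-k) * τ) :=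
            le_mul_of_one_le_right hτ (Real.one_le_cosh _)
    · exact mul_nonneg hτ (Real.cosh_pos _).le
    · exact le_mul_of_one_le_right hτ (Real.one_le_cosh _)
    · have hkneg : 0 < -k := by
        rcases lt_trichotomy k 0 with h | h | h
        · linarith
        · exact absurd h h3
        · exact absurd h h1
      have ha : 0 < Real.sqrt (-k) := Real.sqrt_pos.mpr hkneg
      have h4 := sinh_le_mul_cosh (mul_nonneg ha.le hτ)
      rw [div_le_iff₀ ha]
      calc Real.sinh (Real.sqrt (-k) * τ)
          ≤ (Real.sqrt (-k) * τ) * Real.cosh (Real.sqrt (-k) * τ) := h4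
        _ = τ * Real.cosh (Real.sqrt (-k) * τ) * Real.sqrt (-k) := by ring
  have hc : Real.cosh (Real.sqrt (-k) * τ) ≤ Real.cosh (Real.sqrt Ck * t) := by
    rw [Real.cosh_le_cosh]
    rw [abs_of_nonneg (mul_nonneg (Real.sqrt_nonneg _) hτ),
      abs_of_nonneg (mul_nonneg (Real.sqrt_nonneg _) ht)]
    exact mul_le_mul (Real.sqrt_le_sqrt hkC) hτt hτ (Real.sqrt_nonneg _)
  calc sn k τ ≤ τ * Real.cosh (Real.sqrt (-k) * τ) := hbase
    _ ≤ t * Real.cosh (Real.sqrt Ck * t) :=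
        mul_le_mul hτt hc (Real.cosh_pos _).le ht

lemma F_le {k Ck t : ℝ} (hkC : -k ≤ Ck) (ht : 0 ≤ t) (n : ℕ) :
    ∫ τ in (0:ℝ)..t, sn k τ ^ n ≤ t * (t * Real.cosh (Real.sqrt Ck * t)) ^ n := by
  have h := intervalIntegral.integral_mono_on ht (intInt k n 0 t)
    (intervalIntegrable_const)
    (fun τ hτ => pow_le_pow_left₀ (sn_nonneg _ hτ.1) (sn_le_bound hkC hτ.1 hτ.2) n)
  simpa using h

lemma F_nonneg (k : ℝ) (n : ℕ) {t : ℝ} (ht : 0 ≤ t) :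
    0 ≤ ∫ τ in (0:ℝ)..t, sn k τ ^ n :=
  intervalIntegral.integral_nonneg ht (fun u hu => pow_nonneg (sn_nonneg _ hu.1) n)

lemma measurable_sn : Measurable (Function.uncurry sn) := by
  have h1 : Measurable fun p : ℝ × ℝ => Real.sqrt p.1 :=
    Real.continuous_sqrt.measurable.comp measurable_fst
  have h1' : Measurable fun p : ℝ × ℝ => Real.sqrt (-p.1) :=
    Real.continuous_sqrt.measurable.comp measurable_fst.neg
  unfold Function.uncurry sn
  apply Measurable.ite (measurableSet_lt measurable_const measurable_fst)
  · apply Measurable.ite (measurableSet_le measurable_snd (measurable_const.div h1))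
    · exact (Real.continuous_sin.measurable.comp (h1.mul measurable_snd)).div h1
    · exact measurable_const
  · apply Measurable.ite (measurable_fst (measurableSet_singleton (0:ℝ)))
    · exact measurable_snd
    · exact (Real.continuous_sinh.measurable.comp (h1'.mul measurable_snd)).div h1'

end BGaux

open BGaux Set

/-- **Multiplicative monotonicity of Bishop-Gromov versus enhanced Bishop-Gromov.**
For a finite measure space `(Ω, μ)` with `μ(Ω) > 0`, a bounded measurable `R : Ω → ℝ`,
and `m ≤ R`, with `BG(t) = ∫_Ω ∫₀ᵗ sn(m/(d−1), τ)^{d−1} dτ dμ` and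
`eBG(t) = ∫_Ω ∫₀ᵗ sn(R(ω)/(d−1), τ)^{d−1} dτ dμ`,
the function `t ↦ BG(t)/eBG(t)` is nondecreasing on `(0, ∞)`. -/
theorem BG_div_eBG_monotone
    {Ω : Type*} [MeasurableSpace Ω] (μ : Measure Ω) [IsFiniteMeasure μ]
    (hμ : 0 < μ Set.univ)
    (d : ℕ) (hd : 2 ≤ d) (R : Ω → ℝ) (hRmeas : Measurable R)
    (C : ℝ) (hRbd : ∀ ω, |R ω| ≤ C) (m : ℝ) (hm : ∀ ω, m ≤ R ω)
    (BG eBG : ℝ → ℝ)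
    (hBG : ∀ t, BG t =
      ∫ _ω, (∫ τ in (0:ℝ)..t, sn (m / ((d : ℝ) - 1)) τ ^ (d - 1)) ∂μ)
    (heBG : ∀ t, eBG t =
      ∫ ω, (∫ τ in (0:ℝ)..t, sn (R ω / ((d : ℝ) - 1)) τ ^ (d - 1)) ∂μ) :
    MonotoneOn (fun t => BG t / eBG t) (Set.Ioi (0 : ℝ)) := by
  have hΩ : Nonempty Ω := by
    rcases isEmpty_or_nonempty Ω with h | h
    · exfalso
      rw [Set.univ_eq_empty_iff.mpr h] at hμ
      simp at hμ
    · exact h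
  have hC0 : 0 ≤ C := le_trans (abs_nonneg _) (hRbd (Classical.arbitrary Ω))
  set n := d - 1 with hn
  have hn1 : 1 ≤ n := by omega
  have hd1 : (1:ℝ) ≤ (d:ℝ) - 1 := by
    have : (2:ℝ) ≤ (d:ℝ) := by exact_mod_cast hd
    linarith
  have hdpos : (0:ℝ) < (d:ℝ) - 1 := by linarith
  set k0 := m / ((d:ℝ) - 1) with hk0def
  have hk0 : ∀ ω, k0 ≤ R ω / ((d:ℝ) - 1) := fun ω =>
    (div_le_div_iff_of_pos_right hdpos).mpr (hm ω)
  have hkC : ∀ ω, -(R ω / ((d:ℝ) - 1)) ≤ C := by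
    intro ω
    have h1 : -(R ω) ≤ C := (neg_le_abs _).trans (hRbd ω)
    calc -(R ω / ((d:ℝ) - 1)) = -(R ω) / ((d:ℝ) - 1) := by ring
      _ ≤ C / ((d:ℝ) - 1) := (div_le_div_iff_of_pos_right hdpos).mpr h1
      _ ≤ C := div_le_self hC0 hd1
  -- Integrability of the eBG integrand
  have hGmeas : ∀ t : ℝ, 0 < t → AEStronglyMeasurable
      (fun ω => ∫ τ in (0:ℝ)..t, sn (R ω / ((d:ℝ) - 1)) τ ^ n) μ := by
    intro t ht
    have h1 : Measurable fun ω => R ω / ((d:ℝ) - 1) := hRmeas.div_const _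
    have h2 : Measurable fun p : Ω × ℝ => sn (R p.1 / ((d:ℝ) - 1)) p.2 ^ n := by
      have := measurable_sn.comp ((h1.comp measurable_fst).prodMk measurable_snd)
      exact this.pow_const n
    have h3 : StronglyMeasurable fun ω =>
        ∫ τ, sn (R ω / ((d:ℝ) - 1)) τ ^ n ∂(volume.restrict (Ioc 0 t)) :=
      h2.stronglyMeasurable.integral_prod_right'
    have heq : (fun ω => ∫ τ in (0:ℝ)..t, sn (R ω / ((d:ℝ) - 1)) τ ^ n)
        = fun ω => ∫ τ, sn (R ω / ((d:ℝ) - 1)) τ ^ n ∂(volume.restrict (Ioc 0 t)) := by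
      funext ω
      rw [intervalIntegral.integral_of_le ht.le]
    rw [heq]
    exact h3.aestronglyMeasurable
  have hGint : ∀ t : ℝ, 0 < t → Integrable
      (fun ω => ∫ τ in (0:ℝ)..t, sn (R ω / ((d:ℝ) - 1)) τ ^ n) μ := by
    intro t ht
    refine ⟨hGmeas t ht, ?_⟩
    apply HasFiniteIntegral.of_bounded
      (C := t * (t * Real.cosh (Real.sqrt C * t)) ^ n)
    apply ae_of_all
    intro ω
    rw [Real.norm_eq_abs, abs_of_nonneg (F_nonneg _ n ht.le)]
    exact F_le (hkC ω) ht.le n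
  have heBGpos : ∀ t : ℝ, 0 < t → 0 < eBG t := by
    intro t ht
    rw [heBG]
    rw [integral_pos_iff_support_of_nonneg
      (fun ω => F_nonneg _ n ht.le) (hGint t ht)]
    have hsupp : Function.support
        (fun ω => ∫ τ in (0:ℝ)..t, sn (R ω / ((d:ℝ) - 1)) τ ^ n) = Set.univ :=
      Set.eq_univ_of_forall fun ω => (F_pos _ n ht).ne'
    rw [hsupp]
    exact hμ
  intro s hs t ht hst
  rw [Set.mem_Ioi] at hs ht
  simp only
  rw [div_le_div_iff₀ (heBGpos s hs) (heBGpos t ht)]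
  rw [hBG s, hBG t, heBG s, heBG t]
  rw [integral_const, integral_const, smul_eq_mul, smul_eq_mul, mul_assoc, mul_assoc]
  apply mul_le_mul_of_nonneg_left _ ENNReal.toReal_nonneg
  rw [← integral_const_mul, ← integral_const_mul]
  apply integral_mono ((hGint t ht).const_mul _) ((hGint s hs).const_mul _)
  intro ω
  have h := F_ratio (hk0 ω) n hn1 hs hst
  simp only [← hk0def]
  nlinarith [h]
end

section
/- Ratio-of-integrals monotonicity (the Λ argument): Let a, A : ℝ → ℝ be continuous on [0,∞) and differentiable on (0,∞), with A(t) > 0 and a(t) > 0 for all t > 0, and suppose A'(t)·a(t) ≥ A(t)·a'(t) for all t > 0 (equivalently, a/A is nonincreasing on (0,∞)). Define B(t) = ∫₀ᵗ A(τ) dτ and E(t) = ∫₀ᵗ a(τ) dτ. Then the function t ↦ B(t)/E(t) is nondecreasing on (0,∞). -/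
open Set MeasureTheory intervalIntegral

/-- **Ratio-of-integrals monotonicity (the Λ argument).**
If `a, A` are continuous on `[0, ∞)`, differentiable and positive on `(0, ∞)`, and
`A'·a ≥ A·a'` on `(0, ∞)` (i.e. `a/A` is nonincreasing there), then with
`B(t) = ∫₀ᵗ A` and `E(t) = ∫₀ᵗ a`, the ratio `B/E` is nondecreasing on `(0, ∞)`. -/
theorem ratio_of_integrals_monotone (a A : ℝ → ℝ)
    (haC : ContinuousOn a (Set.Ici (0 : ℝ))) (hAC : ContinuousOn A (Set.Ici (0 : ℝ)))
    (haD : ∀ t ∈ Set.Ioi (0 : ℝ), DifferentiableAt ℝ a t)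
    (hAD : ∀ t ∈ Set.Ioi (0 : ℝ), DifferentiableAt ℝ A t)
    (hApos : ∀ t ∈ Set.Ioi (0 : ℝ), 0 < A t)
    (hapos : ∀ t ∈ Set.Ioi (0 : ℝ), 0 < a t)
    (h : ∀ t ∈ Set.Ioi (0 : ℝ), A t * deriv a t ≤ deriv A t * a t) :
    MonotoneOn (fun t => (∫ τ in (0:ℝ)..t, A τ) / (∫ τ in (0:ℝ)..t, a τ))
      (Set.Ioi (0 : ℝ)) := by
  set B := fun t => ∫ τ in (0:ℝ)..t, A τ with hBdef
  set E := fun t => ∫ τ in (0:ℝ)..t, a τ with hEdef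
  have haCont : ContinuousOn a (Ioi (0:ℝ)) := fun x hx =>
    (haD x hx).continuousAt.continuousWithinAt
  have hACont : ContinuousOn A (Ioi (0:ℝ)) := fun x hx =>
    (hAD x hx).continuousAt.continuousWithinAt
  have haInt : ∀ t, 0 < t → IntervalIntegrable a volume 0 t := fun t ht =>
    (haC.mono (by rw [uIcc_of_le ht.le]; exact Icc_subset_Ici_self)).intervalIntegrable
  have hAInt : ∀ t, 0 < t → IntervalIntegrable A volume 0 t := fun t ht =>
    (hAC.mono (by rw [uIcc_of_le ht.le]; exact Icc_subset_Ici_self)).intervalIntegrable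
  have hEpos : ∀ t ∈ Ioi (0:ℝ), 0 < E t := fun t ht =>
    intervalIntegral.intervalIntegral_pos_of_pos_on (haInt t ht)
      (fun x hx => hapos x hx.1) ht
  -- derivatives of B and E
  have hEderiv : ∀ t ∈ Ioi (0:ℝ), HasDerivAt E (a t) t := fun t ht =>
    intervalIntegral.integral_hasDerivAt_right (haInt t ht)
      (haCont.stronglyMeasurableAtFilter isOpen_Ioi t ht) (haD t ht).continuousAt
  have hBderiv : ∀ t ∈ Ioi (0:ℝ), HasDerivAt B (A t) t := fun t ht =>
    intervalIntegral.integral_hasDerivAt_right (hAInt t ht)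
      (hACont.stronglyMeasurableAtFilter isOpen_Ioi t ht) (hAD t ht).continuousAt
  -- a/A is antitone on (0,∞)
  have hanti : AntitoneOn (fun t => a t / A t) (Ioi (0:ℝ)) := by
    have hint : interior (Ioi (0:ℝ)) = Ioi 0 := interior_Ioi
    apply antitoneOn_of_deriv_nonpos (convex_Ioi 0)
    · exact ContinuousOn.div haCont hACont (fun x hx => (hApos x hx).ne')
    · rw [hint]
      exact fun x hx => ((haD x hx).div (hAD x hx) (hApos x hx).ne').differentiableWithinAt
    · rw [hint]
      intro x hx
      have hd := ((haD x hx).hasDerivAt.div (hAD x hx).hasDerivAt (hApos x hx).ne')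
      rw [show (fun t => a t / A t) = a / A from rfl, hd.deriv]
      apply div_nonpos_of_nonpos_of_nonneg
      · nlinarith [h x hx]
      · positivity
  -- pointwise inequality on (0, t]
  have hpt : ∀ t ∈ Ioi (0:ℝ), ∀ τ ∈ Icc (0:ℝ) t, a t * A τ ≤ A t * a τ := by
    intro t ht τ hτ
    rcases eq_or_lt_of_le hτ.1 with h0 | h0
    · -- τ = 0 : take limits along 𝓝[>] 0
      subst h0
      have hA0 : Filter.Tendsto A (nhdsWithin 0 (Ioi (0:ℝ))) (nhds (A 0)) :=
        (hAC 0 self_mem_Ici).mono_left (nhdsWithin_mono 0 Ioi_subset_Ici_self)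
      have ha0 : Filter.Tendsto a (nhdsWithin 0 (Ioi (0:ℝ))) (nhds (a 0)) :=
        (haC 0 self_mem_Ici).mono_left (nhdsWithin_mono 0 Ioi_subset_Ici_self)
      have h1 : Filter.Tendsto (fun τ => a t * A τ) (nhdsWithin 0 (Ioi (0:ℝ)))
          (nhds (a t * A 0)) := hA0.const_mul _
      have h2 : Filter.Tendsto (fun τ => A t * a τ) (nhdsWithin 0 (Ioi (0:ℝ)))
          (nhds (A t * a 0)) := ha0.const_mul _
      refine le_of_tendsto_of_tendsto h1 h2 ?_
      filter_upwards [self_mem_nhdsWithin,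
        eventually_nhdsWithin_of_eventually_nhds (eventually_lt_nhds ht)] with τ hτ1 hτ2
      have := hanti hτ1 ht hτ2.le
      rw [div_le_div_iff₀ (hApos t ht) (hApos τ hτ1)] at this
      linarith
    · have := hanti h0 ht hτ.2
      rw [div_le_div_iff₀ (hApos t ht) (hApos τ h0)] at this
      linarith
  -- key: a t * B t ≤ A t * E t
  have hkey : ∀ t ∈ Ioi (0:ℝ), B t * a t ≤ A t * E t := by
    intro t ht
    have hmono := intervalIntegral.integral_mono_on (μ := volume) (le_of_lt ht)
      ((hAInt t ht).const_mul (a t)) ((haInt t ht).const_mul (A t)) (hpt t ht)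
    simpa [intervalIntegral.integral_const_mul, mul_comm] using hmono
  -- derivative of B/E
  have hf : ∀ t ∈ Ioi (0:ℝ),
      HasDerivAt (fun t => B t / E t) ((A t * E t - B t * a t) / (E t)^2) t := fun t ht =>
    (hBderiv t ht).div (hEderiv t ht) (hEpos t ht).ne'
  have hint : interior (Ioi (0:ℝ)) = Ioi 0 := interior_Ioi
  apply monotoneOn_of_deriv_nonneg (convex_Ioi 0)
  · exact fun x hx => (hf x hx).continuousAt.continuousWithinAt
  · rw [hint]; exact fun x hx => (hf x hx).differentiableAt.differentiableWithinAt
  · rw [hint]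
    intro x hx
    rw [(hf x hx).deriv]
    apply div_nonneg _ (sq_nonneg _)
    linarith [hkey x hx]
end

section
/- Bound hierarchy for ℍ²×ℝ²: Define vol(t) = 2π²·(2t·sinh(t) − 2·cosh(t) − t² + 2), eBG(t) = 4π² · ∫₀^{π/2} cos(θ)·sin(θ) · ( ∫₀ᵗ ((√3/cos(θ))·sinh(τ·cos(θ)/√3))³ dτ ) dθ, and BG(t) = 24π²·(2 + cosh(t/√3))·sinh⁴(t/(2√3)). Then for every real t ≥ 0: vol(t) ≤ eBG(t) ≤ BG(t). -/
open Real MeasureTheory intervalIntegral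

/-- Arithmetic core: `4(2k+3)(2k+2)·3^k + 3 ≤ 27·9^k`. -/
lemma natIneq (k : ℕ) : (4*(2*(k:ℝ)+3)*(2*(k:ℝ)+2)*3^k + 3 : ℝ) ≤ 27 * 9^k := by
  induction k with
  | zero => norm_num
  | succ n ih =>
    rcases n with _ | m
    · norm_num
    · have h9 : (9:ℝ)^(m+1+1) = 9 * 9^(m+1) := by ring
      have h3' : (3:ℝ)^(m+1+1) = 3 * 3^(m+1) := by ring
      have hpos : (0:ℝ) < 3 ^ (m+1) := by positivity
      have hm : (0:ℝ) ≤ (m:ℝ) := Nat.cast_nonneg m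
      rw [h9, h3']
      push_cast at ih ⊢
      nlinarith [ih, hpos, hm,
        mul_nonneg (mul_nonneg hm hm) hpos.le,
        mul_nonneg hm hpos.le]

/-- Key scalar inequality: `y² sinh(√3 y) ≤ √3 sinh³ y` for `y ≥ 0`. -/
lemma keyScalar {y : ℝ} (hy : 0 ≤ y) :
    y^2 * Real.sinh (Real.sqrt 3 * y) ≤ Real.sqrt 3 * Real.sinh y ^ 3 := by
  have s3 : (0:ℝ) < Real.sqrt 3 := Real.sqrt_pos.2 (by norm_num)
  have s3sq : Real.sqrt 3 ^ 2 = 3 := Real.sq_sqrt (by norm_num)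
  have L : HasSum (fun n : ℕ => y^2 * ((Real.sqrt 3 * y) ^ (2*n+1) / ((2*n+1).factorial : ℝ)))
      (y^2 * Real.sinh (Real.sqrt 3 * y)) := (Real.hasSum_sinh _).mul_left _
  set r : ℕ → ℝ := fun n =>
    (Real.sqrt 3/4) * ((3*y) ^ (2*n+1) / ((2*n+1).factorial : ℝ))
      - (3*Real.sqrt 3/4) * (y ^ (2*n+1) / ((2*n+1).factorial : ℝ)) with hr
  have R0 : HasSum r (Real.sqrt 3/4 * Real.sinh (3*y) - 3*Real.sqrt 3/4 * Real.sinh y) :=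
    ((Real.hasSum_sinh (3*y)).mul_left _).sub ((Real.hasSum_sinh y).mul_left _)
  have hr0 : r 0 = 0 := by
    simp only [hr]
    norm_num [Nat.factorial]
    ring
  have R1 : HasSum (fun n => r (n+1))
      (Real.sqrt 3/4 * Real.sinh (3*y) - 3*Real.sqrt 3/4 * Real.sinh y) := by
    have h := (hasSum_nat_add_iff' (f := r) 1).2 R0
    simpa [Finset.sum_range_one, hr0] using h
  have hle : y^2 * Real.sinh (Real.sqrt 3 * y) ≤
      Real.sqrt 3/4 * Real.sinh (3*y) - 3*Real.sqrt 3/4 * Real.sinh y := by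
    refine hasSum_le (fun n => ?_) L R1
    have hfac1 : (0:ℝ) < ((2*n+1).factorial : ℝ) := by exact_mod_cast Nat.factorial_pos _
    have hfac3 : (((2*(n+1)+1).factorial : ℕ) : ℝ)
        = (2*(n:ℝ)+3) * (2*(n:ℝ)+2) * ((2*n+1).factorial : ℝ) := by
      have h1 : 2*(n+1)+1 = (2*n+2)+1 := by ring
      rw [h1, Nat.factorial_succ]
      have h2 : 2*n+2 = (2*n+1)+1 := by ring
      rw [h2, Nat.factorial_succ]
      push_cast
      ring
    have hpow : (Real.sqrt 3) ^ (2*n+1) = 3^n * Real.sqrt 3 := by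
      rw [pow_succ, pow_mul, s3sq]
    have hyp : (0:ℝ) ≤ y ^ (2*n+3) := pow_nonneg hy _
    have key := natIneq n
    have h27 : (3:ℝ) ^ (2*(n+1)+1) = 27 * 9^n := by
      have h1 : 2*(n+1)+1 = 2*n+3 := by ring
      rw [h1, pow_add, pow_mul]
      norm_num [mul_comm]
    have lhs_eq : y^2 * ((Real.sqrt 3 * y) ^ (2*n+1) / ((2*n+1).factorial : ℝ))
        = (3^n * Real.sqrt 3 * y^(2*n+3)) / ((2*n+1).factorial : ℝ) := by
      rw [mul_pow, hpow, mul_div_assoc']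
      congr 1
      ring
    have rhs_eq : r (n+1) = ((27*9^n - 3) * (Real.sqrt 3/4) * y^(2*n+3))
        / ((2*(n:ℝ)+3) * (2*(n:ℝ)+2) * ((2*n+1).factorial : ℝ)) := by
      simp only [hr]
      rw [hfac3, mul_pow, h27]
      have h1 : 2*(n+1)+1 = 2*n+3 := by ring
      rw [h1]
      field_simp
    rw [lhs_eq, rhs_eq]
    rw [div_le_div_iff₀ hfac1 (by positivity)]
    have hkey' : 4*(2*(n:ℝ)+3)*(2*(n:ℝ)+2)*3^n ≤ 27*9^n - 3 := by linarith
    nlinarith [mul_le_mul_of_nonneg_right hkey'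
      (mul_nonneg (mul_nonneg s3.le hyp) hfac1.le),
      mul_pos hfac1 hfac1, s3.le]
  exact hle.trans_eq (by rw [Real.sinh_three_mul]; ring)

/-- FTC: `∫₀^τ cosh(σc) dσ = sinh(τc)/c` for `c ≠ 0`. -/
lemma intCosh (c : ℝ) (hc : c ≠ 0) (τ : ℝ) :
    ∫ σ in (0:ℝ)..τ, Real.cosh (σ * c) = Real.sinh (τ * c) / c := by
  have hderiv : ∀ σ ∈ Set.uIcc (0:ℝ) τ,
      HasDerivAt (fun x => Real.sinh (x * c) / c) (Real.cosh (σ * c)) σ := by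
    intro σ _
    have h1 : HasDerivAt (fun x : ℝ => x * c) c σ := by
      simpa using (hasDerivAt_id σ).mul_const c
    have h2 := (Real.hasDerivAt_sinh (σ * c)).comp σ h1
    have h3 := h2.div_const c
    simpa [mul_div_assoc, mul_div_cancel_right₀ _ hc] using h3
  rw [intervalIntegral.integral_eq_sub_of_hasDerivAt hderiv
    ((Real.continuous_cosh.comp (continuous_id.mul continuous_const)).intervalIntegrable _ _)]
  simp

/-- Pointwise Jacobian comparison. -/
lemma jacCompare {a τ : ℝ} (ha : 0 ≤ a) (hτ : 0 ≤ τ) :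
    τ^2 * ∫ σ in (0:ℝ)..τ, Real.cosh (σ * a) ≤
      (∫ σ in (0:ℝ)..τ, Real.cosh (σ * (a / Real.sqrt 3)))^3 := by
  have s3 : (0:ℝ) < Real.sqrt 3 := Real.sqrt_pos.2 (by norm_num)
  have s3sq : Real.sqrt 3 ^ 2 = 3 := Real.sq_sqrt (by norm_num)
  rcases eq_or_lt_of_le ha with h0 | hpos
  · simp only [← h0, mul_zero, zero_div, Real.cosh_zero]
    rw [intervalIntegral.integral_const]
    simp only [sub_zero, smul_eq_mul, mul_one]
    exact le_of_eq (by ring)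
  · have hane : a ≠ 0 := hpos.ne'
    rw [intCosh a hane τ, intCosh _ (by positivity : a / Real.sqrt 3 ≠ 0) τ]
    set y := τ * (a / Real.sqrt 3) with hy
    have hyn : 0 ≤ y := by positivity
    have hya : τ * a = Real.sqrt 3 * y := by
      rw [hy]; field_simp
    have key := keyScalar hyn
    have hy2 : y^2 = τ^2*a^2/3 := by
      rw [hy, mul_pow, div_pow, s3sq]; ring
    have hτ2 : τ^2*a^2 = 3*y^2 := by rw [hy2]; ring
    rw [hya, div_pow]
    have hs33 : Real.sqrt 3 ^ 3 = 3 * Real.sqrt 3 := by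
      rw [pow_succ, s3sq]
    have ha3 : (a / Real.sqrt 3)^3 = a^3 / (3*Real.sqrt 3) := by
      rw [div_pow, hs33]
    rw [ha3, div_div_eq_mul_div, mul_div_assoc']
    rw [div_le_div_iff₀ hpos (by positivity)]
    have hsh3 : 0 ≤ Real.sinh (Real.sqrt 3 * y) := Real.sinh_nonneg_iff.2 (by positivity)
    have hprod : τ^2*a^2*(a*Real.sinh (Real.sqrt 3*y)) = 3*y^2*(a*Real.sinh (Real.sqrt 3*y)) := by
      rw [hτ2]
    nlinarith [hprod, mul_le_mul_of_nonneg_left key (by positivity : (0:ℝ) ≤ 3*a)]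

/-- Fubini for interval integrals of continuous functions. -/
lemma swapII {G : ℝ → ℝ → ℝ} (hG : Continuous (Function.uncurry G)) {a b c d : ℝ}
    (hab : a ≤ b) (hcd : c ≤ d) :
    ∫ x in a..b, (∫ y in c..d, G x y) = ∫ y in c..d, (∫ x in a..b, G x y) := by
  simp_rw [intervalIntegral.integral_of_le hab, intervalIntegral.integral_of_le hcd]
  apply MeasureTheory.integral_integral_swap
  rw [Measure.prod_restrict]
  apply (hG.continuousOn.integrableOn_compact (isCompact_Icc.prod isCompact_Icc)).mono_set
  exact Set.prod_mono Set.Ioc_subset_Icc_self Set.Ioc_subset_Icc_self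

/-- **Bound hierarchy for ℍ²×ℝ².**
With `vol(t) = 2π²(2t sinh t − 2 cosh t − t² + 2)` (the exact volume of a geodesic ball
of radius `t` in ℍ²×ℝ²),
`eBG(t) = 4π² ∫₀^{π/2} cos θ sin θ (∫₀ᵗ ((√3/cos θ) sinh(τ cos θ/√3))³ dτ) dθ`
(the enhanced Bishop-Gromov bound), and
`BG(t) = 24π²(2 + cosh(t/√3)) sinh⁴(t/(2√3))` (the Bishop-Gromov bound), one has
`vol(t) ≤ eBG(t) ≤ BG(t)` for every `t ≥ 0`. -/
theorem bound_hierarchy_H2xR2 (t : ℝ) (ht : 0 ≤ t) :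
    2 * π ^ 2 * (2 * t * Real.sinh t - 2 * Real.cosh t - t ^ 2 + 2) ≤
      4 * π ^ 2 * ∫ θ in (0:ℝ)..(π / 2), Real.cos θ * Real.sin θ *
        (∫ τ in (0:ℝ)..t,
          ((Real.sqrt 3 / Real.cos θ) * Real.sinh (τ * Real.cos θ / Real.sqrt 3)) ^ 3) ∧
    (4 * π ^ 2 * ∫ θ in (0:ℝ)..(π / 2), Real.cos θ * Real.sin θ *
        (∫ τ in (0:ℝ)..t,
          ((Real.sqrt 3 / Real.cos θ) * Real.sinh (τ * Real.cos θ / Real.sqrt 3)) ^ 3)) ≤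
      24 * π ^ 2 * (2 + Real.cosh (t / Real.sqrt 3)) *
        Real.sinh (t / (2 * Real.sqrt 3)) ^ 4 := by
  have s3 : (0:ℝ) < Real.sqrt 3 := Real.sqrt_pos.2 (by norm_num)
  have s3ne : Real.sqrt 3 ≠ 0 := s3.ne'
  have s3sq : Real.sqrt 3 ^ 2 = 3 := Real.sq_sqrt (by norm_num)
  have hπ2 : (0:ℝ) ≤ π/2 := by positivity
  -- Rewrite the eBG integrand in primitive form
  have hrw : (∫ θ in (0:ℝ)..(π / 2), Real.cos θ * Real.sin θ *
        (∫ τ in (0:ℝ)..t,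
          ((Real.sqrt 3 / Real.cos θ) * Real.sinh (τ * Real.cos θ / Real.sqrt 3)) ^ 3))
      = ∫ θ in (0:ℝ)..(π / 2), Real.cos θ * Real.sin θ *
        (∫ τ in (0:ℝ)..t,
          (∫ σ in (0:ℝ)..τ, Real.cosh (σ * (Real.cos θ / Real.sqrt 3))) ^ 3) := by
    apply intervalIntegral.integral_congr
    intro θ _
    dsimp only
    by_cases hc : Real.cos θ = 0
    · simp [hc]
    · congr 1
      apply intervalIntegral.integral_congr
      intro τ _
      dsimp only
      congr 1
      rw [intCosh _ (div_ne_zero hc s3ne) τ]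
      rw [show τ * (Real.cos θ / Real.sqrt 3) = τ * Real.cos θ / Real.sqrt 3 by ring]
      field_simp
  rw [hrw]
  -- continuity facts
  have contP1 : Continuous (fun p : ℝ×ℝ => ∫ σ in (0:ℝ)..p.2, Real.cosh (σ * Real.cos p.1)) := by
    apply intervalIntegral.continuous_parametric_primitive_of_continuous
      (f := fun θ σ => Real.cosh (σ * Real.cos θ))
    fun_prop
  have contP2 : Continuous
      (fun p : ℝ×ℝ => ∫ σ in (0:ℝ)..p.2, Real.cosh (σ * (Real.cos p.1 / Real.sqrt 3))) := by
    apply intervalIntegral.continuous_parametric_primitive_of_continuous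
      (f := fun θ σ => Real.cosh (σ * (Real.cos θ / Real.sqrt 3)))
    fun_prop
  have contP3 : Continuous
      (fun p : ℝ×ℝ => ∫ σ in (0:ℝ)..p.2, Real.cosh (σ * (1 / Real.sqrt 3))) := by
    apply intervalIntegral.continuous_parametric_primitive_of_continuous
      (f := fun _θ σ => Real.cosh (σ * (1 / Real.sqrt 3)))
    fun_prop
  have contF : Continuous (fun θ => Real.cos θ * Real.sin θ *
      (∫ τ in (0:ℝ)..t, τ^2 * (∫ σ in (0:ℝ)..τ, Real.cosh (σ * Real.cos θ)))) := by
    apply Continuous.mul (by fun_prop)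
    apply intervalIntegral.continuous_parametric_intervalIntegral_of_continuous'
      (f := fun θ τ => τ^2 * (∫ σ in (0:ℝ)..τ, Real.cosh (σ * Real.cos θ)))
    apply Continuous.mul (by fun_prop)
    exact contP1.comp (continuous_fst.prodMk continuous_snd)
  have contG : Continuous (fun θ => Real.cos θ * Real.sin θ *
      (∫ τ in (0:ℝ)..t,
        (∫ σ in (0:ℝ)..τ, Real.cosh (σ * (Real.cos θ / Real.sqrt 3)))^3)) := by
    apply Continuous.mul (by fun_prop)
    apply intervalIntegral.continuous_parametric_intervalIntegral_of_continuous'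
      (f := fun θ τ => (∫ σ in (0:ℝ)..τ, Real.cosh (σ * (Real.cos θ / Real.sqrt 3)))^3)
    exact (contP2.comp (continuous_fst.prodMk continuous_snd)).pow 3
  -- exact volume computation
  have hVolInner : ∀ θ : ℝ, Real.cos θ * Real.sin θ *
      (∫ τ in (0:ℝ)..t, τ^2 * (∫ σ in (0:ℝ)..τ, Real.cosh (σ * Real.cos θ)))
      = ∫ τ in (0:ℝ)..t, Real.sin θ * (τ^2 * Real.sinh (τ * Real.cos θ)) := by
    intro θ
    rw [← intervalIntegral.integral_const_mul]
    apply intervalIntegral.integral_congr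
    intro τ _
    dsimp only
    by_cases hc : Real.cos θ = 0
    · simp [hc]
    · rw [intCosh _ hc τ]
      field_simp
  have hVolθ : ∀ τ:ℝ, (∫ θ in (0:ℝ)..(π/2), Real.sin θ * (τ^2 * Real.sinh (τ * Real.cos θ)))
      = τ * Real.cosh τ - τ := by
    intro τ
    have hd : ∀ θ ∈ Set.uIcc (0:ℝ) (π/2),
        HasDerivAt (fun x => -(τ * Real.cosh (τ * Real.cos x)))
          (Real.sin θ * (τ^2 * Real.sinh (τ * Real.cos θ))) θ := by
      intro θ _
      have h1 : HasDerivAt (fun x : ℝ => τ * Real.cos x) (τ * (-Real.sin θ)) θ :=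
        (Real.hasDerivAt_cos θ).const_mul τ
      have h2 := (Real.hasDerivAt_cosh (τ * Real.cos θ)).comp θ h1
      have h3 := (h2.const_mul τ).neg
      refine h3.congr_deriv ?_
      ring
    rw [intervalIntegral.integral_eq_sub_of_hasDerivAt hd
      (Continuous.intervalIntegrable (by fun_prop) _ _)]
    simp
    ring
  have hVolEq : (∫ θ in (0:ℝ)..(π/2), Real.cos θ * Real.sin θ *
      (∫ τ in (0:ℝ)..t, τ^2 * (∫ σ in (0:ℝ)..τ, Real.cosh (σ * Real.cos θ))))
      = t * Real.sinh t - Real.cosh t + 1 - t^2/2 := by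
    rw [intervalIntegral.integral_congr (fun θ _ => hVolInner θ)]
    rw [swapII (by fun_prop) hπ2 ht]
    rw [intervalIntegral.integral_congr (fun τ _ => hVolθ τ)]
    have hd : ∀ τ ∈ Set.uIcc (0:ℝ) t,
        HasDerivAt (fun x => x * Real.sinh x - Real.cosh x - x^2/2)
          (τ * Real.cosh τ - τ) τ := by
      intro τ _
      have h0 : HasDerivAt (fun x : ℝ => x * Real.sinh x) (Real.sinh τ + τ * Real.cosh τ) τ := by
        exact ((hasDerivAt_id τ).mul (Real.hasDerivAt_sinh τ)).congr_deriv (by simp [add_comm])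
      have h1 := h0.sub (Real.hasDerivAt_cosh τ)
      have h2 := h1.sub ((hasDerivAt_pow 2 τ).div_const 2)
      refine h2.congr_deriv ?_
      ring
    rw [intervalIntegral.integral_eq_sub_of_hasDerivAt hd
      (Continuous.intervalIntegrable (by fun_prop) _ _)]
    simp
    ring
  constructor
  · -- vol ≤ eBG
    rw [show (2:ℝ) * π ^ 2 * (2 * t * Real.sinh t - 2 * Real.cosh t - t ^ 2 + 2)
        = 4 * π^2 * (t * Real.sinh t - Real.cosh t + 1 - t^2/2) by ring, ← hVolEq]
    apply mul_le_mul_of_nonneg_left _ (by positivity)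
    apply intervalIntegral.integral_mono_on hπ2
      (contF.intervalIntegrable _ _) (contG.intervalIntegrable _ _)
    intro θ hθ
    have hcos : 0 ≤ Real.cos θ := Real.cos_nonneg_of_mem_Icc ⟨by linarith [hθ.1], hθ.2⟩
    have hsin : 0 ≤ Real.sin θ := Real.sin_nonneg_of_nonneg_of_le_pi hθ.1
      (by linarith [hθ.2, hπ2])
    apply mul_le_mul_of_nonneg_left _ (mul_nonneg hcos hsin)
    have int1 : IntervalIntegrable
        (fun τ : ℝ => τ^2 * (∫ σ in (0:ℝ)..τ, Real.cosh (σ * Real.cos θ))) volume 0 t := by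
      apply Continuous.intervalIntegrable
      apply Continuous.mul (by fun_prop)
      exact intervalIntegral.continuous_primitive
        (fun a b => Continuous.intervalIntegrable (by fun_prop) a b) 0
    have int2 : IntervalIntegrable
        (fun τ : ℝ => (∫ σ in (0:ℝ)..τ, Real.cosh (σ * (Real.cos θ / Real.sqrt 3)))^3)
        volume 0 t := by
      apply Continuous.intervalIntegrable
      exact (intervalIntegral.continuous_primitive
        (fun a b => Continuous.intervalIntegrable (by fun_prop) a b) 0).pow 3
    exact intervalIntegral.integral_mono_on ht int1 int2 (fun τ hτ => jacCompare hcos hτ.1)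
  · -- eBG ≤ BG
    have hKC : (∫ τ in (0:ℝ)..t, (∫ σ in (0:ℝ)..τ, Real.cosh (σ*(1/Real.sqrt 3)))^3)
        = 3*Real.cosh (t/Real.sqrt 3)^3 - 9*Real.cosh (t/Real.sqrt 3) + 6 := by
      have hinv : (1/Real.sqrt 3 : ℝ) ≠ 0 := by positivity
      have h1 : ∀ τ:ℝ, (∫ σ in (0:ℝ)..τ, Real.cosh (σ*(1/Real.sqrt 3)))^3
          = (Real.sqrt 3 * Real.sinh (τ*(1/Real.sqrt 3)))^3 := by
        intro τ
        rw [intCosh _ hinv τ, one_div, div_inv_eq_mul]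
        ring
      rw [intervalIntegral.integral_congr (fun τ _ => h1 τ)]
      have hd : ∀ τ ∈ Set.uIcc (0:ℝ) t,
          HasDerivAt (fun x => 3*Real.cosh (x*(1/Real.sqrt 3))^3
              - 9*Real.cosh (x*(1/Real.sqrt 3)))
            ((Real.sqrt 3 * Real.sinh (τ*(1/Real.sqrt 3)))^3) τ := by
        intro τ _
        have hl : HasDerivAt (fun x : ℝ => x*(1/Real.sqrt 3)) (1/Real.sqrt 3) τ := by
          simpa using (hasDerivAt_id τ).mul_const (1/Real.sqrt 3)
        have h2 := (Real.hasDerivAt_cosh (τ*(1/Real.sqrt 3))).comp τ hl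
        have h3 := h2.pow 3
        have h4 := (h3.const_mul 3).sub (h2.const_mul 9)
        refine h4.congr_deriv ?_
        symm
        simp only [Function.comp_apply]
        rw [Real.cosh_sq]
        have h4' : Real.sqrt 3 ^ 4 = 9 := by
          rw [show (4:ℕ) = 2*2 from rfl, pow_mul, s3sq]; norm_num
        field_simp
        ring_nf
        rw [h4']
        ring
      rw [intervalIntegral.integral_eq_sub_of_hasDerivAt hd
        (Continuous.intervalIntegrable (by fun_prop) _ _)]
      rw [show t*(1/Real.sqrt 3) = t/Real.sqrt 3 by ring]
      norm_num
    have halfInt : (∫ θ in (0:ℝ)..(π/2), Real.cos θ * Real.sin θ) = 1/2 := by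
      have hd : ∀ θ ∈ Set.uIcc (0:ℝ) (π/2),
          HasDerivAt (fun x => Real.sin x ^2 / 2) (Real.cos θ * Real.sin θ) θ := by
        intro θ _
        have h := ((Real.hasDerivAt_sin θ).pow 2).div_const 2
        refine h.congr_deriv ?_
        ring
      rw [intervalIntegral.integral_eq_sub_of_hasDerivAt hd
        ((Real.continuous_cos.mul Real.continuous_sin).intervalIntegrable _ _)]
      simp
    have step1 : (∫ θ in (0:ℝ)..(π / 2), Real.cos θ * Real.sin θ *
          (∫ τ in (0:ℝ)..t, (∫ σ in (0:ℝ)..τ, Real.cosh (σ * (Real.cos θ / Real.sqrt 3))) ^ 3))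
        ≤ ∫ θ in (0:ℝ)..(π / 2), Real.cos θ * Real.sin θ * (3*Real.cosh (t/Real.sqrt 3)^3 - 9*Real.cosh (t/Real.sqrt 3) + 6) := by
      apply intervalIntegral.integral_mono_on hπ2 (contG.intervalIntegrable _ _)
        (Continuous.intervalIntegrable (by fun_prop) _ _)
      intro θ hθ
      have hcos : 0 ≤ Real.cos θ := Real.cos_nonneg_of_mem_Icc ⟨by linarith [hθ.1], hθ.2⟩
      have hsin : 0 ≤ Real.sin θ := Real.sin_nonneg_of_nonneg_of_le_pi hθ.1
        (by linarith [hθ.2, hπ2])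
      apply mul_le_mul_of_nonneg_left _ (mul_nonneg hcos hsin)
      rw [← hKC]
      have int2 : IntervalIntegrable
          (fun τ : ℝ => (∫ σ in (0:ℝ)..τ, Real.cosh (σ * (Real.cos θ / Real.sqrt 3)))^3)
          volume 0 t := by
        apply Continuous.intervalIntegrable
        exact (intervalIntegral.continuous_primitive
          (fun a b => Continuous.intervalIntegrable (by fun_prop) a b) 0).pow 3
      have int3 : IntervalIntegrable
          (fun τ : ℝ => (∫ σ in (0:ℝ)..τ, Real.cosh (σ * (1 / Real.sqrt 3)))^3)
          volume 0 t := by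
        apply Continuous.intervalIntegrable
        exact (intervalIntegral.continuous_primitive
          (fun a b => Continuous.intervalIntegrable (by fun_prop) a b) 0).pow 3
      apply intervalIntegral.integral_mono_on ht int2 int3
      intro τ hτ
      apply pow_le_pow_left₀
      · apply intervalIntegral.integral_nonneg hτ.1
        intro σ _
        exact (Real.cosh_pos _).le
      · have int4 : IntervalIntegrable
            (fun σ : ℝ => Real.cosh (σ * (Real.cos θ / Real.sqrt 3))) volume 0 τ :=
          Continuous.intervalIntegrable (by fun_prop) _ _
        have int5 : IntervalIntegrable
            (fun σ : ℝ => Real.cosh (σ * (1 / Real.sqrt 3))) volume 0 τ :=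
          Continuous.intervalIntegrable (by fun_prop) _ _
        apply intervalIntegral.integral_mono_on hτ.1 int4 int5
        intro σ _
        rw [Real.cosh_le_cosh, abs_mul, abs_mul]
        have h2 : |Real.cos θ / Real.sqrt 3| ≤ |1 / Real.sqrt 3| := by
          rw [abs_div, abs_div, abs_one, abs_of_pos s3]
          exact (div_le_div_iff_of_pos_right s3).2 (Real.abs_cos_le_one θ)
        exact mul_le_mul_of_nonneg_left h2 (abs_nonneg σ)
    have step2 : (∫ θ in (0:ℝ)..(π / 2), Real.cos θ * Real.sin θ * (3*Real.cosh (t/Real.sqrt 3)^3 - 9*Real.cosh (t/Real.sqrt 3) + 6)) = 1/2 * (3*Real.cosh (t/Real.sqrt 3)^3 - 9*Real.cosh (t/Real.sqrt 3) + 6) := by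
      rw [intervalIntegral.integral_mul_const, halfInt]
    have step3 : 4 * π^2 * (1/2 * (3*Real.cosh (t/Real.sqrt 3)^3 - 9*Real.cosh (t/Real.sqrt 3) + 6)) = 24 * π ^ 2 * (2 + Real.cosh (t / Real.sqrt 3)) *
        Real.sinh (t / (2 * Real.sqrt 3)) ^ 4 := by
      have hc : Real.cosh (t/Real.sqrt 3) = 2*Real.sinh (t/(2*Real.sqrt 3))^2 + 1 := by
        rw [show t/Real.sqrt 3 = 2*(t/(2*Real.sqrt 3)) by ring, Real.cosh_two_mul,
          Real.cosh_sq]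
        ring
      rw [hc]
      ring
    refine le_trans (mul_le_mul_of_nonneg_left step1 (by positivity)) ?_
    rw [step2, step3]
end

section
/- Counterexample to a scalar-curvature Bishop-Gromov bound: For every real t with 0 < t ≤ 7, (π²/6)·(−8t³ − 3·sinh(2t) + 6t·cosh(2t)) > (25/81)·π²·(36t + √30·(sinh(2·√(6/5)·t) − 8·sinh(√(6/5)·t))). -/
open Real Finset

/-- Partial sum of the sinh power series. -/
noncomputable def auxS (n : ℕ) (x : ℝ) : ℝ :=
  ∑ k ∈ Finset.range n, x ^ (2 * k + 1) / (Nat.factorial (2 * k + 1) : ℝ)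

/-- Partial sum of the cosh power series. -/
noncomputable def auxC (n : ℕ) (x : ℝ) : ℝ :=
  ∑ k ∈ Finset.range n, x ^ (2 * k) / (Nat.factorial (2 * k) : ℝ)

lemma auxS_zero (n : ℕ) : auxS n 0 = 0 := by
  unfold auxS
  apply Finset.sum_eq_zero
  intro k _
  rw [zero_pow (by omega)]
  simp

lemma auxC_zero (n : ℕ) : auxC (n + 1) 0 = 1 := by
  unfold auxC
  rw [Finset.sum_range_succ']
  have h : ∀ k ∈ Finset.range n, (0:ℝ) ^ (2 * (k+1)) / (Nat.factorial (2 * (k+1)) : ℝ) = 0 := by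
    intro k _
    rw [zero_pow (by omega)]
    simp
  rw [Finset.sum_congr rfl h]
  simp

lemma hasDerivAt_auxS (n : ℕ) (x : ℝ) :
    HasDerivAt (fun y => auxS n y) (auxC n x) x := by
  unfold auxS auxC
  apply HasDerivAt.fun_sum
  intro k _
  have h := (hasDerivAt_pow (2 * k + 1) x).div_const ((Nat.factorial (2 * k + 1) : ℝ))
  refine h.congr_deriv (Eq.symm ?_)
  have hne : ((Nat.factorial (2 * k) : ℝ)) ≠ 0 := Nat.cast_ne_zero.mpr (Nat.factorial_ne_zero _)
  have hne' : ((Nat.factorial (2 * k + 1) : ℝ)) ≠ 0 := Nat.cast_ne_zero.mpr (Nat.factorial_ne_zero _)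
  rw [Nat.factorial_succ]
  have : 2 * k + 1 - 1 = 2 * k := by omega
  rw [this]
  push_cast
  field_simp

lemma hasDerivAt_auxC (n : ℕ) (x : ℝ) :
    HasDerivAt (fun y => auxC (n + 1) y) (auxS n x) x := by
  unfold auxS auxC
  have h : ∀ k ∈ Finset.range (n + 1), HasDerivAt
      (fun y : ℝ => y ^ (2 * k) / (Nat.factorial (2 * k) : ℝ))
      ((2 * k : ℕ) * x ^ (2 * k - 1) / (Nat.factorial (2 * k) : ℝ)) x := by
    intro k _
    exact (hasDerivAt_pow (2 * k) x).div_const _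
  have H := HasDerivAt.fun_sum h
  refine H.congr_deriv (Eq.symm ?_)
  rw [Finset.sum_range_succ']
  have h0 : ((2 * 0 : ℕ) : ℝ) * x ^ (2 * 0 - 1) / (Nat.factorial (2 * 0) : ℝ) = 0 := by norm_num
  rw [h0, add_zero]
  apply Finset.sum_congr rfl
  intro k _
  have e1 : 2 * (k + 1) = (2 * k + 1) + 1 := by omega
  have e2 : 2 * (k + 1) - 1 = 2 * k + 1 := by omega
  rw [e1, Nat.add_sub_cancel]
  simp only [Nat.factorial_succ]
  have hne : ((Nat.factorial (2 * k) : ℝ)) ≠ 0 := Nat.cast_ne_zero.mpr (Nat.factorial_ne_zero _)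
  push_cast
  field_simp

/-- Comparison of two functions on `[0, X]` via derivatives. -/
lemma aux_mono {f g f' g' : ℝ → ℝ} {X : ℝ}
    (hf : ∀ x, HasDerivAt f (f' x) x) (hg : ∀ x, HasDerivAt g (g' x) x)
    (h0 : f 0 ≤ g 0) (hle : ∀ x, 0 ≤ x → x ≤ X → f' x ≤ g' x) :
    ∀ x, 0 ≤ x → x ≤ X → f x ≤ g x := by
  intro x hx hxX
  have hdiff : ∀ y : ℝ, HasDerivAt (fun z => g z - f z) (g' y - f' y) y :=
    fun y => (hg y).sub (hf y)
  have hmono : MonotoneOn (fun z => g z - f z) (Set.Icc 0 X) := by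
    apply monotoneOn_of_deriv_nonneg (convex_Icc 0 X)
    · exact (Continuous.sub
        (continuous_iff_continuousAt.mpr fun y => (hg y).continuousAt)
        (continuous_iff_continuousAt.mpr fun y => (hf y).continuousAt)).continuousOn
    · intro y _
      exact (hdiff y).differentiableAt.differentiableWithinAt
    · intro y hy
      rw [interior_Icc] at hy
      rw [(hdiff y).deriv]
      have := hle y hy.1.le hy.2.le
      linarith
  have h1 := hmono ⟨le_refl 0, hx.trans hxX⟩ ⟨hx, hxX⟩ hx
  simp only at h1
  linarith

/-- Lower bounds: partial sums underestimate `cosh` and `sinh` on `[0, ∞)`. -/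
lemma aux_lower : ∀ n : ℕ,
    (∀ x : ℝ, 0 ≤ x → auxC n x ≤ Real.cosh x) ∧
    (∀ x : ℝ, 0 ≤ x → auxS n x ≤ Real.sinh x) := by
  intro n
  induction n with
  | zero =>
    constructor
    · intro x _
      simp only [auxC, Finset.range_zero, Finset.sum_empty]
      exact (Real.cosh_pos (x := x)).le
    · intro x hx
      simp only [auxS, Finset.range_zero, Finset.sum_empty]
      exact Real.sinh_nonneg_iff.mpr hx
  | succ n ih =>
    have hC : ∀ x : ℝ, 0 ≤ x → auxC (n + 1) x ≤ Real.cosh x := by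
      intro x hx
      refine aux_mono (X := x) (hasDerivAt_auxC n) (fun y => Real.hasDerivAt_cosh y) ?_
        (fun y hy _ => ih.2 y hy) x hx le_rfl
      rw [auxC_zero, Real.cosh_zero]
    refine ⟨hC, ?_⟩
    intro x hx
    refine aux_mono (X := x) (hasDerivAt_auxS (n + 1)) (fun y => Real.hasDerivAt_sinh y) ?_
      (fun y hy hyx => hC y hy) x hx le_rfl
    rw [auxS_zero, Real.sinh_zero]

lemma aux_rem_deriv (M : ℝ) (m : ℕ) (y : ℝ) :
    HasDerivAt (fun z : ℝ => M * z ^ (m + 1) / (Nat.factorial (m + 1) : ℝ))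
      (M * y ^ m / (Nat.factorial m : ℝ)) y := by
  have h := ((hasDerivAt_pow (m + 1) y).const_mul M).div_const ((Nat.factorial (m + 1) : ℝ))
  refine h.congr_deriv (Eq.symm ?_)
  rw [Nat.factorial_succ]
  have hne : ((Nat.factorial m : ℝ)) ≠ 0 := Nat.cast_ne_zero.mpr (Nat.factorial_ne_zero _)
  have : m + 1 - 1 = m := by omega
  rw [this]
  push_cast
  field_simp

/-- Upper bounds: partial sums plus Lagrange-type remainder overestimate `cosh`,`sinh` on `[0,X]`. -/
lemma aux_upper {X M : ℝ} (hX : 0 ≤ X) (hM : Real.cosh X ≤ M) : ∀ n : ℕ,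
    (∀ x : ℝ, 0 ≤ x → x ≤ X →
      Real.cosh x ≤ auxC n x + M * x ^ (2 * n) / (Nat.factorial (2 * n) : ℝ)) ∧
    (∀ x : ℝ, 0 ≤ x → x ≤ X →
      Real.sinh x ≤ auxS n x + M * x ^ (2 * n + 1) / (Nat.factorial (2 * n + 1) : ℝ)) := by
  have step : ∀ n : ℕ,
      (∀ x : ℝ, 0 ≤ x → x ≤ X →
        Real.cosh x ≤ auxC n x + M * x ^ (2 * n) / (Nat.factorial (2 * n) : ℝ)) →
      (∀ x : ℝ, 0 ≤ x → x ≤ X →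
        Real.sinh x ≤ auxS n x + M * x ^ (2 * n + 1) / (Nat.factorial (2 * n + 1) : ℝ)) := by
    intro n hC
    apply aux_mono (X := X) (fun y => Real.hasDerivAt_sinh y)
      (fun y => (hasDerivAt_auxS n y).fun_add (aux_rem_deriv M (2 * n) y))
    · rw [auxS_zero, Real.sinh_zero, zero_pow (by omega : 2 * n + 1 ≠ 0)]
      simp
    · intro y hy hyX
      exact hC y hy hyX
  intro n
  induction n with
  | zero =>
    have hC : ∀ x : ℝ, 0 ≤ x → x ≤ X →
        Real.cosh x ≤ auxC 0 x + M * x ^ (2 * 0) / (Nat.factorial (2 * 0) : ℝ) := by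
      intro x hx hxX
      simp only [auxC, Finset.range_zero, Finset.sum_empty, Nat.mul_zero, pow_zero,
        Nat.factorial_zero, Nat.cast_one, mul_one, div_one, zero_add]
      calc Real.cosh x ≤ Real.cosh X := by
            rw [Real.cosh_le_cosh, abs_of_nonneg hx, abs_of_nonneg hX]
            exact hxX
        _ ≤ M := hM
    exact ⟨hC, step 0 hC⟩
  | succ n ih =>
    have hC : ∀ x : ℝ, 0 ≤ x → x ≤ X →
        Real.cosh x ≤ auxC (n + 1) x + M * x ^ (2 * (n + 1)) / (Nat.factorial (2 * (n + 1)) : ℝ) := by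
      have e : 2 * (n + 1) = (2 * n + 1) + 1 := by omega
      rw [e]
      apply aux_mono (X := X) (fun y => Real.hasDerivAt_cosh y)
        (fun y => (hasDerivAt_auxC n y).fun_add (aux_rem_deriv M (2 * n + 1) y))
      · rw [auxC_zero, Real.cosh_zero, zero_pow (by omega : (2 * n + 1) + 1 ≠ 0)]
        simp
      · intro y hy hyX
        exact ih.2 y hy hyX
    exact ⟨hC, step (n + 1) hC⟩

set_option maxHeartbeats 4000000 in
lemma polyIneq (t : ℝ) (ht : 0 < t) (ht' : t ≤ 7) :
    25 / 81 * (36 * t +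
      (((∑ k ∈ Finset.range 23, 12 * (24/5:ℝ)^k * t^(2*k+1) / (Nat.factorial (2*k+1) : ℝ)) +
        9000000 * (6 * 2^47 * (6/5:ℝ)^23 * t^47) / (Nat.factorial 47 : ℝ)) -
       8 * (∑ k ∈ Finset.range 23, 6 * (6/5:ℝ)^k * t^(2*k+1) / (Nat.factorial (2*k+1) : ℝ))))
    < (-8*t^3 - 3*(auxS 23 (2*t) + 9000000*(2*t)^47/(Nat.factorial 47 : ℝ))
        + 6*t*auxC 23 (2*t))/6 := by
  have key : ∀ m n : ℕ, t^(m+n) ≤ 7^m * t^n := by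
    intro m n
    rw [pow_add]
    exact mul_le_mul_of_nonneg_right (pow_le_pow_left₀ ht.le ht' m) (pow_nonneg ht.le n)
  have e9 : t^19 ≤ 7^6 * t^13 := by have := key 6 13; norm_num at this ⊢; linarith
  have e10 : t^21 ≤ 7^10 * t^11 := by have := key 10 11; norm_num at this ⊢; linarith
  have e11 : t^23 ≤ 7^10 * t^13 := by have := key 10 13; norm_num at this ⊢; linarith
  have e12 : t^25 ≤ 7^10 * t^15 := by have := key 10 15; norm_num at this ⊢; linarith
  have e13 : t^27 ≤ 7^12 * t^15 := by have := key 12 15; norm_num at this ⊢; linarith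
  have e14 : t^29 ≤ 7^14 * t^15 := by have := key 14 15; norm_num at this ⊢; linarith
  have e15 : t^31 ≤ 7^16 * t^15 := by have := key 16 15; norm_num at this ⊢; linarith
  have e16 : t^33 ≤ 7^18 * t^15 := by have := key 18 15; norm_num at this ⊢; linarith
  have e17 : t^35 ≤ 7^20 * t^15 := by have := key 20 15; norm_num at this ⊢; linarith
  have e18 : t^37 ≤ 7^22 * t^15 := by have := key 22 15; norm_num at this ⊢; linarith
  have e19 : t^39 ≤ 7^24 * t^15 := by have := key 24 15; norm_num at this ⊢; linarith
  have e20 : t^41 ≤ 7^26 * t^15 := by have := key 26 15; norm_num at this ⊢; linarith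
  have e21 : t^43 ≤ 7^28 * t^15 := by have := key 28 15; norm_num at this ⊢; linarith
  have e22 : t^45 ≤ 7^30 * t^15 := by have := key 30 15; norm_num at this ⊢; linarith
  have er : t^47 ≤ 7^32 * t^15 := by have := key 32 15; norm_num at this ⊢; linarith
  have h9 : 0 < t^9 := pow_pos ht 9
  have h11 : 0 ≤ t^11 := pow_nonneg ht.le 11
  have h13 : 0 ≤ t^13 := pow_nonneg ht.le 13
  have h15 : 0 ≤ t^15 := pow_nonneg ht.le 15
  have h17 : 0 ≤ t^17 := pow_nonneg ht.le 17
  simp only [auxS, auxC, Finset.sum_range_succ, Finset.range_zero, Finset.sum_empty]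
  norm_num [Nat.factorial]
  linarith [e9, e10, e11, e12, e13, e14, e15, e16, e17, e18, e19, e20, e21, e22, er,
    h9, h11, h13, h15, h17]


/-- **Counterexample to a scalar-curvature Bishop-Gromov bound.**
For `0 < t ≤ 7`, the volume of a geodesic ball of radius `t` in ℍ³×ℝ² strictly exceeds
the volume of a geodesic ball of radius `t` in the 5-dimensional hyperbolic space of the
same scalar curvature `−6`. -/
theorem H3xR2_counterexample (t : ℝ) (ht : 0 < t) (ht' : t ≤ 7) :
    (25 / 81) * π ^ 2 * (36 * t + Real.sqrt 30 *
        (Real.sinh (2 * Real.sqrt (6 / 5) * t) - 8 * Real.sinh (Real.sqrt (6 / 5) * t))) <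
      π ^ 2 / 6 * (-8 * t ^ 3 - 3 * Real.sinh (2 * t) + 6 * t * Real.cosh (2 * t)) := by
  set u := Real.sqrt (6 / 5) with hu_def
  have hu0 : 0 ≤ u := Real.sqrt_nonneg _
  have hu2 : u ^ 2 = 6 / 5 := Real.sq_sqrt (by norm_num)
  have h30 : Real.sqrt 30 * u = 6 := by
    rw [hu_def, ← Real.sqrt_mul (by norm_num : (0:ℝ) ≤ 30)]
    rw [show (30:ℝ) * (6 / 5) = 36 by norm_num]
    rw [show (36:ℝ) = 6 ^ 2 by norm_num, Real.sqrt_sq (by norm_num : (0:ℝ) ≤ 6)]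
  have hu11 : u ≤ 11 / 10 := by nlinarith [hu2, hu0]
  have h30nn : 0 ≤ Real.sqrt 30 := Real.sqrt_nonneg _
  have hM : Real.cosh 16 ≤ 9000000 := by
    have h0 : Real.exp 16 = Real.exp 1 ^ (16 : ℕ) := by
      rw [← Real.exp_nat_mul]; norm_num
    have h1 : Real.exp 16 ≤ 2.7182818286 ^ (16 : ℕ) := by
      rw [h0]
      exact pow_le_pow_left₀ (Real.exp_pos 1).le Real.exp_one_lt_d9.le 16
    have h2 : Real.exp (-16) ≤ 1 := Real.exp_le_one_iff.mpr (by norm_num)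
    rw [Real.cosh_eq]
    norm_num at h1 ⊢
    linarith
  have hlow := aux_lower 23
  have hupp := aux_upper (X := 16) (M := 9000000) (by norm_num) hM 23
  have hut0 : 0 ≤ u * t := mul_nonneg hu0 ht.le
  have hub1 : u * t ≤ 16 := by nlinarith
  have hub2 : 2 * (u * t) ≤ 16 := by nlinarith
  -- power conversion lemmas
  have hu_pow : ∀ m : ℕ, Real.sqrt 30 * (u * t) ^ (2 * m + 1)
      = 6 * (6 / 5 : ℝ) ^ m * t ^ (2 * m + 1) := by
    intro m
    have h1 : (u * t) ^ (2 * m + 1) = (u ^ 2) ^ m * u * t ^ (2 * m + 1) := by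
      rw [mul_pow]
      congr 1
      rw [pow_succ, pow_mul]
    rw [h1, hu2]
    calc Real.sqrt 30 * ((6 / 5 : ℝ) ^ m * u * t ^ (2 * m + 1))
        = (Real.sqrt 30 * u) * ((6 / 5 : ℝ) ^ m * t ^ (2 * m + 1)) := by ring
      _ = 6 * ((6 / 5 : ℝ) ^ m * t ^ (2 * m + 1)) := by rw [h30]
      _ = 6 * (6 / 5 : ℝ) ^ m * t ^ (2 * m + 1) := by ring
  have hu_pow2 : ∀ m : ℕ, Real.sqrt 30 * (2 * (u * t)) ^ (2 * m + 1)
      = 12 * (24 / 5 : ℝ) ^ m * t ^ (2 * m + 1) := by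
    intro m
    have h1 : (2 * (u * t)) ^ (2 * m + 1) = 2 ^ (2 * m + 1) * (u * t) ^ (2 * m + 1) :=
      mul_pow 2 (u * t) (2 * m + 1)
    have h2 : (2 : ℝ) ^ (2 * m + 1) = 2 * 4 ^ m := by
      rw [pow_succ, pow_mul]; norm_num [mul_comm]
    have h3 : (4 : ℝ) ^ m * (6 / 5 : ℝ) ^ m = (24 / 5 : ℝ) ^ m := by
      rw [← mul_pow]; norm_num
    calc Real.sqrt 30 * (2 * (u * t)) ^ (2 * m + 1)
        = (2 : ℝ) ^ (2 * m + 1) * (Real.sqrt 30 * (u * t) ^ (2 * m + 1)) := by rw [h1]; ring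
      _ = (2 * 4 ^ m) * (6 * (6 / 5 : ℝ) ^ m * t ^ (2 * m + 1)) := by rw [h2, hu_pow m]
      _ = 12 * ((4 : ℝ) ^ m * (6 / 5 : ℝ) ^ m) * t ^ (2 * m + 1) := by ring
      _ = 12 * (24 / 5 : ℝ) ^ m * t ^ (2 * m + 1) := by rw [h3]
  -- the four analytic bounds
  have B4 : auxC 23 (2 * t) ≤ Real.cosh (2 * t) := hlow.1 (2 * t) (by linarith)
  have B3 : Real.sinh (2 * t) ≤ auxS 23 (2 * t)
      + 9000000 * (2 * t) ^ 47 / (Nat.factorial 47 : ℝ) := by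
    have h := hupp.2 (2 * t) (by linarith) (by linarith)
    norm_num at h
    exact h
  have B2 : (∑ k ∈ Finset.range 23,
        6 * (6 / 5 : ℝ) ^ k * t ^ (2 * k + 1) / (Nat.factorial (2 * k + 1) : ℝ))
      ≤ Real.sqrt 30 * Real.sinh (u * t) := by
    have h := hlow.2 (u * t) hut0
    have e : Real.sqrt 30 * auxS 23 (u * t) = ∑ k ∈ Finset.range 23,
        6 * (6 / 5 : ℝ) ^ k * t ^ (2 * k + 1) / (Nat.factorial (2 * k + 1) : ℝ) := by
      rw [auxS, Finset.mul_sum]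
      exact Finset.sum_congr rfl fun k _ => by rw [← mul_div_assoc, hu_pow k]
    rw [← e]
    exact mul_le_mul_of_nonneg_left h h30nn
  have B1 : Real.sqrt 30 * Real.sinh (2 * (u * t)) ≤ (∑ k ∈ Finset.range 23,
        12 * (24 / 5 : ℝ) ^ k * t ^ (2 * k + 1) / (Nat.factorial (2 * k + 1) : ℝ))
      + 9000000 * (6 * 2 ^ 47 * (6 / 5 : ℝ) ^ 23 * t ^ 47) / (Nat.factorial 47 : ℝ) := by
    have h := hupp.2 (2 * (u * t)) (by linarith) hub2
    have h' := mul_le_mul_of_nonneg_left h h30nn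
    refine h'.trans_eq ?_
    rw [mul_add]
    congr 1
    · rw [auxS, Finset.mul_sum]
      exact Finset.sum_congr rfl fun k _ => by rw [← mul_div_assoc, hu_pow2 k]
    · have h23 := hu_pow2 23
      norm_num at h23 ⊢
      rw [← h23]; ring
  have P := polyIneq t ht ht'
  have B4' : t * auxC 23 (2 * t) ≤ t * Real.cosh (2 * t) :=
    mul_le_mul_of_nonneg_left B4 ht.le
  have key : 25 / 81 * (36 * t + Real.sqrt 30 *
      (Real.sinh (2 * (u * t)) - 8 * Real.sinh (u * t)))
      < (-8 * t ^ 3 - 3 * Real.sinh (2 * t) + 6 * t * Real.cosh (2 * t)) / 6 := by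
    linarith [P, B1, B2, B3, B4']
  rw [mul_assoc 2 u t]
  have hpi : (0 : ℝ) < π ^ 2 := by positivity
  have := mul_lt_mul_of_pos_left key hpi
  nlinarith [this]
end
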